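/- arXiv:2107.14103 — 8 statements merged into one kernel-verified Lean document; each statement's English description precedes it below -/
import Mathlib

section
/- Let n ≥ 3 and let V be a nonnegative locally integrable function on ℝⁿ satisfying the scale-invariant Kato condition (V1) and the doubling condition (V2), and assume V is nondegenerate (∫_{ℝⁿ} V > 0). Then for every x ∈ ℝⁿ the Fefferman–Phong–Shen maximal function satisfies 0 < m(x,V) < ∞; that is, for every x there exists a radius r ∈ (0,∞) with r^{2-n} ∫_{B(x,r)} V ≤ 1, and the supremum of all such radii is finite. -/
open MeasureTheory Metric

noncomputable section

/-- (V1) Scale-invariant Kato condition with constants `C₀, δ`. -/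
def KatoV1 (n : ℕ) (C₀ δ : ℝ) (V : EuclideanSpace ℝ (Fin n) → ℝ) : Prop :=
  ∀ x : EuclideanSpace ℝ (Fin n), ∀ r R : ℝ, 0 < r → r < R →
    ∫ y in ball x r, V y ≤ C₀ * (r / R) ^ ((n : ℝ) - 2 + δ) * ∫ y in ball x R, V y

/-- (V2) Doubling on balls with high mass, with constant `C₁`. -/
def DoublingV2 (n : ℕ) (C₁ : ℝ) (V : EuclideanSpace ℝ (Fin n) → ℝ) : Prop :=
  ∀ x : EuclideanSpace ℝ (Fin n), ∀ r : ℝ, 0 < r →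
    ∫ y in ball x (2 * r), V y ≤ C₁ * ((∫ y in ball x r, V y) + r ^ ((n : ℝ) - 2))

/-- For a Shen potential `V` (nonnegative, locally integrable, nondegenerate, satisfying
(V1) and (V2)) in dimension `n ≥ 3`, the Fefferman–Phong–Shen maximal function satisfies
`0 < m(x,V) < ∞` at every point: there is a radius `r ∈ (0,∞)` with
`r^{2-n} ∫_{B(x,r)} V ≤ 1`, and the set of such radii is bounded above. -/
theorem fps_maximal_function_positive_finite
    (n : ℕ) (hn : 3 ≤ n) (C₀ δ C₁ : ℝ) (hC₀ : 0 < C₀) (hδ : 0 < δ) (hC₁ : 0 < C₁)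
    (V : EuclideanSpace ℝ (Fin n) → ℝ) (hV0 : ∀ x, 0 ≤ V x)
    (hVloc : LocallyIntegrable V volume)
    (hV1 : KatoV1 n C₀ δ V) (hV2 : DoublingV2 n C₁ V)
    (hVpos : 0 < ∫⁻ y, ENNReal.ofReal (V y)) :
    ∀ x : EuclideanSpace ℝ (Fin n),
      (∃ r : ℝ, 0 < r ∧ r ^ (2 - (n : ℝ)) * ∫ y in ball x r, V y ≤ 1) ∧
      BddAbove {r : ℝ | 0 < r ∧ r ^ (2 - (n : ℝ)) * ∫ y in ball x r, V y ≤ 1} := by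
  intro x
  have hn3 : (3 : ℝ) ≤ (n : ℝ) := by exact_mod_cast hn
  set e : ℝ := (n : ℝ) - 2 + δ with he
  have hepos : 0 < e := by rw [he]; linarith
  constructor
  · -- existence of small radius
    set I₁ : ℝ := ∫ y in ball x 1, V y with hI₁
    have hI₁0 : 0 ≤ I₁ := setIntegral_nonneg measurableSet_ball fun y _ => hV0 y
    have hD : 0 < C₀ * I₁ + 1 := by positivity
    set r : ℝ := min (1/2) ((1 / (C₀ * I₁ + 1)) ^ (1/δ)) with hr
    have hrpos : 0 < r := by
      apply lt_min (by norm_num)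
      exact Real.rpow_pos_of_pos (by positivity) _
    have hr1 : r < 1 := lt_of_le_of_lt (min_le_left _ _) (by norm_num)
    refine ⟨r, hrpos, ?_⟩
    have h1 := hV1 x r 1 hrpos hr1
    rw [div_one] at h1
    have hpow : 0 < r ^ (2 - (n:ℝ)) := Real.rpow_pos_of_pos hrpos _
    calc r ^ (2 - (n:ℝ)) * ∫ y in ball x r, V y
        ≤ r ^ (2 - (n:ℝ)) * (C₀ * r ^ e * I₁) := by
          exact mul_le_mul_of_nonneg_left h1 hpow.le
      _ = C₀ * r ^ δ * I₁ := by
          rw [show r ^ (2 - (n:ℝ)) * (C₀ * r ^ e * I₁) = C₀ * (r ^ (2-(n:ℝ)) * r ^ e) * I₁ by ring,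
            ← Real.rpow_add hrpos]
          have hexp : 2 - (n:ℝ) + e = δ := by rw [he]; ring
          rw [hexp]
      _ ≤ C₀ * (1 / (C₀ * I₁ + 1)) * I₁ := by
          apply mul_le_mul_of_nonneg_right _ hI₁0
          apply mul_le_mul_of_nonneg_left _ hC₀.le
          calc r ^ δ ≤ ((1 / (C₀ * I₁ + 1)) ^ (1/δ)) ^ δ :=
                Real.rpow_le_rpow hrpos.le (min_le_right _ _) hδ.le
            _ = 1 / (C₀ * I₁ + 1) := by
                rw [← Real.rpow_mul (by positivity), one_div_mul_cancel hδ.ne', Real.rpow_one]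
      _ ≤ 1 := by
          rw [mul_one_div, div_mul_eq_mul_div, div_le_one hD]
          linarith
  · -- bounded above
    have hmeas : AEMeasurable (fun y => ENNReal.ofReal (V y)) volume :=
      ENNReal.measurable_ofReal.comp_aemeasurable hVloc.aestronglyMeasurable.aemeasurable
    -- find a ball around x with positive integral
    have hex : ∃ k : ℕ, 0 < ∫⁻ y in ball x (k : ℝ), ENNReal.ofReal (V y) := by
      by_contra h
      push_neg at h
      have hz : ∀ k : ℕ, ∀ᵐ y ∂(volume.restrict (ball x (k : ℝ))),
          ENNReal.ofReal (V y) = 0 := by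
        intro k
        have h0 : ∫⁻ y in ball x (k : ℝ), ENNReal.ofReal (V y) = 0 :=
          le_antisymm (h k) zero_le
        exact (lintegral_eq_zero_iff' hmeas.restrict).1 h0
      have hz' : ∀ᵐ y : EuclideanSpace ℝ (Fin n), ∀ k : ℕ,
          y ∈ ball x (k : ℝ) → ENNReal.ofReal (V y) = 0 := by
        rw [ae_all_iff]
        exact fun k => (ae_restrict_iff' measurableSet_ball).1 (hz k)
      have hz'' : ∀ᵐ y : EuclideanSpace ℝ (Fin n), ENNReal.ofReal (V y) = 0 := by
        filter_upwards [hz'] with y hy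
        obtain ⟨k, hk⟩ := exists_nat_gt (dist y x)
        exact hy k (mem_ball.2 hk)
      have : (∫⁻ y, ENNReal.ofReal (V y)) = 0 := by
        rw [lintegral_congr_ae hz'', lintegral_zero]
      exact hVpos.ne' this
    obtain ⟨k, hk⟩ := hex
    have hkpos : 0 < (k : ℝ) := by
      by_contra hkn
      push_neg at hkn
      rw [Metric.ball_eq_empty.2 hkn] at hk
      simp at hk
    set I₀ : ℝ := ∫ y in ball x (k : ℝ), V y with hI₀def
    have hint : IntegrableOn V (ball x (k : ℝ)) volume :=
      (hVloc.integrableOn_isCompact (isCompact_closedBall x (k : ℝ))).mono_set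
        ball_subset_closedBall
    have hI₀pos : 0 < I₀ := by
      rw [hI₀def, integral_eq_lintegral_of_nonneg_ae
        (Filter.Eventually.of_forall fun y => hV0 y) hint.aestronglyMeasurable]
      apply ENNReal.toReal_pos hk.ne'
      have hfin := hint.2
      rw [HasFiniteIntegral] at hfin
      refine ne_of_lt (lt_of_le_of_lt (lintegral_mono fun y => ?_) hfin)
      exact Real.ofReal_le_enorm _
    -- the bound
    refine ⟨max (k : ℝ) ((C₀ * (k:ℝ) ^ e / I₀) ^ (1/δ)), ?_⟩
    rintro R ⟨hRpos, hRle⟩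
    rcases le_or_gt R (k : ℝ) with hRk | hRk
    · exact le_max_of_le_left hRk
    · apply le_max_of_le_right
      have h1 := hV1 x (k : ℝ) R hkpos hRk
      have hIRk : (∫ y in ball x R, V y) ≤ R ^ ((n:ℝ) - 2) := by
        have h2 : R ^ ((n:ℝ)-2) * (R ^ (2 - (n:ℝ)) * ∫ y in ball x R, V y)
            ≤ R ^ ((n:ℝ)-2) * 1 :=
          mul_le_mul_of_nonneg_left hRle (Real.rpow_pos_of_pos hRpos _).le
        rwa [← mul_assoc, ← Real.rpow_add hRpos, show (n:ℝ)-2+(2-(n:ℝ)) = 0 by ring,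
          Real.rpow_zero, one_mul, mul_one] at h2
      have h3 : I₀ ≤ C₀ * ((k:ℝ)/R) ^ e * R ^ ((n:ℝ) - 2) := by
        refine h1.trans (mul_le_mul_of_nonneg_left hIRk ?_)
        positivity
      have h4 : R ^ δ * I₀ ≤ C₀ * (k:ℝ) ^ e := by
        have h5 : R ^ δ * I₀ ≤ R ^ δ * (C₀ * ((k:ℝ)/R) ^ e * R ^ ((n:ℝ) - 2)) :=
          mul_le_mul_of_nonneg_left h3 (Real.rpow_pos_of_pos hRpos _).le
        have h6 : R ^ δ * (C₀ * ((k:ℝ)/R) ^ e * R ^ ((n:ℝ) - 2)) = C₀ * (k:ℝ) ^ e := by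
          rw [Real.div_rpow (Nat.cast_nonneg k) hRpos.le]
          rw [show R ^ δ * (C₀ * ((k:ℝ) ^ e / R ^ e) * R ^ ((n:ℝ) - 2))
              = C₀ * (k:ℝ) ^ e * (R ^ δ * R ^ ((n:ℝ)-2) / R ^ e) by ring]
          rw [← Real.rpow_add hRpos, show δ + ((n:ℝ)-2) = e by rw [he]; ring,
            div_self (Real.rpow_pos_of_pos hRpos e).ne', mul_one]
        linarith
      have h7 : R ^ δ ≤ C₀ * (k:ℝ) ^ e / I₀ := (le_div_iff₀ hI₀pos).2 h4
      calc R = (R ^ δ) ^ (1/δ) := by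
            rw [← Real.rpow_mul hRpos.le, mul_one_div, div_self hδ.ne', Real.rpow_one]
        _ ≤ (C₀ * (k:ℝ) ^ e / I₀) ^ (1/δ) :=
            Real.rpow_le_rpow (Real.rpow_nonneg hRpos.le _) h7 (by positivity)
end
end

section
/- Let n ≥ 3 and let V be a nonnegative locally integrable function on ℝⁿ satisfying (V1) and (V2) with ∫_{ℝⁿ} V > 0. Then there exists a constant C ≥ 1, depending only on n, C₀, C₁ and δ, such that for all x, y ∈ ℝⁿ with |x − y| ≤ 1/m(x,V), one has C⁻¹ m(x,V) ≤ m(y,V) ≤ C m(x,V) (the maximal function m(·,V) is slowly varying). -/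
open MeasureTheory Metric

noncomputable section

/-- The set of admissible radii in the definition of the Fefferman–Phong–Shen
maximal function `m(·,V)`. -/
def shenSet (n : ℕ) (V : EuclideanSpace ℝ (Fin n) → ℝ) (x : EuclideanSpace ℝ (Fin n)) :
    Set ℝ :=
  {r : ℝ | 0 < r ∧ r ^ (2 - (n : ℝ)) * ∫ y in ball x r, V y ≤ 1}

/-- The Fefferman–Phong–Shen maximal function: `1/m(x,V)` is the supremum of the
admissible radii. -/
def mShen (n : ℕ) (V : EuclideanSpace ℝ (Fin n) → ℝ) (x : EuclideanSpace ℝ (Fin n)) : ℝ :=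
  (sSup (shenSet n V x))⁻¹

namespace FPS

variable {n : ℕ} {V : EuclideanSpace ℝ (Fin n) → ℝ}

lemma intOn (hVloc : LocallyIntegrable V volume) (x : EuclideanSpace ℝ (Fin n)) (r : ℝ) :
    IntegrableOn V (ball x r) volume :=
  (hVloc.integrableOn_isCompact (isCompact_closedBall x r)).mono_set ball_subset_closedBall

lemma I_nonneg (hV0 : ∀ x, 0 ≤ V x) (x : EuclideanSpace ℝ (Fin n)) (r : ℝ) :
    0 ≤ ∫ y in ball x r, V y :=
  setIntegral_nonneg measurableSet_ball fun y _ => hV0 y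

lemma I_mono (hV0 : ∀ x, 0 ≤ V x) (hVloc : LocallyIntegrable V volume)
    {x x' : EuclideanSpace ℝ (Fin n)} {r R : ℝ} (h : ball x r ⊆ ball x' R) :
    ∫ y in ball x r, V y ≤ ∫ y in ball x' R, V y :=
  setIntegral_mono_set (intOn hVloc x' R)
    (Filter.Eventually.of_forall fun y => hV0 y) h.eventuallyLE

lemma ofReal_I (hV0 : ∀ x, 0 ≤ V x) (hVloc : LocallyIntegrable V volume)
    (x : EuclideanSpace ℝ (Fin n)) (r : ℝ) :
    ENNReal.ofReal (∫ y in ball x r, V y) = ∫⁻ y in ball x r, ENNReal.ofReal (V y) :=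
  ofReal_integral_eq_lintegral_ofReal (intOn hVloc x r)
    (Filter.Eventually.of_forall fun y => hV0 y)

/-- Continuity from below of the ball integrals. -/
lemma I_cont (hV0 : ∀ x, 0 ≤ V x) (hVloc : LocallyIntegrable V volume)
    (x : EuclideanSpace ℝ (Fin n)) {r B : ℝ} (hr : 0 < r) (hB : 0 ≤ B)
    (h : ∀ r', 0 < r' → r' < r → ∫ y in ball x r', V y ≤ B) :
    ∫ y in ball x r, V y ≤ B := by
  set ν : Measure (EuclideanSpace ℝ (Fin n)) :=
    volume.withDensity (fun y => ENNReal.ofReal (V y)) with hν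
  have hU : ball x r = ⋃ k : ℕ, ball x (r - r / (k + 2)) := by
    ext z
    simp only [Set.mem_iUnion, mem_ball]
    constructor
    · intro hz
      obtain ⟨k, hk⟩ := exists_nat_gt (r / (r - dist z x))
      refine ⟨k, ?_⟩
      have hrd : 0 < r - dist z x := by linarith
      have h1 : r / (k + 2) < r - dist z x := by
        rw [div_lt_iff₀ (by positivity)]
        have : r / (r - dist z x) < (k : ℝ) + 2 := by linarith
        calc r = (r / (r - dist z x)) * (r - dist z x) := by field_simp
          _ < ((k : ℝ) + 2) * (r - dist z x) := by
              exact mul_lt_mul_of_pos_right this hrd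
          _ = (r - dist z x) * ((k : ℝ) + 2) := by ring
      linarith
    · rintro ⟨k, hk⟩
      have : 0 < r / (k + 2) := by positivity
      linarith
  have hmono : Monotone (fun k : ℕ => ball x (r - r / (k + 2))) := by
    intro a b hab
    apply ball_subset_ball
    have : r / (b + 2) ≤ r / (a + 2) := by
      apply div_le_div_of_nonneg_left hr.le (by positivity)
      exact_mod_cast by omega
    linarith
  have key : ν (ball x r) ≤ ENNReal.ofReal B := by
    rw [hU, (hmono.directed_le).measure_iUnion]
    apply iSup_le
    intro k
    rcases le_or_gt (r - r / (k + 2)) 0 with hk | hk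
    · rw [ball_eq_empty.mpr hk]; simp
    · rw [hν, withDensity_apply _ measurableSet_ball,
        ← ofReal_I hV0 hVloc]
      apply ENNReal.ofReal_le_ofReal
      apply h _ hk
      have : 0 < r / (k + 2) := by positivity
      linarith
  rw [hν, withDensity_apply _ measurableSet_ball, ← ofReal_I hV0 hVloc] at key
  exact le_of_not_gt fun hc => absurd key (not_le.mpr (by
    exact ENNReal.ofReal_lt_ofReal_iff_of_nonneg hB |>.mpr hc))

lemma exists_pos_ball (hV0 : ∀ x, 0 ≤ V x) (hVloc : LocallyIntegrable V volume)
    (hpos : 0 < ∫⁻ y, ENNReal.ofReal (V y)) (x : EuclideanSpace ℝ (Fin n)) :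
    ∃ r₀ : ℝ, 0 < r₀ ∧ 0 < ∫ y in ball x r₀, V y := by
  have hU : (Set.univ : Set (EuclideanSpace ℝ (Fin n))) = ⋃ k : ℕ, ball x (k + 1) := by
    ext z
    simp only [Set.mem_univ, Set.mem_iUnion, mem_ball, true_iff]
    obtain ⟨k, hk⟩ := exists_nat_gt (dist z x)
    exact ⟨k, by linarith⟩
  set ν : Measure (EuclideanSpace ℝ (Fin n)) :=
    volume.withDensity (fun y => ENNReal.ofReal (V y)) with hν
  have hmono : Monotone (fun k : ℕ => ball x ((k : ℝ) + 1)) := by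
    intro a b hab
    apply ball_subset_ball
    have : (a : ℝ) ≤ b := by exact_mod_cast hab
    linarith
  have htot : ν Set.univ = ⨆ k : ℕ, ν (ball x ((k : ℝ) + 1)) := by
    rw [hU, (hmono.directed_le).measure_iUnion]
  have hν_univ : ν Set.univ = ∫⁻ y, ENNReal.ofReal (V y) := by
    rw [hν, withDensity_apply _ MeasurableSet.univ, Measure.restrict_univ]
  rw [hν_univ] at htot
  have : 0 < ⨆ k : ℕ, ν (ball x ((k : ℝ) + 1)) := htot ▸ hpos
  obtain ⟨k, hk⟩ := lt_iSup_iff.mp this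
  refine ⟨(k : ℝ) + 1, by positivity, ?_⟩
  have heq : ν (ball x ((k : ℝ) + 1)) = ENNReal.ofReal (∫ y in ball x ((k:ℝ)+1), V y) := by
    rw [hν, withDensity_apply _ measurableSet_ball, ← ofReal_I hV0 hVloc]
  rw [heq] at hk
  exact ENNReal.ofReal_pos.mp hk

lemma mem_shen_iff (x : EuclideanSpace ℝ (Fin n)) {r : ℝ} (hr : 0 < r) :
    r ∈ shenSet n V x ↔ ∫ y in ball x r, V y ≤ r ^ ((n : ℝ) - 2) := by
  have h2 : (2 - (n : ℝ)) = -((n : ℝ) - 2) := by ring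
  rw [shenSet, Set.mem_setOf_eq, h2, Real.rpow_neg hr.le,
    inv_mul_le_iff₀ (Real.rpow_pos_of_pos hr _), mul_one]
  exact and_iff_right hr

end FPS

namespace FPS2
open FPS
variable {n : ℕ} {V : EuclideanSpace ℝ (Fin n) → ℝ} {C₀ δ : ℝ}

lemma nu_ge_one {n : ℕ} (hn : 3 ≤ n) : (1:ℝ) ≤ (n:ℝ) - 2 := by
  have : (3:ℝ) ≤ (n:ℝ) := by exact_mod_cast hn
  linarith

lemma shen_nonempty (hV0 : ∀ x, 0 ≤ V x) (hVloc : LocallyIntegrable V volume)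
    (hV1 : KatoV1 n C₀ δ V) (hC₀ : 0 < C₀) (hδ : 0 < δ) (hn : 3 ≤ n)
    (x : EuclideanSpace ℝ (Fin n)) : (shenSet n V x).Nonempty := by
  set A := ∫ y in ball x 1, V y with hA
  have hA0 : 0 ≤ A := I_nonneg hV0 x 1
  set b : ℝ := ((C₀ * A + 1)⁻¹) ^ δ⁻¹ with hb
  have hbpos : 0 < b := Real.rpow_pos_of_pos (by positivity) _
  set r : ℝ := min (1/2) b with hrdef
  have hrpos : 0 < r := lt_min (by norm_num) hbpos
  have hr1 : r < 1 := lt_of_le_of_lt (min_le_left _ _) (by norm_num)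
  refine ⟨r, (mem_shen_iff x hrpos).mpr ?_⟩
  have h1 : ∫ y in ball x r, V y ≤ C₀ * (r / 1) ^ ((n:ℝ) - 2 + δ) * A :=
    hV1 x r 1 hrpos hr1
  rw [div_one] at h1
  have hsplit : r ^ ((n:ℝ) - 2 + δ) = r ^ ((n:ℝ) - 2) * r ^ δ :=
    Real.rpow_add hrpos _ _
  have hrδ : r ^ δ ≤ (C₀ * A + 1)⁻¹ := by
    calc r ^ δ ≤ b ^ δ :=
          Real.rpow_le_rpow hrpos.le (min_le_right _ _) hδ.le
      _ = (C₀ * A + 1)⁻¹ := Real.rpow_inv_rpow (by positivity) hδ.ne'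
  have hkey : C₀ * A * r ^ δ ≤ 1 := by
    have h2 : C₀ * A * r ^ δ ≤ C₀ * A * (C₀ * A + 1)⁻¹ :=
      mul_le_mul_of_nonneg_left hrδ (by positivity)
    have h3 : C₀ * A * (C₀ * A + 1)⁻¹ ≤ 1 := by
      rw [← div_eq_mul_inv, div_le_one (by positivity)]
      linarith
    linarith
  calc ∫ y in ball x r, V y ≤ C₀ * (r ^ ((n:ℝ) - 2) * r ^ δ) * A := by rw [← hsplit]; exact h1
    _ = r ^ ((n:ℝ) - 2) * (C₀ * A * r ^ δ) := by ring
    _ ≤ r ^ ((n:ℝ) - 2) * 1 :=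
        mul_le_mul_of_nonneg_left hkey (Real.rpow_nonneg hrpos.le _)
    _ = r ^ ((n:ℝ) - 2) := mul_one _

lemma shen_bddAbove (hV0 : ∀ x, 0 ≤ V x) (hVloc : LocallyIntegrable V volume)
    (hV1 : KatoV1 n C₀ δ V) (hC₀ : 0 < C₀) (hδ : 0 < δ) (hn : 3 ≤ n)
    (hpos : 0 < ∫⁻ y, ENNReal.ofReal (V y))
    (x : EuclideanSpace ℝ (Fin n)) : BddAbove (shenSet n V x) := by
  obtain ⟨r₀, hr₀, ha⟩ := exists_pos_ball hV0 hVloc hpos x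
  set a := ∫ y in ball x r₀, V y with haa
  set T : ℝ := max r₀ ((C₀ * r₀ ^ ((n:ℝ) - 2 + δ) / a) ^ δ⁻¹) with hT
  refine ⟨T, fun R hR => ?_⟩
  have hRpos : 0 < R := hR.1
  have hRν : ∫ y in ball x R, V y ≤ R ^ ((n:ℝ) - 2) := (mem_shen_iff x hRpos).mp hR
  rcases le_or_gt R r₀ with h | h
  · exact le_trans h (le_max_left _ _)
  · have h1 : a ≤ C₀ * (r₀ / R) ^ ((n:ℝ) - 2 + δ) * ∫ y in ball x R, V y :=
      hV1 x r₀ R hr₀ h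
    have h2 : a ≤ C₀ * (r₀ / R) ^ ((n:ℝ) - 2 + δ) * R ^ ((n:ℝ) - 2) := by
      refine le_trans h1 (mul_le_mul_of_nonneg_left hRν ?_)
      positivity
    have hRpos' : (0:ℝ) < R := hRpos
    have hdiv : (r₀ / R) ^ ((n:ℝ) - 2 + δ) =
        r₀ ^ ((n:ℝ) - 2 + δ) / R ^ ((n:ℝ) - 2 + δ) :=
      Real.div_rpow hr₀.le hRpos.le _
    have hRsplit : R ^ ((n:ℝ) - 2 + δ) = R ^ ((n:ℝ) - 2) * R ^ δ :=
      Real.rpow_add hRpos' _ _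
    have h3 : a ≤ C₀ * r₀ ^ ((n:ℝ) - 2 + δ) / R ^ δ := by
      rw [hdiv, hRsplit] at h2
      have hRν2 : (0:ℝ) < R ^ ((n:ℝ) - 2) := Real.rpow_pos_of_pos hRpos' _
      have hRδ : (0:ℝ) < R ^ δ := Real.rpow_pos_of_pos hRpos' _
      calc a ≤ C₀ * (r₀ ^ ((n:ℝ) - 2 + δ) / (R ^ ((n:ℝ) - 2) * R ^ δ)) * R ^ ((n:ℝ) - 2) := h2
        _ = C₀ * r₀ ^ ((n:ℝ) - 2 + δ) / R ^ δ := by field_simp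
    have h4 : R ^ δ ≤ C₀ * r₀ ^ ((n:ℝ) - 2 + δ) / a := by
      rw [le_div_iff₀ ha]
      rw [div_eq_mul_inv] at h3
      have hRδ : (0:ℝ) < R ^ δ := Real.rpow_pos_of_pos hRpos' _
      calc R ^ δ * a ≤ R ^ δ * (C₀ * r₀ ^ ((n:ℝ) - 2 + δ) * (R ^ δ)⁻¹) :=
            mul_le_mul_of_nonneg_left h3 hRδ.le
        _ = C₀ * r₀ ^ ((n:ℝ) - 2 + δ) := by field_simp
    calc R = (R ^ δ) ^ δ⁻¹ := (Real.rpow_rpow_inv hRpos'.le hδ.ne').symm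
      _ ≤ (C₀ * r₀ ^ ((n:ℝ) - 2 + δ) / a) ^ δ⁻¹ :=
          Real.rpow_le_rpow (Real.rpow_pos_of_pos hRpos' _).le h4 (by positivity)
      _ ≤ T := le_max_right _ _

end FPS2

namespace FPS3
open FPS FPS2
variable {n : ℕ} {V : EuclideanSpace ℝ (Fin n) → ℝ} {C₀ δ : ℝ}

lemma sSup_pos (hne : (shenSet n V x).Nonempty) (hbdd : BddAbove (shenSet n V x)) :
    0 < sSup (shenSet n V x) := by
  obtain ⟨r, hr⟩ := hne
  exact lt_of_lt_of_le hr.1 (le_csSup hbdd hr)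

lemma I_sSup_le (hV0 : ∀ x, 0 ≤ V x) (hVloc : LocallyIntegrable V volume) (hn : 3 ≤ n)
    {x : EuclideanSpace ℝ (Fin n)}
    (hne : (shenSet n V x).Nonempty) (hbdd : BddAbove (shenSet n V x)) :
    ∫ y in ball x (sSup (shenSet n V x)), V y ≤ (sSup (shenSet n V x)) ^ ((n:ℝ) - 2) := by
  set s := sSup (shenSet n V x) with hs
  have hspos : 0 < s := sSup_pos hne hbdd
  apply I_cont hV0 hVloc x hspos (Real.rpow_nonneg hspos.le _)
  intro r' hr' hr's
  obtain ⟨u, hu, hr'u⟩ := exists_lt_of_lt_csSup hne hr's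
  have hus : u ≤ s := le_csSup hbdd hu
  calc ∫ y in ball x r', V y ≤ ∫ y in ball x u, V y :=
        I_mono hV0 hVloc (ball_subset_ball hr'u.le)
    _ ≤ u ^ ((n:ℝ) - 2) := (mem_shen_iff x hu.1).mp hu
    _ ≤ s ^ ((n:ℝ) - 2) := Real.rpow_le_rpow hu.1.le hus (by
        have := nu_ge_one (n := n) hn; linarith)

lemma I_gt_of_gt_sSup {x : EuclideanSpace ℝ (Fin n)}
    (hbdd : BddAbove (shenSet n V x)) {r : ℝ} (hr : sSup (shenSet n V x) < r)
    (hrpos : 0 < r) :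
    r ^ ((n:ℝ) - 2) < ∫ y in ball x r, V y := by
  by_contra hc
  push_neg at hc
  have : r ∈ shenSet n V x := (mem_shen_iff x hrpos).mpr hc
  exact absurd (le_csSup hbdd this) (not_le.mpr hr)

end FPS3

set_option maxHeartbeats 1000000
open FPS FPS2 FPS3

/-- The Fefferman–Phong–Shen maximal function is slowly varying: there is `C ≥ 1`,
depending only on `n, C₀, C₁, δ`, with `C⁻¹ m(x,V) ≤ m(y,V) ≤ C m(x,V)` whenever
`|x - y| ≤ 1/m(x,V)`. -/
theorem fps_maximal_function_slowly_varying
    (n : ℕ) (hn : 3 ≤ n) (C₀ δ C₁ : ℝ) (hC₀ : 0 < C₀) (hδ : 0 < δ) (hC₁ : 0 < C₁) :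
    ∃ C : ℝ, 1 ≤ C ∧
      ∀ V : EuclideanSpace ℝ (Fin n) → ℝ, (∀ x, 0 ≤ V x) →
        LocallyIntegrable V volume → KatoV1 n C₀ δ V → DoublingV2 n C₁ V →
        (0 < ∫⁻ y, ENNReal.ofReal (V y)) →
        ∀ x y : EuclideanSpace ℝ (Fin n), dist x y ≤ (mShen n V x)⁻¹ →
          C⁻¹ * mShen n V x ≤ mShen n V y ∧ mShen n V y ≤ C * mShen n V x := by
  have hν1 : (1:ℝ) ≤ (n:ℝ) - 2 := nu_ge_one hn
  set K : ℝ := C₁ * (2*C₁ + 2 ^ ((n:ℝ) - 2)) with hK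
  have h2ν : (0:ℝ) < 2 ^ ((n:ℝ) - 2) := Real.rpow_pos_of_pos (by norm_num) _
  have hKpos : 0 < K := by rw [hK]; positivity
  set c : ℝ := min (1/2) (((C₀*K+1)⁻¹) ^ δ⁻¹) with hc
  have hcpos : 0 < c := lt_min (by norm_num) (Real.rpow_pos_of_pos (by positivity) _)
  have hchalf : c ≤ 1/2 := min_le_left _ _
  set C₂ : ℝ := max 4 ((C₀ * 4 ^ ((n:ℝ) - 2 + δ)) ^ δ⁻¹) with hC2
  have hC₂4 : (4:ℝ) ≤ C₂ := le_max_left _ _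
  have hC₂pos : (0:ℝ) < C₂ := by linarith
  set C : ℝ := max c⁻¹ C₂ with hCdef
  have hCpos : 0 < C := lt_of_lt_of_le (by positivity : (0:ℝ) < c⁻¹) (le_max_left _ _)
  have hC1' : 1 ≤ C := by
    have h2c : (2:ℝ) ≤ c⁻¹ := by
      rw [show (2:ℝ) = (1/2:ℝ)⁻¹ by norm_num]
      exact inv_anti₀ hcpos hchalf
    linarith [le_max_left c⁻¹ C₂]
  refine ⟨C, hC1', ?_⟩
  intro V hV0 hVloc hV1 hV2 hpos x y hxy
  have hne_x := shen_nonempty hV0 hVloc hV1 hC₀ hδ hn x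
  have hbdd_x := shen_bddAbove hV0 hVloc hV1 hC₀ hδ hn hpos x
  have hne_y := shen_nonempty hV0 hVloc hV1 hC₀ hδ hn y
  have hbdd_y := shen_bddAbove hV0 hVloc hV1 hC₀ hδ hn hpos y
  rw [mShen, inv_inv] at hxy
  unfold mShen
  set s := sSup (shenSet n V x) with hs
  set sy := sSup (shenSet n V y) with hsy
  have hspos : 0 < s := sSup_pos hne_x hbdd_x
  have hIs : ∫ z in ball x s, V z ≤ s ^ ((n:ℝ)-2) := I_sSup_le hV0 hVloc hn hne_x hbdd_x
  have hd : dist x y ≤ s := hxy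
  have hdyx : dist y x ≤ s := by rw [dist_comm]; exact hd
  -- bound on the mass of ball y (2s)
  have hIy2s : ∫ z in ball y (2*s), V z ≤ K * s ^ ((n:ℝ)-2) := by
    have hsub : ball y (2*s) ⊆ ball x (2*(2*s)) := ball_subset_ball' (by linarith)
    have h2 : ∫ z in ball y (2*s), V z ≤ ∫ z in ball x (2*(2*s)), V z := I_mono hV0 hVloc hsub
    have h3 := hV2 x (2*s) (by positivity)
    have h4 := hV2 x s hspos
    have h5 : ∫ z in ball x (2*s), V z ≤ 2 * C₁ * s ^ ((n:ℝ)-2) := by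
      have : C₁ * ((∫ z in ball x s, V z) + s ^ ((n:ℝ)-2)) ≤
          C₁ * (s ^ ((n:ℝ)-2) + s ^ ((n:ℝ)-2)) :=
        mul_le_mul_of_nonneg_left (by linarith) hC₁.le
      calc ∫ z in ball x (2*s), V z
          ≤ C₁ * ((∫ z in ball x s, V z) + s ^ ((n:ℝ)-2)) := h4
        _ ≤ C₁ * (s ^ ((n:ℝ)-2) + s ^ ((n:ℝ)-2)) := this
        _ = 2 * C₁ * s ^ ((n:ℝ)-2) := by ring
    have h2s : (2*s) ^ ((n:ℝ)-2) = 2 ^ ((n:ℝ)-2) * s ^ ((n:ℝ)-2) :=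
      Real.mul_rpow (by norm_num) hspos.le
    calc ∫ z in ball y (2*s), V z
        ≤ C₁ * ((∫ z in ball x (2*s), V z) + (2*s) ^ ((n:ℝ)-2)) := le_trans h2 h3
      _ ≤ C₁ * (2*C₁*s ^ ((n:ℝ)-2) + 2 ^ ((n:ℝ)-2) * s ^ ((n:ℝ)-2)) := by
          rw [h2s]; exact mul_le_mul_of_nonneg_left (by linarith) hC₁.le
      _ = K * s ^ ((n:ℝ)-2) := by rw [hK]; ring
  -- c * s is admissible at y
  have hcs_mem : c * s ∈ shenSet n V y := by
    rw [mem_shen_iff y (by positivity)]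
    have hlt : c*s < 2*s := by nlinarith
    have h1 := hV1 y (c*s) (2*s) (by positivity) hlt
    have hratio : (c*s)/(2*s) = c/2 := by
      rw [mul_comm c s, mul_comm 2 s, mul_div_mul_left c 2 hspos.ne']
    have hcd : c ^ δ ≤ (C₀*K+1)⁻¹ := by
      calc c ^ δ ≤ (((C₀*K+1)⁻¹) ^ δ⁻¹) ^ δ :=
            Real.rpow_le_rpow hcpos.le (min_le_right _ _) hδ.le
        _ = (C₀*K+1)⁻¹ := Real.rpow_inv_rpow (by positivity) hδ.ne'
    have hsplit : (c/2) ^ ((n:ℝ)-2+δ) = (c/2) ^ ((n:ℝ)-2) * (c/2) ^ δ :=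
      Real.rpow_add (by positivity) _ _
    have hmono1 : (c/2) ^ ((n:ℝ)-2) ≤ c ^ ((n:ℝ)-2) :=
      Real.rpow_le_rpow (by positivity) (by linarith) (by linarith)
    have hmono2 : (c/2) ^ δ ≤ c ^ δ :=
      Real.rpow_le_rpow (by positivity) (by linarith) hδ.le
    have hcν : (0:ℝ) < c ^ ((n:ℝ)-2) := Real.rpow_pos_of_pos hcpos _
    have hcoef : C₀ * ((c/2) ^ ((n:ℝ)-2+δ)) * K ≤ c ^ ((n:ℝ)-2) := by
      have hm : (c/2) ^ ((n:ℝ)-2) * (c/2) ^ δ ≤ c ^ ((n:ℝ)-2) * (C₀*K+1)⁻¹ :=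
        mul_le_mul hmono1 (le_trans hmono2 hcd)
          (Real.rpow_nonneg (by positivity) _) hcν.le
      have h8 : C₀*K*(C₀*K+1)⁻¹ ≤ 1 := by
        rw [← div_eq_mul_inv, div_le_one (by positivity)]; linarith
      calc C₀ * ((c/2) ^ ((n:ℝ)-2+δ)) * K
          ≤ C₀ * (c ^ ((n:ℝ)-2) * (C₀*K+1)⁻¹) * K := by
            rw [hsplit]
            exact mul_le_mul_of_nonneg_right
              (mul_le_mul_of_nonneg_left hm hC₀.le) hKpos.le
        _ = c ^ ((n:ℝ)-2) * (C₀*K*(C₀*K+1)⁻¹) := by ring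
        _ ≤ c ^ ((n:ℝ)-2) * 1 := mul_le_mul_of_nonneg_left h8 hcν.le
        _ = c ^ ((n:ℝ)-2) := mul_one _
    have hIycs : ∫ z in ball y (c*s), V z ≤ C₀ * (c/2) ^ ((n:ℝ)-2+δ) * (K * s ^ ((n:ℝ)-2)) := by
      rw [← hratio]
      exact le_trans h1 (mul_le_mul_of_nonneg_left hIy2s (by positivity))
    have hcsν : (c*s) ^ ((n:ℝ)-2) = c ^ ((n:ℝ)-2) * s ^ ((n:ℝ)-2) :=
      Real.mul_rpow hcpos.le hspos.le
    calc ∫ z in ball y (c*s), V z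
        ≤ C₀ * (c/2) ^ ((n:ℝ)-2+δ) * (K * s ^ ((n:ℝ)-2)) := hIycs
      _ = (C₀ * ((c/2) ^ ((n:ℝ)-2+δ)) * K) * s ^ ((n:ℝ)-2) := by ring
      _ ≤ c ^ ((n:ℝ)-2) * s ^ ((n:ℝ)-2) :=
          mul_le_mul_of_nonneg_right hcoef (Real.rpow_nonneg hspos.le _)
      _ = (c*s) ^ ((n:ℝ)-2) := hcsν.symm
  have hcs_le : c * s ≤ sy := le_csSup hbdd_y hcs_mem
  have hsypos : 0 < sy := lt_of_lt_of_le (by positivity) hcs_le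
  -- upper bound for sy
  have hsy_le : sy ≤ C₂ * s := by
    apply csSup_le hne_y
    intro t ht
    have htpos : 0 < t := ht.1
    have htν : ∫ z in ball y t, V z ≤ t ^ ((n:ℝ)-2) := (mem_shen_iff y htpos).mp ht
    rcases le_or_gt t (4*s) with h4s | h4s
    · calc t ≤ 4*s := h4s
        _ ≤ C₂*s := mul_le_mul_of_nonneg_right hC₂4 hspos.le
    · have h2slt : 2*s < t/2 := by linarith
      have hlow : (2*s) ^ ((n:ℝ)-2) < ∫ z in ball x (2*s), V z :=
        I_gt_of_gt_sSup hbdd_x (by rw [← hs]; linarith) (by positivity)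
      have h1 := hV1 x (2*s) (t/2) (by positivity) h2slt
      have hsub : ball x (t/2) ⊆ ball y t := ball_subset_ball' (by linarith)
      have h7 : ∫ z in ball x (t/2), V z ≤ t ^ ((n:ℝ)-2) :=
        le_trans (I_mono hV0 hVloc hsub) htν
      have hrat : (2*s)/(t/2) = 4*s/t := by
        field_simp; ring
      have hchain : (2*s) ^ ((n:ℝ)-2) < C₀ * (4*s/t) ^ ((n:ℝ)-2+δ) * t ^ ((n:ℝ)-2) := by
        rw [← hrat]
        exact lt_of_lt_of_le hlow
          (le_trans h1 (mul_le_mul_of_nonneg_left h7 (by positivity)))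
      -- unpack the rpow algebra
      have hsν : (0:ℝ) < s ^ ((n:ℝ)-2) := Real.rpow_pos_of_pos hspos _
      have hsδ : (0:ℝ) < s ^ δ := Real.rpow_pos_of_pos hspos _
      have htν2 : (0:ℝ) < t ^ ((n:ℝ)-2) := Real.rpow_pos_of_pos htpos _
      have htδ : (0:ℝ) < t ^ δ := Real.rpow_pos_of_pos htpos _
      have e1 : (4*s/t) ^ ((n:ℝ)-2+δ) =
          (4 ^ ((n:ℝ)-2+δ) * (s ^ ((n:ℝ)-2) * s ^ δ)) / (t ^ ((n:ℝ)-2) * t ^ δ) := by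
        rw [Real.div_rpow (by positivity) htpos.le,
          Real.mul_rpow (by norm_num) hspos.le,
          Real.rpow_add hspos, Real.rpow_add htpos]
      have h2sν : (2*s) ^ ((n:ℝ)-2) = 2 ^ ((n:ℝ)-2) * s ^ ((n:ℝ)-2) :=
        Real.mul_rpow (by norm_num) hspos.le
      have h2ν1 : (1:ℝ) ≤ 2 ^ ((n:ℝ)-2) := by
        calc (1:ℝ) = 1 ^ ((n:ℝ)-2) := (Real.one_rpow _).symm
          _ ≤ 2 ^ ((n:ℝ)-2) := Real.rpow_le_rpow (by norm_num) (by norm_num) (by linarith)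
      have e2 : C₀ * ((4 ^ ((n:ℝ)-2+δ) * (s ^ ((n:ℝ)-2) * s ^ δ)) / (t ^ ((n:ℝ)-2) * t ^ δ))
          * t ^ ((n:ℝ)-2) = (C₀ * 4 ^ ((n:ℝ)-2+δ) * (s ^ ((n:ℝ)-2) * s ^ δ)) / t ^ δ := by
        field_simp
      have hchain2 : s ^ ((n:ℝ)-2) <
          (C₀ * 4 ^ ((n:ℝ)-2+δ) * (s ^ ((n:ℝ)-2) * s ^ δ)) / t ^ δ := by
        rw [e1, e2] at hchain
        rw [h2sν] at hchain
        have haux : s ^ ((n:ℝ)-2) ≤ 2 ^ ((n:ℝ)-2) * s ^ ((n:ℝ)-2) := by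
          nlinarith [hsν, h2ν1]
        linarith
      have htδlt : t ^ δ < C₀ * 4 ^ ((n:ℝ)-2+δ) * s ^ δ := by
        rw [lt_div_iff₀ htδ] at hchain2
        have e3 : C₀ * 4 ^ ((n:ℝ)-2+δ) * (s ^ ((n:ℝ)-2) * s ^ δ)
            = s ^ ((n:ℝ)-2) * (C₀ * 4 ^ ((n:ℝ)-2+δ) * s ^ δ) := by ring
        have e4 : s ^ ((n:ℝ)-2) * t ^ δ
            < s ^ ((n:ℝ)-2) * (C₀ * 4 ^ ((n:ℝ)-2+δ) * s ^ δ) := by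
          rw [← e3]; linarith
        exact (mul_lt_mul_iff_right₀ hsν).mp e4
      have hM : (0:ℝ) < C₀ * 4 ^ ((n:ℝ)-2+δ) := by positivity
      calc t = (t ^ δ) ^ δ⁻¹ := (Real.rpow_rpow_inv htpos.le hδ.ne').symm
        _ ≤ ((C₀ * 4 ^ ((n:ℝ)-2+δ)) * s ^ δ) ^ δ⁻¹ :=
            Real.rpow_le_rpow htδ.le (le_of_lt htδlt) (by positivity)
        _ = (C₀ * 4 ^ ((n:ℝ)-2+δ)) ^ δ⁻¹ * (s ^ δ) ^ δ⁻¹ :=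
            Real.mul_rpow hM.le hsδ.le
        _ = (C₀ * 4 ^ ((n:ℝ)-2+δ)) ^ δ⁻¹ * s := by
            rw [Real.rpow_rpow_inv hspos.le hδ.ne']
        _ ≤ C₂ * s := mul_le_mul_of_nonneg_right (le_max_right _ _) hspos.le
  constructor
  · have h10 : (C₂*s)⁻¹ ≤ sy⁻¹ := inv_anti₀ hsypos hsy_le
    have h11 : C⁻¹ ≤ C₂⁻¹ := inv_anti₀ hC₂pos (le_max_right _ _)
    calc C⁻¹ * s⁻¹ ≤ C₂⁻¹ * s⁻¹ :=
          mul_le_mul_of_nonneg_right h11 (inv_nonneg.mpr hspos.le)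
      _ = (C₂*s)⁻¹ := (mul_inv C₂ s).symm
      _ ≤ sy⁻¹ := h10
  · calc sy⁻¹ ≤ (c*s)⁻¹ := inv_anti₀ (by positivity) hcs_le
      _ = c⁻¹ * s⁻¹ := by rw [mul_inv]
      _ ≤ C * s⁻¹ :=
          mul_le_mul_of_nonneg_right (le_max_left _ _) (inv_nonneg.mpr hspos.le)
end
end

section
/- Let n ≥ 3 and let V be a nonnegative locally integrable function on ℝⁿ satisfying (V1) and (V2) with ∫_{ℝⁿ} V > 0. Then there exist k₀ > 0 and C ≥ 1, depending only on n, C₀, C₁ and δ, such that for all x, y ∈ ℝⁿ: m(y,V) ≥ C⁻¹ m(x,V) (1 + |x − y| m(x,V))^{−k₀/(k₀+1)} and m(y,V) ≤ C m(x,V) (1 + |x − y| m(x,V))^{k₀} (comparability of m at a long distance; in particular the Agmon weight m² is controlled by powers of the Euclidean distance). -/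
open MeasureTheory Metric

noncomputable section

variable {n : ℕ} {V : EuclideanSpace ℝ (Fin n) → ℝ}

lemma I_nonneg (h0 : ∀ z, 0 ≤ V z) (x : EuclideanSpace ℝ (Fin n)) (r : ℝ) :
    0 ≤ ∫ y in ball x r, V y :=
  setIntegral_nonneg measurableSet_ball (fun y _ => h0 y)

lemma shen_nonempty {C₀ δ : ℝ} (hC₀ : 0 < C₀) (hδ : 0 < δ)
    (h0 : ∀ z, 0 ≤ V z) (hV1 : KatoV1 n C₀ δ V) (x : EuclideanSpace ℝ (Fin n)) :
    (shenSet n V x).Nonempty := by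
  set M : ℝ := ∫ y in ball x 1, V y with hM
  have hM0 : 0 ≤ M := I_nonneg h0 x 1
  set r : ℝ := min (1/2) ((C₀ * M + 1) ^ (-(1/δ))) with hr
  have hCM : (0:ℝ) < C₀ * M + 1 := by positivity
  have hrpos : 0 < r := lt_min (by norm_num) (Real.rpow_pos_of_pos hCM _)
  have hr1 : r < 1 := lt_of_le_of_lt (min_le_left _ _) (by norm_num)
  refine ⟨r, hrpos, ?_⟩
  have h1 : ∫ y in ball x r, V y ≤ C₀ * r ^ ((n:ℝ) - 2 + δ) * M := by
    have := hV1 x r 1 hrpos hr1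
    simpa using this
  have h2 : r ^ (2 - (n:ℝ)) * ∫ y in ball x r, V y
      ≤ r ^ (2 - (n:ℝ)) * (C₀ * r ^ ((n:ℝ) - 2 + δ) * M) :=
    mul_le_mul_of_nonneg_left h1 (Real.rpow_nonneg hrpos.le _)
  have h3 : r ^ (2 - (n:ℝ)) * (C₀ * r ^ ((n:ℝ) - 2 + δ) * M)
      = C₀ * M * r ^ δ := by
    rw [show (2 - (n:ℝ)) = 2 - (n:ℝ) from rfl]
    have : r ^ (2 - (n:ℝ)) * r ^ ((n:ℝ) - 2 + δ) = r ^ δ := by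
      rw [← Real.rpow_add hrpos]; ring_nf
    calc r ^ (2 - (n:ℝ)) * (C₀ * r ^ ((n:ℝ) - 2 + δ) * M)
        = (r ^ (2 - (n:ℝ)) * r ^ ((n:ℝ) - 2 + δ)) * (C₀ * M) := by ring
      _ = C₀ * M * r ^ δ := by rw [this]; ring
  have h4 : r ^ δ ≤ (C₀ * M + 1)⁻¹ := by
    have hrle : r ≤ (C₀ * M + 1) ^ (-(1/δ)) := min_le_right _ _
    have := Real.rpow_le_rpow hrpos.le hrle hδ.le
    rwa [← Real.rpow_mul hCM.le, show (-(1/δ)) * δ = -1 by field_simp,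
      Real.rpow_neg_one] at this
  have h5 : C₀ * M * r ^ δ ≤ 1 := by
    calc C₀ * M * r ^ δ ≤ C₀ * M * (C₀ * M + 1)⁻¹ :=
          mul_le_mul_of_nonneg_left h4 (by positivity)
      _ ≤ 1 := by
          rw [mul_inv_le_iff₀ hCM]; linarith
  linarith [h2, h3 ▸ h2]

lemma exists_pos_I (hV : LocallyIntegrable V volume) (h0 : ∀ z, 0 ≤ V z)
    (hpos : 0 < ∫⁻ y, ENNReal.ofReal (V y)) (x : EuclideanSpace ℝ (Fin n)) :
    ∃ R : ℝ, 0 < R ∧ 0 < ∫ y in ball x R, V y := by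
  by_contra hcon
  push_neg at hcon
  have hzero : ∀ k : ℕ, ∀ᵐ y ∂(volume : Measure (EuclideanSpace ℝ (Fin n))),
      y ∈ ball x ((k:ℝ)+1) → V y = 0 := by
    intro k
    have hI : ∫ y in ball x ((k:ℝ)+1), V y = 0 :=
      le_antisymm (hcon _ (by positivity)) (I_nonneg h0 x _)
    have hint : Integrable V (volume.restrict (ball x ((k:ℝ)+1))) :=
      (hV.integrableOn_isCompact (isCompact_closedBall x _)).mono_set
        ball_subset_closedBall
    have := (integral_eq_zero_iff_of_nonneg h0 hint).1 hI
    exact (ae_restrict_iff' measurableSet_ball).1 this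
  have hall : ∀ᵐ y ∂(volume : Measure (EuclideanSpace ℝ (Fin n))), V y = 0 := by
    have := (MeasureTheory.ae_all_iff).2 hzero
    filter_upwards [this] with y hy
    obtain ⟨k, hk⟩ := exists_nat_gt (dist y x)
    exact hy k (by simpa [mem_ball] using hk.trans_le (by linarith))
  have : ∫⁻ y, ENNReal.ofReal (V y) = 0 := by
    rw [← lintegral_zero]
    apply lintegral_congr_ae
    filter_upwards [hall] with y hy
    simp [hy]
  exact absurd this hpos.ne'

lemma bddAbove_shen {C₀ δ : ℝ} (hC₀ : 0 < C₀) (hδ : 0 < δ)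
    (hV : LocallyIntegrable V volume) (h0 : ∀ z, 0 ≤ V z) (hV1 : KatoV1 n C₀ δ V)
    (hpos : 0 < ∫⁻ y, ENNReal.ofReal (V y)) (x : EuclideanSpace ℝ (Fin n)) :
    BddAbove (shenSet n V x) := by
  obtain ⟨R₀, hR₀, hI₀⟩ := exists_pos_I hV h0 hpos x
  set I₀ : ℝ := ∫ y in ball x R₀, V y with hI₀def
  set Q : ℝ := C₀ * R₀ ^ ((n:ℝ) - 2 + δ) / I₀ with hQ
  have hQpos : 0 < Q := by positivity
  refine ⟨max R₀ (Q ^ (1/δ)), ?_⟩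
  rintro ρ ⟨hρpos, hρadm⟩
  rcases le_or_gt ρ R₀ with h | h
  · exact h.trans (le_max_left _ _)
  · have hV1' := hV1 x R₀ ρ hR₀ h
    have hIρ : ∫ y in ball x ρ, V y ≤ ρ ^ ((n:ℝ) - 2) := by
      have h1 : ρ ^ ((n:ℝ) - 2) * (ρ ^ (2 - (n:ℝ)) * ∫ y in ball x ρ, V y)
          ≤ ρ ^ ((n:ℝ) - 2) * 1 :=
        mul_le_mul_of_nonneg_left hρadm (Real.rpow_nonneg hρpos.le _)
      have h2 : ρ ^ ((n:ℝ) - 2) * ρ ^ (2 - (n:ℝ)) = 1 := by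
        rw [← Real.rpow_add hρpos]; norm_num
      calc ∫ y in ball x ρ, V y
          = ρ ^ ((n:ℝ) - 2) * (ρ ^ (2 - (n:ℝ)) * ∫ y in ball x ρ, V y) := by
            rw [← mul_assoc, h2, one_mul]
        _ ≤ ρ ^ ((n:ℝ) - 2) * 1 := h1
        _ = ρ ^ ((n:ℝ) - 2) := mul_one _
    have hkey : I₀ ≤ C₀ * R₀ ^ ((n:ℝ) - 2 + δ) * ρ ^ (-δ) := by
      have h3 : C₀ * (R₀/ρ) ^ ((n:ℝ) - 2 + δ) * ∫ y in ball x ρ, V y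
          ≤ C₀ * (R₀/ρ) ^ ((n:ℝ) - 2 + δ) * ρ ^ ((n:ℝ) - 2) := by
        apply mul_le_mul_of_nonneg_left hIρ
        positivity
      have h4 : C₀ * (R₀/ρ) ^ ((n:ℝ) - 2 + δ) * ρ ^ ((n:ℝ) - 2)
          = C₀ * R₀ ^ ((n:ℝ) - 2 + δ) * ρ ^ (-δ) := by
        rw [Real.div_rpow hR₀.le hρpos.le]
        have hsplit : ρ ^ ((n:ℝ) - 2) = ρ ^ ((n:ℝ) - 2 + δ) * ρ ^ (-δ) := by
          rw [← Real.rpow_add hρpos]; ring_nf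
        have hne : ρ ^ ((n:ℝ) - 2 + δ) ≠ 0 := by positivity
        rw [hsplit]; field_simp
      exact (hV1'.trans h3).trans_eq h4
    have hρδ : ρ ^ δ ≤ Q := by
      rw [hQ, le_div_iff₀ hI₀]
      have h5 : I₀ * ρ ^ δ ≤ (C₀ * R₀ ^ ((n:ℝ) - 2 + δ) * ρ ^ (-δ)) * ρ ^ δ :=
        mul_le_mul_of_nonneg_right hkey (Real.rpow_nonneg hρpos.le _)
      have h6 : ρ ^ (-δ) * ρ ^ δ = 1 := by
        rw [← Real.rpow_add hρpos]; norm_num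
      calc ρ ^ δ * I₀ = I₀ * ρ ^ δ := mul_comm _ _
        _ ≤ C₀ * R₀ ^ ((n:ℝ) - 2 + δ) * (ρ ^ (-δ) * ρ ^ δ) := by
            rw [← mul_assoc]; exact h5
        _ = C₀ * R₀ ^ ((n:ℝ) - 2 + δ) := by rw [h6, mul_one]
    have : ρ ≤ Q ^ (1/δ) := by
      have := Real.rpow_le_rpow (Real.rpow_nonneg hρpos.le δ) hρδ
        (by positivity : (0:ℝ) ≤ 1/δ)
      rwa [← Real.rpow_mul hρpos.le, show δ * (1/δ) = 1 by field_simp,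
        Real.rpow_one] at this
    exact this.trans (le_max_right _ _)

lemma sSup_shen_pos {C₀ δ : ℝ} (hC₀ : 0 < C₀) (hδ : 0 < δ)
    (hV : LocallyIntegrable V volume) (h0 : ∀ z, 0 ≤ V z) (hV1 : KatoV1 n C₀ δ V)
    (hpos : 0 < ∫⁻ y, ENNReal.ofReal (V y)) (x : EuclideanSpace ℝ (Fin n)) :
    0 < sSup (shenSet n V x) := by
  obtain ⟨r, hr⟩ := shen_nonempty hC₀ hδ h0 hV1 x
  exact lt_of_lt_of_le hr.1 (le_csSup (bddAbove_shen hC₀ hδ hV h0 hV1 hpos x) hr)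

/-- The doubling constant. -/
def Kc (n : ℕ) (C₁ : ℝ) : ℝ := 2 ^ n + 2 * C₁

/-- Log of the doubling constant. -/
def Lc (n : ℕ) (C₁ : ℝ) : ℝ := Real.logb 2 (Kc n C₁)

lemma Kc_pos {C₁ : ℝ} (hC₁ : 0 < C₁) : 0 < Kc n C₁ := by
  unfold Kc; positivity

lemma Kc_ge_two {C₁ : ℝ} (hC₁ : 0 < C₁) (hn : 3 ≤ n) : 2 ≤ Kc n C₁ := by
  unfold Kc
  have : (2:ℝ) ≤ 2 ^ n := by
    calc (2:ℝ) = 2 ^ 1 := (pow_one 2).symm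
    _ ≤ 2 ^ n := pow_le_pow_right₀ one_le_two (by omega)
  nlinarith

lemma Lc_nonneg {C₁ : ℝ} (hC₁ : 0 < C₁) (hn : 3 ≤ n) : 0 ≤ Lc n C₁ :=
  Real.logb_nonneg one_lt_two (by linarith [Kc_ge_two (n := n) hC₁ hn])

/-- `r ↦ r^{n-2}` admissibility rewriting. -/
lemma adm_iff {x : EuclideanSpace ℝ (Fin n)} {t : ℝ} (ht : 0 < t)
    (h : t ^ (2 - (n:ℝ)) * ∫ y in ball x t, V y ≤ 1) :
    ∫ y in ball x t, V y ≤ t ^ ((n:ℝ) - 2) := by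
  have h2 : t ^ ((n:ℝ) - 2) * t ^ (2 - (n:ℝ)) = 1 := by
    rw [← Real.rpow_add ht]; norm_num
  calc ∫ y in ball x t, V y
      = t ^ ((n:ℝ) - 2) * (t ^ (2 - (n:ℝ)) * ∫ y in ball x t, V y) := by
        rw [← mul_assoc, h2, one_mul]
    _ ≤ t ^ ((n:ℝ) - 2) * 1 :=
        mul_le_mul_of_nonneg_left h (Real.rpow_nonneg ht.le _)
    _ = t ^ ((n:ℝ) - 2) := mul_one _

lemma doubling_iter {C₁ : ℝ} (hC₁ : 0 < C₁) (hn : 3 ≤ n)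
    (hV2 : DoublingV2 n C₁ V) {x : EuclideanSpace ℝ (Fin n)} {t : ℝ}
    (ht : t ∈ shenSet n V x) :
    ∀ j : ℕ, ∫ y in ball x ((2:ℝ) ^ j * t), V y ≤ (Kc n C₁) ^ j * t ^ ((n:ℝ) - 2) := by
  obtain ⟨htpos, htadm⟩ := ht
  intro j
  induction j with
  | zero => simpa using adm_iff htpos htadm
  | succ j ih =>
      have hrad : (2:ℝ) ^ (j+1) * t = 2 * ((2:ℝ) ^ j * t) := by ring
      have h2jt : (0:ℝ) < (2:ℝ) ^ j * t := by positivity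
      have hd := hV2 x ((2:ℝ) ^ j * t) h2jt
      rw [hrad]
      have hb : ((2:ℝ) ^ j * t) ^ ((n:ℝ) - 2) ≤ (Kc n C₁) ^ j * t ^ ((n:ℝ) - 2) := by
        rw [Real.mul_rpow (by positivity) htpos.le]
        apply mul_le_mul_of_nonneg_right _ (Real.rpow_nonneg htpos.le _)
        have e1 : ((2:ℝ) ^ j) ^ ((n:ℝ) - 2) = ((2:ℝ) ^ ((n:ℝ) - 2)) ^ j := by
          rw [← Real.rpow_natCast (2:ℝ) j, ← Real.rpow_mul (by norm_num),
            mul_comm, Real.rpow_mul (by norm_num), Real.rpow_natCast]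
        rw [e1]
        apply pow_le_pow_left₀ (Real.rpow_nonneg (by norm_num) _)
        calc (2:ℝ) ^ ((n:ℝ) - 2) ≤ 2 ^ ((n:ℝ)) :=
              Real.rpow_le_rpow_of_exponent_le one_le_two (by linarith)
          _ = 2 ^ n := by rw [Real.rpow_natCast]
          _ ≤ Kc n C₁ := by unfold Kc; nlinarith
      calc ∫ y in ball x (2 * ((2:ℝ) ^ j * t)), V y
          ≤ C₁ * ((∫ y in ball x ((2:ℝ) ^ j * t), V y) + ((2:ℝ) ^ j * t) ^ ((n:ℝ) - 2)) := hd
        _ ≤ C₁ * ((Kc n C₁) ^ j * t ^ ((n:ℝ) - 2) + (Kc n C₁) ^ j * t ^ ((n:ℝ) - 2)) := by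
            apply mul_le_mul_of_nonneg_left _ hC₁.le
            exact add_le_add ih hb
        _ = 2 * C₁ * ((Kc n C₁) ^ j * t ^ ((n:ℝ) - 2)) := by ring
        _ ≤ Kc n C₁ * ((Kc n C₁) ^ j * t ^ ((n:ℝ) - 2)) := by
            have hKpos := (Kc_pos (n := n) hC₁).le
            have h1 : (0:ℝ) ≤ (Kc n C₁) ^ j * t ^ ((n:ℝ) - 2) := by positivity
            apply mul_le_mul_of_nonneg_right _ h1
            unfold Kc
            have h2 : (0:ℝ) ≤ 2 ^ n := by positivity
            linarith
        _ = (Kc n C₁) ^ (j+1) * t ^ ((n:ℝ) - 2) := by ring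

lemma growth {C₁ : ℝ} (hC₁ : 0 < C₁) (hn : 3 ≤ n)
    (hV : LocallyIntegrable V volume) (h0 : ∀ z, 0 ≤ V z)
    (hV2 : DoublingV2 n C₁ V) {x : EuclideanSpace ℝ (Fin n)} {t : ℝ}
    (ht : t ∈ shenSet n V x) {s : ℝ} (hs : t ≤ s) :
    ∫ y in ball x s, V y ≤ (2 * s / t) ^ (Lc n C₁) * t ^ ((n:ℝ) - 2) := by
  have htpos : 0 < t := ht.1
  have hspos : 0 < s := lt_of_lt_of_le htpos hs
  have hst1 : (1:ℝ) ≤ s / t := (one_le_div htpos).2 hs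
  set j : ℕ := ⌈Real.logb 2 (s/t)⌉₊ with hj
  have hlogb0 : 0 ≤ Real.logb 2 (s/t) := Real.logb_nonneg one_lt_two hst1
  have hup : s / t ≤ (2:ℝ) ^ j := by
    calc s / t = (2:ℝ) ^ (Real.logb 2 (s/t)) :=
          (Real.rpow_logb two_pos (by norm_num) (by positivity)).symm
      _ ≤ (2:ℝ) ^ ((j:ℝ)) :=
          Real.rpow_le_rpow_of_exponent_le one_le_two (Nat.le_ceil _)
      _ = (2:ℝ) ^ j := Real.rpow_natCast 2 j
  have hdown : ((2:ℝ) ^ j : ℝ) ≤ 2 * (s / t) := by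
    have hjlt : (j:ℝ) < Real.logb 2 (s/t) + 1 := by
      exact_mod_cast Nat.ceil_lt_add_one hlogb0
    calc ((2:ℝ) ^ j : ℝ) = (2:ℝ) ^ ((j:ℝ)) := (Real.rpow_natCast 2 j).symm
      _ ≤ (2:ℝ) ^ (Real.logb 2 (s/t) + 1) :=
          Real.rpow_le_rpow_of_exponent_le one_le_two hjlt.le
      _ = (2:ℝ) ^ (Real.logb 2 (s/t)) * 2 := by
          rw [Real.rpow_add two_pos, Real.rpow_one]
      _ = 2 * (s / t) := by
          rw [Real.rpow_logb two_pos (by norm_num) (by positivity)]; ring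
  have hmono : ∫ y in ball x s, V y ≤ ∫ y in ball x ((2:ℝ) ^ j * t), V y := by
    apply setIntegral_mono_set ((hV.integrableOn_isCompact (isCompact_closedBall x _)).mono_set
      ball_subset_closedBall) (Filter.Eventually.of_forall h0)
    apply HasSubset.Subset.eventuallyLE
    apply ball_subset_ball
    rwa [div_le_iff₀ htpos] at hup
  have hKj : (Kc n C₁) ^ j ≤ (2 * s / t) ^ (Lc n C₁) := by
    have hKpos := Kc_pos (n := n) hC₁
    have e1 : (Kc n C₁) ^ j = ((2:ℝ) ^ j : ℝ) ^ (Lc n C₁) := by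
      rw [← Real.rpow_logb two_pos (by norm_num) hKpos, ← Real.rpow_natCast ((2:ℝ) ^ Real.logb 2 (Kc n C₁)) j,
        ← Real.rpow_mul (by norm_num), mul_comm, Real.rpow_mul (by norm_num),
        Real.rpow_natCast]
      rfl
    rw [e1]
    apply Real.rpow_le_rpow (by positivity) _ (Lc_nonneg hC₁ hn)
    calc ((2:ℝ) ^ j : ℝ) ≤ 2 * (s / t) := hdown
      _ = 2 * s / t := by ring
  calc ∫ y in ball x s, V y ≤ ∫ y in ball x ((2:ℝ) ^ j * t), V y := hmono
    _ ≤ (Kc n C₁) ^ j * t ^ ((n:ℝ) - 2) := doubling_iter hC₁ hn hV2 ht j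
    _ ≤ (2 * s / t) ^ (Lc n C₁) * t ^ ((n:ℝ) - 2) :=
        mul_le_mul_of_nonneg_right hKj (Real.rpow_nonneg htpos.le _)

/-- The exponent `k₀`. -/
def k0c (n : ℕ) (C₁ δ : ℝ) : ℝ := Lc n C₁ / δ + 1

/-- Small constant from the admissible-radius construction. -/
def c2c (n : ℕ) (C₀ C₁ δ : ℝ) : ℝ :=
  min (1/2) (((C₀ + 1) * 6 ^ (Lc n C₁)) ^ (-(1/δ)))

/-- The constant in the one-sided comparison. -/
def Cuc (n : ℕ) (C₀ C₁ δ : ℝ) : ℝ := (c2c n C₀ C₁ δ)⁻¹ * 2 ^ (k0c n C₁ δ + 1)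

lemma c2c_pos {C₀ C₁ δ : ℝ} (hC₀ : 0 < C₀) (hδ : 0 < δ) : 0 < c2c n C₀ C₁ δ := by
  apply lt_min (by norm_num)
  apply Real.rpow_pos_of_pos
  have : (0:ℝ) < 6 ^ (Lc n C₁) := Real.rpow_pos_of_pos (by norm_num) _
  positivity

lemma c2c_le_half {C₀ C₁ δ : ℝ} : c2c n C₀ C₁ δ ≤ 1/2 := min_le_left _ _

lemma k0c_pos {C₁ δ : ℝ} (hC₁ : 0 < C₁) (hδ : 0 < δ) (hn : 3 ≤ n) : 0 < k0c n C₁ δ := by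
  have := Lc_nonneg (n := n) hC₁ hn
  unfold k0c; positivity

lemma rpow_helper1 {a e b : ℝ} (ha : 0 < a) (he : 0 < e) (hb0 : 0 ≤ b)
    (hb : b ≤ a ^ (-(1/e))) : b ^ e ≤ a⁻¹ := by
  have := Real.rpow_le_rpow hb0 hb he.le
  rwa [← Real.rpow_mul ha.le, show (-(1/e)) * e = -1 by field_simp,
    Real.rpow_neg_one] at this

lemma c2c_le_snd {C₀ C₁ δ : ℝ} :
    c2c n C₀ C₁ δ ≤ ((C₀ + 1) * 6 ^ (Lc n C₁)) ^ (-(1/δ)) := min_le_right _ _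

set_option maxHeartbeats 1000000 in
lemma mShen_le {C₀ δ C₁ : ℝ} (hn : 3 ≤ n) (hC₀ : 0 < C₀) (hδ : 0 < δ) (hC₁ : 0 < C₁)
    (h0 : ∀ z, 0 ≤ V z) (hV : LocallyIntegrable V volume)
    (hV1 : KatoV1 n C₀ δ V) (hV2 : DoublingV2 n C₁ V)
    (hpos : 0 < ∫⁻ y, ENNReal.ofReal (V y)) (x y : EuclideanSpace ℝ (Fin n)) :
    mShen n V y ≤ Cuc n C₀ C₁ δ * mShen n V x *
      (1 + dist x y * mShen n V x) ^ (k0c n C₁ δ) := by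
  set L : ℝ := Lc n C₁ with hLdef
  have hL0 : 0 ≤ L := Lc_nonneg hC₁ hn
  set k0 : ℝ := k0c n C₁ δ with hk0def
  have hk0 : k0 = L/δ + 1 := rfl
  have hk0pos : 0 < k0 := k0c_pos hC₁ hδ hn
  set Sx : ℝ := sSup (shenSet n V x) with hSxdef
  set Sy : ℝ := sSup (shenSet n V y) with hSydef
  have hSx : 0 < Sx := sSup_shen_pos hC₀ hδ hV h0 hV1 hpos x
  have hSy : 0 < Sy := sSup_shen_pos hC₀ hδ hV h0 hV1 hpos y
  obtain ⟨t, htmem, htgt⟩ :=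
    exists_lt_of_lt_csSup (shen_nonempty hC₀ hδ h0 hV1 x) (half_lt_self hSx)
  have htpos : 0 < t := htmem.1
  set d : ℝ := dist x y with hd
  have hd0 : 0 ≤ d := dist_nonneg
  set A' : ℝ := 1 + d / t with hA'def
  have hA'1 : (1:ℝ) ≤ A' := by
    have : 0 ≤ d / t := by positivity
    simp [hA'def]; linarith
  have hA'pos : 0 < A' := lt_of_lt_of_le one_pos hA'1
  have hA't : A' * t = t + d := by rw [hA'def, add_mul, one_mul, div_mul_cancel₀ d htpos.ne']
  set R : ℝ := 2 * A' * t with hRdef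
  have hRpos : 0 < R := by positivity
  have htR : t ≤ R := by nlinarith
  set θ : ℝ := min (1/2) ((C₀ * (6*A') ^ L + 1) ^ (-(1/δ))) with hθdef
  have h6A : (0:ℝ) < (6*A') ^ L := Real.rpow_pos_of_pos (by linarith) _
  have hcm : (0:ℝ) < C₀ * (6*A') ^ L + 1 := by positivity
  have hθpos : 0 < θ := lt_min (by norm_num) (Real.rpow_pos_of_pos hcm _)
  have hθhalf : θ ≤ 1/2 := min_le_left _ _
  set ρ : ℝ := θ * R with hρdef
  have hρpos : 0 < ρ := by positivity
  have hρR : ρ < R := by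
    rw [hρdef]
    nlinarith
  -- Step 1 : bound the mass of the big ball around y
  have hIyR : ∫ z in ball y R, V z ≤ (6*A') ^ L * t ^ ((n:ℝ) - 2) := by
    have hsub : ball y R ⊆ ball x (3 * A' * t) := by
      intro z hz
      rw [mem_ball] at hz ⊢
      have : dist z x ≤ dist z y + dist y x := dist_triangle z y x
      have hyx : dist y x = d := by rw [hd, dist_comm]
      nlinarith [hz, this]
    have h1 : ∫ z in ball y R, V z ≤ ∫ z in ball x (3 * A' * t), V z := by
      apply setIntegral_mono_set ((hV.integrableOn_isCompact (isCompact_closedBall x _)).mono_set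
        ball_subset_closedBall) (Filter.Eventually.of_forall h0)
      exact HasSubset.Subset.eventuallyLE hsub
    have h2 : ∫ z in ball x (3 * A' * t), V z ≤ (2 * (3 * A' * t) / t) ^ L * t ^ ((n:ℝ) - 2) :=
      growth hC₁ hn hV h0 hV2 htmem (by nlinarith)
    have h3 : 2 * (3 * A' * t) / t = 6 * A' := by field_simp; ring
    rw [h3] at h2
    exact h1.trans h2
  -- Step 2 : smallness of the mass of the ball around y of radius ρ
  have hIyρ : ∫ z in ball y ρ, V z ≤ ρ ^ ((n:ℝ) - 2) := by
    have hV1' := hV1 y ρ R hρpos hρR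
    have hρRθ : ρ / R = θ := by
      rw [hρdef]; exact mul_div_cancel_right₀ θ hRpos.ne'
    rw [hρRθ] at hV1'
    have hθδ : θ ^ δ ≤ (C₀ * (6*A') ^ L + 1)⁻¹ :=
      rpow_helper1 hcm hδ hθpos.le (min_le_right _ _)
    have hsmall : C₀ * (6*A') ^ L * θ ^ δ ≤ 1 := by
      calc C₀ * (6*A') ^ L * θ ^ δ ≤ C₀ * (6*A') ^ L * (C₀ * (6*A') ^ L + 1)⁻¹ :=
            mul_le_mul_of_nonneg_left hθδ (by positivity)
        _ ≤ 1 := by rw [mul_inv_le_iff₀ hcm]; nlinarith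
    have hsplit : θ ^ ((n:ℝ) - 2 + δ) = θ ^ ((n:ℝ) - 2) * θ ^ δ := by
      rw [← Real.rpow_add hθpos]
    have htRn : t ^ ((n:ℝ) - 2) ≤ R ^ ((n:ℝ) - 2) := by
      apply Real.rpow_le_rpow htpos.le htR
      have : (3:ℝ) ≤ (n:ℕ) := by exact_mod_cast hn
      linarith
    calc ∫ z in ball y ρ, V z
        ≤ C₀ * θ ^ ((n:ℝ) - 2 + δ) * ∫ z in ball y R, V z := hV1'
      _ ≤ C₀ * θ ^ ((n:ℝ) - 2 + δ) * ((6*A') ^ L * t ^ ((n:ℝ) - 2)) := by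
          apply mul_le_mul_of_nonneg_left hIyR
          positivity
      _ = θ ^ ((n:ℝ) - 2) * (C₀ * (6*A') ^ L * θ ^ δ) * t ^ ((n:ℝ) - 2) := by
          rw [hsplit]; ring
      _ ≤ θ ^ ((n:ℝ) - 2) * 1 * t ^ ((n:ℝ) - 2) := by
          apply mul_le_mul_of_nonneg_right
          · exact mul_le_mul_of_nonneg_left hsmall (Real.rpow_nonneg hθpos.le _)
          · exact Real.rpow_nonneg htpos.le _
      _ ≤ θ ^ ((n:ℝ) - 2) * 1 * R ^ ((n:ℝ) - 2) := by
          apply mul_le_mul_of_nonneg_left htRn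
          positivity
      _ = ρ ^ ((n:ℝ) - 2) := by
          rw [hρdef, Real.mul_rpow hθpos.le hRpos.le]; ring
  -- Step 3 : ρ is admissible for y
  have hρmem : ρ ∈ shenSet n V y := by
    refine ⟨hρpos, ?_⟩
    have h2 : ρ ^ (2 - (n:ℝ)) * ρ ^ ((n:ℝ) - 2) = 1 := by
      rw [← Real.rpow_add hρpos]; norm_num
    calc ρ ^ (2 - (n:ℝ)) * ∫ z in ball y ρ, V z
        ≤ ρ ^ (2 - (n:ℝ)) * ρ ^ ((n:ℝ) - 2) :=
          mul_le_mul_of_nonneg_left hIyρ (Real.rpow_nonneg hρpos.le _)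
      _ = 1 := h2
  have hρSy : ρ ≤ Sy := le_csSup (bddAbove_shen hC₀ hδ hV h0 hV1 hpos y) hρmem
  -- Step 4 : lower bound for ρ
  set c2 : ℝ := c2c n C₀ C₁ δ with hc2def
  have hc2pos : 0 < c2 := c2c_pos hC₀ hδ
  have hρlow : c2 * A' ^ (-k0) * t ≤ ρ := by
    have h6L : (1:ℝ) ≤ 6 ^ L := by
      calc (1:ℝ) = (6:ℝ) ^ (0:ℝ) := (Real.rpow_zero 6).symm
        _ ≤ 6 ^ L := Real.rpow_le_rpow_of_exponent_le (by norm_num) hL0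
    have hA'L : (1:ℝ) ≤ A' ^ L := by
      calc (1:ℝ) = A' ^ (0:ℝ) := (Real.rpow_zero A').symm
        _ ≤ A' ^ L := Real.rpow_le_rpow_of_exponent_le hA'1 hL0
    have hmulrp : (6*A') ^ L = 6 ^ L * A' ^ L := Real.mul_rpow (by norm_num) hA'pos.le
    have hXle : C₀ * (6*A') ^ L + 1 ≤ (C₀ + 1) * 6 ^ L * A' ^ L := by
      rw [hmulrp]
      nlinarith [mul_le_mul_of_nonneg_left hA'L (by positivity : (0:ℝ) ≤ 6 ^ L)]
    have hbig : ((C₀ + 1) * 6 ^ L * A' ^ L) ^ (-(1/δ)) ≤ (C₀ * (6*A') ^ L + 1) ^ (-(1/δ)) := by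
      rw [Real.rpow_neg hcm.le, Real.rpow_neg (by positivity)]
      apply inv_anti₀ (Real.rpow_pos_of_pos hcm _)
      exact Real.rpow_le_rpow hcm.le hXle (by positivity)
    have hsplit2 : ((C₀ + 1) * 6 ^ L * A' ^ L) ^ (-(1/δ))
        = ((C₀ + 1) * 6 ^ L) ^ (-(1/δ)) * A' ^ (-(L/δ)) := by
      rw [Real.mul_rpow (by positivity) (by positivity), ← Real.rpow_mul hA'pos.le]
      congr 1
      field_simp
    have hA'neg1 : A' ^ (-(L/δ)) ≤ 1 := by
      apply Real.rpow_le_one_of_one_le_of_nonpos hA'1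
      have : 0 ≤ L/δ := by positivity
      linarith
    have hθge : c2 * A' ^ (-(L/δ)) ≤ θ := by
      have hpart1 : c2 * A' ^ (-(L/δ)) ≤ 1/2 := by
        have hc2h : c2 ≤ 1/2 := c2c_le_half
        have := mul_le_mul hc2h hA'neg1 (Real.rpow_nonneg hA'pos.le _)
          (by norm_num : (0:ℝ) ≤ 1/2)
        linarith
      have hpart2 : c2 * A' ^ (-(L/δ)) ≤ (C₀ * (6*A') ^ L + 1) ^ (-(1/δ)) := by
        have hc2s : c2 ≤ ((C₀ + 1) * 6 ^ L) ^ (-(1/δ)) := c2c_le_snd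
        have h1 : c2 * A' ^ (-(L/δ)) ≤ ((C₀ + 1) * 6 ^ L) ^ (-(1/δ)) * A' ^ (-(L/δ)) :=
          mul_le_mul_of_nonneg_right hc2s (Real.rpow_nonneg hA'pos.le _)
        exact h1.trans (hsplit2.symm.trans_le hbig)
      exact le_min hpart1 hpart2
    have hA'k0 : A' ^ (-k0) ≤ A' ^ (-(L/δ)) := by
      apply Real.rpow_le_rpow_of_exponent_le hA'1
      rw [hk0]
      have : 0 ≤ L/δ := by positivity
      linarith
    calc c2 * A' ^ (-k0) * t ≤ c2 * A' ^ (-(L/δ)) * t := by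
          apply mul_le_mul_of_nonneg_right _ htpos.le
          exact mul_le_mul_of_nonneg_left hA'k0 hc2pos.le
      _ ≤ θ * t := mul_le_mul_of_nonneg_right hθge htpos.le
      _ ≤ θ * R := mul_le_mul_of_nonneg_left htR hθpos.le
      _ = ρ := hρdef.symm
  -- Step 5 : compare A' with A and t with Sx
  set A : ℝ := 1 + d * Sx⁻¹ with hAdef
  have hA1 : (1:ℝ) ≤ A := by
    have : 0 ≤ d * Sx⁻¹ := by positivity
    simp [hAdef]; linarith
  have hApos : 0 < A := lt_of_lt_of_le one_pos hA1
  have hA'A : A' ≤ 2 * A := by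
    have ht2 : Sx / 2 < t := htgt
    have h1 : d / t ≤ d / (Sx/2) := by
      apply div_le_div_of_nonneg_left hd0 (by linarith) ht2.le
    have h2 : d / (Sx/2) = 2 * (d * Sx⁻¹) := by field_simp
    rw [hA'def, hAdef]
    rw [h2] at h1
    nlinarith [mul_nonneg hd0 (inv_nonneg.2 hSx.le)]
  have h2A : A' ^ (-k0) ≥ (2*A) ^ (-k0) := by
    rw [Real.rpow_neg hA'pos.le, Real.rpow_neg (by positivity)]
    apply inv_anti₀ (Real.rpow_pos_of_pos hA'pos _)
    exact Real.rpow_le_rpow hA'pos.le hA'A hk0pos.le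
  have hSylow : c2 * (2*A) ^ (-k0) * (Sx/2) ≤ Sy := by
    calc c2 * (2*A) ^ (-k0) * (Sx/2) ≤ c2 * A' ^ (-k0) * (Sx/2) := by
          apply mul_le_mul_of_nonneg_right _ (by linarith)
          exact mul_le_mul_of_nonneg_left h2A hc2pos.le
      _ ≤ c2 * A' ^ (-k0) * t := by
          apply mul_le_mul_of_nonneg_left htgt.le
          positivity
      _ ≤ ρ := hρlow
      _ ≤ Sy := hρSy
  -- Step 6 : conclude
  have hBpos : 0 < c2 * (2*A) ^ (-k0) * (Sx/2) := by
    have := Real.rpow_pos_of_pos (show (0:ℝ) < 2*A by linarith) (-k0)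
    positivity
  have hfin : Sy⁻¹ ≤ (c2 * (2*A) ^ (-k0) * (Sx/2))⁻¹ := by
    apply inv_anti₀ hBpos hSylow
  have hcompute : (c2 * (2*A) ^ (-k0) * (Sx/2))⁻¹
      = Cuc n C₀ C₁ δ * Sx⁻¹ * A ^ k0 := by
    have h2A' : ((2*A) ^ (-k0))⁻¹ = 2 ^ k0 * A ^ k0 := by
      rw [Real.rpow_neg (by positivity), inv_inv, Real.mul_rpow (by norm_num) hApos.le]
    rw [mul_inv, mul_inv, h2A']
    rw [show Cuc n C₀ C₁ δ = c2⁻¹ * 2 ^ (k0 + 1) from rfl]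
    rw [Real.rpow_add_one (by norm_num : (2:ℝ) ≠ 0)]
    field_simp
  show Sy⁻¹ ≤ Cuc n C₀ C₁ δ * Sx⁻¹ * (1 + d * Sx⁻¹) ^ k0
  rw [← hAdef]
  exact hfin.trans_eq hcompute

lemma Cuc_ge_two {C₀ C₁ δ : ℝ} (hC₀ : 0 < C₀) (hδ : 0 < δ) (hC₁ : 0 < C₁) (hn : 3 ≤ n) :
    2 ≤ Cuc n C₀ C₁ δ := by
  have hc2pos : 0 < c2c n C₀ C₁ δ := c2c_pos hC₀ hδ
  have h1 : (2:ℝ) ≤ (c2c n C₀ C₁ δ)⁻¹ := by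
    rw [le_inv_comm₀ (by norm_num) hc2pos]
    calc c2c n C₀ C₁ δ ≤ 1/2 := c2c_le_half
      _ = 2⁻¹ := by norm_num
  have h2 : (1:ℝ) ≤ 2 ^ (k0c n C₁ δ + 1) := by
    have hk := (k0c_pos (n := n) hC₁ hδ hn).le
    calc (1:ℝ) = (2:ℝ) ^ (0:ℝ) := (Real.rpow_zero 2).symm
      _ ≤ 2 ^ (k0c n C₁ δ + 1) :=
          Real.rpow_le_rpow_of_exponent_le one_le_two (by linarith)
  calc (2:ℝ) = 2 * 1 := by norm_num
    _ ≤ (c2c n C₀ C₁ δ)⁻¹ * 2 ^ (k0c n C₁ δ + 1) :=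
        mul_le_mul h1 h2 (by norm_num) (by positivity)
    _ = Cuc n C₀ C₁ δ := rfl

theorem fps_aux_final
    (n : ℕ) (hn : 3 ≤ n) (C₀ δ C₁ : ℝ) (hC₀ : 0 < C₀) (hδ : 0 < δ) (hC₁ : 0 < C₁) :
    ∃ k₀ C : ℝ, 0 < k₀ ∧ 1 ≤ C ∧
      ∀ V : EuclideanSpace ℝ (Fin n) → ℝ, (∀ x, 0 ≤ V x) →
        LocallyIntegrable V volume → KatoV1 n C₀ δ V → DoublingV2 n C₁ V →
        (0 < ∫⁻ y, ENNReal.ofReal (V y)) →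
        ∀ x y : EuclideanSpace ℝ (Fin n),
          C⁻¹ * mShen n V x * (1 + dist x y * mShen n V x) ^ (-(k₀ / (k₀ + 1)))
              ≤ mShen n V y ∧
          mShen n V y ≤ C * mShen n V x * (1 + dist x y * mShen n V x) ^ k₀ := by
  set k0 : ℝ := k0c n C₁ δ with hk0def
  set Cu : ℝ := Cuc n C₀ C₁ δ with hCudef
  have hk0pos : 0 < k0 := k0c_pos hC₁ hδ hn
  have hCu2 : 2 ≤ Cu := Cuc_ge_two hC₀ hδ hC₁ hn
  have hCupos : 0 < Cu := by linarith
  have h2k0 : (1:ℝ) ≤ 2 ^ k0 := by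
    calc (1:ℝ) = (2:ℝ) ^ (0:ℝ) := (Real.rpow_zero 2).symm
      _ ≤ 2 ^ k0 := Real.rpow_le_rpow_of_exponent_le one_le_two hk0pos.le
  set C : ℝ := Cu * 2 ^ k0 with hCdef
  have hCpos : 0 < C := by positivity
  have hC1 : 1 ≤ C := by nlinarith
  refine ⟨k0, C, hk0pos, hC1, ?_⟩
  intro V h0 hV hV1 hV2 hpos x y
  have hmx : 0 < mShen n V x := inv_pos.2 (sSup_shen_pos hC₀ hδ hV h0 hV1 hpos x)
  have hmy : 0 < mShen n V y := inv_pos.2 (sSup_shen_pos hC₀ hδ hV h0 hV1 hpos y)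
  set mx : ℝ := mShen n V x with hmxdef
  set my : ℝ := mShen n V y with hmydef
  set d : ℝ := dist x y with hddef
  have hd0 : 0 ≤ d := dist_nonneg
  have hA1 : (1:ℝ) ≤ 1 + d * mx := by nlinarith
  have hApos : (0:ℝ) < 1 + d * mx := by linarith
  constructor
  · -- lower bound
    have hswap := mShen_le hn hC₀ hδ hC₁ h0 hV hV1 hV2 hpos y x
    rw [dist_comm, ← hddef, ← hmxdef, ← hmydef, ← hCudef, ← hk0def] at hswap
    -- hswap : mx ≤ Cu * my * (1 + d * my) ^ k0
    set e : ℝ := k0 / (k0 + 1) with hedef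
    have he0 : 0 ≤ e := by positivity
    have he1 : e ≤ 1 := by
      rw [hedef, div_le_one (by linarith)]; linarith
    have hAe : (1 + d * mx) ^ (-e) ≤ 1 :=
      Real.rpow_le_one_of_one_le_of_nonpos hA1 (by linarith)
    rcases le_or_gt (d * my) 1 with hcase | hcase
    · -- short distance case
      have hB2 : 1 + d * my ≤ 2 := by linarith
      have hBk : (1 + d * my) ^ k0 ≤ 2 ^ k0 :=
        Real.rpow_le_rpow (by nlinarith) hB2 hk0pos.le
      have h1 : mx ≤ C * my := by
        calc mx ≤ Cu * my * (1 + d * my) ^ k0 := hswap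
          _ ≤ Cu * my * 2 ^ k0 := by
              apply mul_le_mul_of_nonneg_left hBk (by positivity)
          _ = C * my := by rw [hCdef]; ring
      have h2 : C⁻¹ * mx ≤ my := by
        rw [inv_mul_le_iff₀ hCpos]; exact h1
      calc C⁻¹ * mx * (1 + d * mx) ^ (-e)
          ≤ C⁻¹ * mx * 1 := mul_le_mul_of_nonneg_left hAe (by positivity)
        _ = C⁻¹ * mx := mul_one _
        _ ≤ my := h2
    · -- long distance case
      have hdpos : 0 < d := by nlinarith
      have hB : 1 + d * my ≤ 2 * (d * my) := by linarith
      have hBk : (1 + d * my) ^ k0 ≤ (2 * (d * my)) ^ k0 :=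
        Real.rpow_le_rpow (by nlinarith) hB hk0pos.le
      have hsplitB : (2 * (d * my)) ^ k0 = 2 ^ k0 * d ^ k0 * my ^ k0 := by
        rw [Real.mul_rpow (by norm_num) (by positivity),
          Real.mul_rpow hdpos.le hmy.le]
        ring
      have hkey : mx ≤ C * d ^ k0 * my ^ (k0 + 1) := by
        have hm1 : my * my ^ k0 = my ^ (k0 + 1) := by
          rw [Real.rpow_add_one hmy.ne']; ring
        calc mx ≤ Cu * my * (1 + d * my) ^ k0 := hswap
          _ ≤ Cu * my * (2 * (d * my)) ^ k0 :=
              mul_le_mul_of_nonneg_left hBk (by positivity)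
          _ = Cu * 2 ^ k0 * d ^ k0 * (my * my ^ k0) := by rw [hsplitB]; ring
          _ = C * d ^ k0 * my ^ (k0 + 1) := by rw [hm1, hCdef]
      set q : ℝ := 1 / (k0 + 1) with hqdef
      have hq0 : 0 ≤ q := by positivity
      have hkq : k0 * q = e := by rw [hqdef, hedef]; field_simp
      have hden : (0:ℝ) < C * d ^ k0 := by
        have := Real.rpow_pos_of_pos hdpos k0
        positivity
      have hkey2 : mx / (C * d ^ k0) ≤ my ^ (k0 + 1) := by
        rw [div_le_iff₀ hden]
        calc mx ≤ C * d ^ k0 * my ^ (k0 + 1) := hkey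
          _ = my ^ (k0 + 1) * (C * d ^ k0) := by ring
      have hmyq : (mx / (C * d ^ k0)) ^ q ≤ my := by
        have h1 := Real.rpow_le_rpow (by positivity) hkey2 hq0
        have h2 : (my ^ (k0 + 1)) ^ q = my := by
          rw [← Real.rpow_mul hmy.le, show (k0 + 1) * q = 1 by
            rw [hqdef]; field_simp, Real.rpow_one]
        rwa [h2] at h1
      have hde : (0:ℝ) < d ^ e := Real.rpow_pos_of_pos hdpos _
      have hCqp : (0:ℝ) < C ^ q := Real.rpow_pos_of_pos hCpos _
      have hmxe : (0:ℝ) < mx ^ e := Real.rpow_pos_of_pos hmx _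
      have hexpand : (mx / (C * d ^ k0)) ^ q = mx * ((C ^ q)⁻¹ * (d * mx) ^ (-e)) := by
        rw [Real.div_rpow hmx.le hden.le,
          Real.mul_rpow hCpos.le (Real.rpow_nonneg hdpos.le _),
          ← Real.rpow_mul hdpos.le, hkq]
        have hmxq : mx ^ q = mx * mx ^ (-e) := by
          rw [show mx * mx ^ (-e) = mx ^ (1:ℝ) * mx ^ (-e) by rw [Real.rpow_one],
            ← Real.rpow_add hmx, show (1:ℝ) + -e = q by
              rw [hqdef, hedef]; field_simp; ring]
        have hdmx : (d * mx) ^ (-e) = d ^ (-e) * mx ^ (-e) := Real.mul_rpow hdpos.le hmx.le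
        rw [hmxq, hdmx, Real.rpow_neg hdpos.le, Real.rpow_neg hmx.le]
        field_simp
      have hCq : C⁻¹ ≤ (C ^ q)⁻¹ := by
        apply inv_anti₀ hCqp
        calc C ^ q ≤ C ^ (1:ℝ) := Real.rpow_le_rpow_of_exponent_le hC1 (by
            rw [hqdef, div_le_one (by linarith)]; linarith)
          _ = C := Real.rpow_one C
      have hdA : (1 + d * mx) ^ (-e) ≤ (d * mx) ^ (-e) := by
        have hdmxpos : (0:ℝ) < d * mx := by positivity
        rw [Real.rpow_neg hdmxpos.le, Real.rpow_neg hApos.le]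
        apply inv_anti₀ (Real.rpow_pos_of_pos hdmxpos _)
        exact Real.rpow_le_rpow hdmxpos.le (by linarith) he0
      have hAenn : (0:ℝ) ≤ (1 + d * mx) ^ (-e) := Real.rpow_nonneg hApos.le _
      calc C⁻¹ * mx * (1 + d * mx) ^ (-e)
          ≤ (C ^ q)⁻¹ * mx * (d * mx) ^ (-e) := by
            apply mul_le_mul _ hdA hAenn _
            · exact mul_le_mul_of_nonneg_right hCq hmx.le
            · positivity
        _ = (mx / (C * d ^ k0)) ^ q := by rw [hexpand]; ring
        _ ≤ my := hmyq
  · -- upper bound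
    have h := mShen_le hn hC₀ hδ hC₁ h0 hV hV1 hV2 hpos x y
    rw [← hddef, ← hmxdef, ← hmydef, ← hCudef, ← hk0def] at h
    calc my ≤ Cu * mx * (1 + d * mx) ^ k0 := h
      _ ≤ C * mx * (1 + d * mx) ^ k0 := by
          apply mul_le_mul_of_nonneg_right _ (Real.rpow_nonneg hApos.le _)
          apply mul_le_mul_of_nonneg_right _ hmx.le
          rw [hCdef]
          nlinarith

/-- Comparability of the Fefferman–Phong–Shen maximal function at a long distance:
there exist `k₀ > 0` and `C ≥ 1`, depending only on `n, C₀, C₁, δ`, such that for all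
`x, y`: `m(y,V) ≥ C⁻¹ m(x,V) (1 + |x-y| m(x,V))^{-k₀/(k₀+1)}` and
`m(y,V) ≤ C m(x,V) (1 + |x-y| m(x,V))^{k₀}`. -/
theorem fps_maximal_function_long_distance_comparability
    (n : ℕ) (hn : 3 ≤ n) (C₀ δ C₁ : ℝ) (hC₀ : 0 < C₀) (hδ : 0 < δ) (hC₁ : 0 < C₁) :
    ∃ k₀ C : ℝ, 0 < k₀ ∧ 1 ≤ C ∧
      ∀ V : EuclideanSpace ℝ (Fin n) → ℝ, (∀ x, 0 ≤ V x) →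
        LocallyIntegrable V volume → KatoV1 n C₀ δ V → DoublingV2 n C₁ V →
        (0 < ∫⁻ y, ENNReal.ofReal (V y)) →
        ∀ x y : EuclideanSpace ℝ (Fin n),
          C⁻¹ * mShen n V x * (1 + dist x y * mShen n V x) ^ (-(k₀ / (k₀ + 1)))
              ≤ mShen n V y ∧
          mShen n V y ≤ C * mShen n V x * (1 + dist x y * mShen n V x) ^ k₀ :=
  fps_aux_final n hn C₀ δ C₁ hC₀ hδ hC₁
end
end

section
/- Let n ≥ 2, let Ω ⊆ ℝⁿ be open, let a = (a₁,…,aₙ) be a C¹ real vector field on Ω, and let S be a selection of pairs. Then for every smooth compactly supported function f : Ω → ℂ, | ∫_Ω Σ_S B(x) |f(x)|² dx | ≤ (n−1) ∫_Ω |D_a f|², where |D_a f|² = Σ_{k=1}^n |D_{k,a} f|². (This is the key commutator estimate in the proof of the magnetic uncertainty principle.) -/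
open MeasureTheory Metric

noncomputable section

/-- Partial derivative `∂f/∂x_j` of a complex-valued function on `ℝⁿ`. -/
def pdC {n : ℕ} (j : Fin n) (f : EuclideanSpace ℝ (Fin n) → ℂ)
    (x : EuclideanSpace ℝ (Fin n)) : ℂ :=
  fderiv ℝ f x (EuclideanSpace.single j 1)

/-- Partial derivative `∂g/∂x_j` of a real-valued function on `ℝⁿ`. -/
def pdR {n : ℕ} (j : Fin n) (g : EuclideanSpace ℝ (Fin n) → ℝ)
    (x : EuclideanSpace ℝ (Fin n)) : ℝ :=
  fderiv ℝ g x (EuclideanSpace.single j 1)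

/-- Magnetic derivative `D_{j,a} f = ∂f/∂x_j − i a_j f`. -/
def magD {n : ℕ} (a : Fin n → EuclideanSpace ℝ (Fin n) → ℝ) (j : Fin n)
    (f : EuclideanSpace ℝ (Fin n) → ℂ) (x : EuclideanSpace ℝ (Fin n)) : ℂ :=
  pdC j f x - Complex.I * (a j x : ℂ) * f x

/-- Component `b_{jk} = ∂a_j/∂x_k − ∂a_k/∂x_j` of the magnetic field. -/
def Bfield {n : ℕ} (a : Fin n → EuclideanSpace ℝ (Fin n) → ℝ) (j k : Fin n)
    (x : EuclideanSpace ℝ (Fin n)) : ℝ :=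
  pdR k (a j) x - pdR j (a k) x

/-- A selection of pairs: for each `j ≠ k`, exactly one of `(j,k)`, `(k,j)` belongs
to `S`, and `S` contains no diagonal pairs. -/
def IsSelection {n : ℕ} (S : Finset (Fin n × Fin n)) : Prop :=
  (∀ p ∈ S, p.1 ≠ p.2) ∧ ∀ j k : Fin n, j ≠ k → ((j, k) ∈ S ↔ (k, j) ∉ S)


section MagAuxPriv
open Complex

variable {n : ℕ}

private lemma fderiv_zero_of_nmem {F : Type*} [NormedAddCommGroup F] [NormedSpace ℝ F]
    {g : EuclideanSpace ℝ (Fin n) → F} {x : EuclideanSpace ℝ (Fin n)}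
    (hx : x ∉ tsupport g) : fderiv ℝ g x = 0 := by
  by_contra h
  exact hx (support_fderiv_subset ℝ (Function.mem_support.2 h))

private lemma integral_lineDeriv_eq_zero {G : Type*} [NormedAddCommGroup G] [NormedSpace ℝ G]
    {g g' : EuclideanSpace ℝ (Fin n) → G} {v : EuclideanSpace ℝ (Fin n)}
    (hg : ∀ x, HasLineDerivAt ℝ g (g' x) x v)
    (h1 : Integrable g) (h2 : Integrable g') :
    ∫ x, g' x = 0 := by
  have h := integral_bilinear_hasLineDerivAt_right_eq_neg_left_of_integrable
      (μ := (volume : Measure (EuclideanSpace ℝ (Fin n))))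
      (B := ContinuousLinearMap.lsmul ℝ ℝ)
      (f := fun _ => (1 : ℝ)) (f' := fun _ => (0 : ℝ)) (g := g) (g' := g') (v := v)
      (by simpa using (integrable_zero _ G (volume : Measure (EuclideanSpace ℝ (Fin n)))))
      (by simpa using h2) (by simpa using h1)
      (fun x _ => by simpa using (hasFDerivAt_const (1 : ℝ) x).hasLineDerivAt v) (fun x _ => hg x)
  simpa using h

private lemma continuous_glue {G : Type*} [NormedAddCommGroup G]
    {Ω K : Set (EuclideanSpace ℝ (Fin n))} {g : EuclideanSpace ℝ (Fin n) → G}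
    (hΩ : IsOpen Ω) (hK : IsClosed K) (hKΩ : K ⊆ Ω)
    (h1 : ContinuousOn g Ω) (h0 : ∀ x ∉ K, g x = 0) : Continuous g := by
  rw [continuous_iff_continuousAt]
  intro x
  by_cases hx : x ∈ Ω
  · exact h1.continuousAt (hΩ.mem_nhds hx)
  · have hxK : x ∉ K := fun h => hx (hKΩ h)
    have hev : g =ᶠ[nhds x] (fun _ => 0) := by
      filter_upwards [hK.isOpen_compl.mem_nhds hxK] with y hy
      exact h0 y hy
    exact (continuousAt_const (y := (0 : G))).congr hev.symm

private lemma integrable_of_zero_off {G : Type*} [NormedAddCommGroup G]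
    {g : EuclideanSpace ℝ (Fin n) → G} {f : EuclideanSpace ℝ (Fin n) → ℂ}
    (hfc : HasCompactSupport f) (hc : Continuous g)
    (h0 : ∀ x ∉ tsupport f, g x = 0) : Integrable g :=
  hc.integrable_of_hasCompactSupport (HasCompactSupport.intro hfc h0)

private lemma aux_alg (u w z : ℂ) (α β : ℝ) :
    ((starRingEnd ℂ) (u - Complex.I * α * z) * (w - Complex.I * β * z)).im
      = ((starRingEnd ℂ) u * w).im + α * ((starRingEnd ℂ) z * w).re
        - β * ((starRingEnd ℂ) z * u).re := by
  simp only [map_sub, map_mul, Complex.conj_I, Complex.conj_ofReal, Complex.mul_im,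
    Complex.mul_re, Complex.sub_re, Complex.sub_im, Complex.conj_re, Complex.conj_im,
    Complex.I_re, Complex.I_im, Complex.ofReal_re, Complex.ofReal_im, Complex.neg_re,
    Complex.neg_im]
  ring

private lemma aux_bound (u w : ℂ) :
    |(-2 : ℝ) * (((starRingEnd ℂ) u) * w).im| ≤ ‖u‖ ^ 2 + ‖w‖ ^ 2 := by
  have h1 : |(((starRingEnd ℂ) u) * w).im| ≤ ‖u‖ * ‖w‖ := by
    calc |(((starRingEnd ℂ) u) * w).im| ≤ ‖((starRingEnd ℂ) u) * w‖ :=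
          Complex.abs_im_le_norm _
    _ = ‖u‖ * ‖w‖ := by
        rw [norm_mul, Complex.norm_conj]
  have h2 : |(-2 : ℝ) * (((starRingEnd ℂ) u) * w).im|
      = 2 * |(((starRingEnd ℂ) u) * w).im| := by
    rw [abs_mul]; norm_num
  rw [h2]
  nlinarith [two_mul_le_add_sq ‖u‖ ‖w‖, norm_nonneg u, norm_nonneg w]

private lemma pair_estimate
    {Ω : Set (EuclideanSpace ℝ (Fin n))} (hΩ : IsOpen Ω)
    {a : Fin n → EuclideanSpace ℝ (Fin n) → ℝ} (ha : ∀ j, ContDiffOn ℝ 1 (a j) Ω)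
    {f : EuclideanSpace ℝ (Fin n) → ℂ} (hf : ContDiff ℝ (⊤ : ℕ∞) f)
    (hfc : HasCompactSupport f) (hfs : tsupport f ⊆ Ω) (j k : Fin n) :
    |∫ x, Bfield a j k x * ‖f x‖ ^ 2|
      ≤ ∫ x, (‖magD a j f x‖ ^ 2 + ‖magD a k f x‖ ^ 2) := by
  have hfd : Differentiable ℝ f := hf.differentiable (by simp)
  have hf1 : ContDiff ℝ (⊤ : ℕ∞) (fderiv ℝ f) := hf.fderiv_right (by simp)
  have hf1c : Continuous (fderiv ℝ f) := hf1.continuous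
  have hD2c : Continuous (fderiv ℝ (fderiv ℝ f)) := hf1.continuous_fderiv (by simp)
  have hpdCc : ∀ i : Fin n, Continuous (pdC i f) := fun i =>
    (ContinuousLinearMap.apply ℝ ℂ (EuclideanSpace.single i 1)).continuous.comp hf1c
  have hzf : ∀ x, x ∉ tsupport f → f x = 0 := fun x hx => image_eq_zero_of_notMem_tsupport hx
  have hzpd : ∀ (i : Fin n) x, x ∉ tsupport f → pdC i f x = 0 := fun i x hx => by
    simp [pdC, fderiv_zero_of_nmem hx]
  have htsub : tsupport (fderiv ℝ f) ⊆ tsupport f :=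
    closure_minimal (support_fderiv_subset ℝ) (isClosed_tsupport f)
  have hzD2 : ∀ x, x ∉ tsupport f → fderiv ℝ (fderiv ℝ f) x = 0 := fun x hx =>
    fderiv_zero_of_nmem (fun h => hx (htsub h))
  set P : EuclideanSpace ℝ (Fin n) → ℝ := fun x => ‖f x‖ ^ 2 with hPdef
  have hPsm : ContDiff ℝ (⊤ : ℕ∞) P := hf.norm_sq ℂ
  have hPc : Continuous P := hPsm.continuous
  have hP1c : Continuous (fderiv ℝ P) := hPsm.continuous_fderiv (by simp)
  have hpdRPc : ∀ i : Fin n, Continuous (pdR i P) := fun i =>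
    (ContinuousLinearMap.apply ℝ ℝ (EuclideanSpace.single i 1)).continuous.comp hP1c
  have hPd : ∀ x, HasFDerivAt P (2 • (innerSL ℝ (f x)).comp (fderiv ℝ f x)) x := fun x =>
    (hfd x).hasFDerivAt.norm_sq
  have hpdRP : ∀ (i : Fin n) x, pdR i P x = 2 * ((starRingEnd ℂ) (f x) * pdC i f x).re := by
    intro i x
    have h := (hPd x).fderiv
    rw [pdR, h]
    simp only [ContinuousLinearMap.smul_apply, ContinuousLinearMap.comp_apply, innerSL_apply_apply,
      Complex.inner, pdC, smul_eq_mul, Complex.mul_re, Complex.conj_re, Complex.conj_im,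
      nsmul_eq_mul, Nat.cast_ofNat]
    ring
  have hzP : ∀ x, x ∉ tsupport f → P x = 0 := fun x hx => by simp [hPdef, hzf x hx]
  have hzpdRP : ∀ (i : Fin n) x, x ∉ tsupport f → pdR i P x = 0 := fun i x hx => by
    simp [hpdRP, hzf x hx]
  have hmagz : ∀ (i : Fin n) x, x ∉ tsupport f → magD a i f x = 0 := fun i x hx => by
    simp [magD, hzpd i x hx, hzf x hx]
  have hmagc : ∀ i : Fin n, Continuous (magD a i f) := by
    intro i
    apply continuous_glue hΩ (isClosed_tsupport f) hfs
    · exact ((hpdCc i).continuousOn).sub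
        ((continuousOn_const.mul
          (Complex.continuous_ofReal.comp_continuousOn (ha i).continuousOn)).mul
          hf.continuous.continuousOn)
    · exact fun x hx => hmagz i x hx
  -- Integration by parts, first form
  have hA : ∀ (j k : Fin n), ∫ x, pdR k (a j) x * P x = - ∫ x, a j x * pdR k P x := by
    intro j k
    have hfdac : ContinuousOn (fderiv ℝ (a j)) Ω := (ha j).continuousOn_fderiv_of_isOpen hΩ le_rfl
    have hc1 : Continuous fun x => pdR k (a j) x * P x := by
      apply continuous_glue hΩ (isClosed_tsupport f) hfs
      · exact ((ContinuousLinearMap.apply ℝ ℝ (EuclideanSpace.single k 1)).continuous.comp_continuousOn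
          hfdac).mul hPc.continuousOn
      · intro x hx; simp [hzP x hx]
    have hc2 : Continuous fun x => a j x * pdR k P x := by
      apply continuous_glue hΩ (isClosed_tsupport f) hfs
      · exact (ha j).continuousOn.mul (hpdRPc k).continuousOn
      · intro x hx; simp [hzpdRP k x hx]
    have hcg : Continuous fun x => a j x * P x := by
      apply continuous_glue hΩ (isClosed_tsupport f) hfs
      · exact (ha j).continuousOn.mul hPc.continuousOn
      · intro x hx; simp [hzP x hx]
    have hld : ∀ x, HasLineDerivAt ℝ (fun y => a j y * P y)
        (pdR k (a j) x * P x + a j x * pdR k P x) x (EuclideanSpace.single k 1) := by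
      intro x
      by_cases hx : x ∈ Ω
      · have h1 : DifferentiableAt ℝ (a j) x :=
          ((ha j).differentiableOn (by simp)).differentiableAt (hΩ.mem_nhds hx)
        have h2 : DifferentiableAt ℝ P x := hPsm.differentiable (by simp) x
        have h3 := (h1.hasFDerivAt.mul h2.hasFDerivAt).hasLineDerivAt (EuclideanSpace.single k 1)
        have h4 : (a j x • fderiv ℝ P x + P x • fderiv ℝ (a j) x) (EuclideanSpace.single k 1)
            = pdR k (a j) x * P x + a j x * pdR k P x := by
          simp [pdR, smul_eq_mul]
          ring
        rw [h4] at h3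
        exact h3
      · have hxt : x ∉ tsupport f := fun h => hx (hfs h)
        have hz : pdR k (a j) x * P x + a j x * pdR k P x = 0 := by
          simp [hzP x hxt, hzpdRP k x hxt]
        rw [hz]
        have hev : (fun y => a j y * P y) =ᶠ[nhds x] (fun _ => 0) := by
          filter_upwards [(isClosed_tsupport f).isOpen_compl.mem_nhds hxt] with y hy
          simp [hzP y hy]
        have h0 : HasLineDerivAt ℝ (fun _ : EuclideanSpace ℝ (Fin n) => (0 : ℝ)) 0 x
            (EuclideanSpace.single k 1) := by
          simpa using (hasFDerivAt_const (0 : ℝ) x).hasLineDerivAt (EuclideanSpace.single k 1)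
        exact h0.congr_of_eventuallyEq hev
    have hi1 : Integrable (fun x => pdR k (a j) x * P x) :=
      integrable_of_zero_off hfc hc1 (fun x hx => by simp [hzP x hx])
    have hi2 : Integrable (fun x => a j x * pdR k P x) :=
      integrable_of_zero_off hfc hc2 (fun x hx => by simp [hzpdRP k x hx])
    have hig : Integrable (fun x => a j x * P x) :=
      integrable_of_zero_off hfc hcg (fun x hx => by simp [hzP x hx])
    have h0 : ∫ x, (pdR k (a j) x * P x + a j x * pdR k P x) = 0 :=
      integral_lineDeriv_eq_zero hld hig (hi1.add hi2)
    rw [integral_add hi1 hi2] at h0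
    linarith
  -- Integration by parts, second form
  have hIBP2 : ∀ (j k : Fin n), ∫ x, (starRingEnd ℂ) (pdC j f x) * pdC k f x
      = - ∫ x, (starRingEnd ℂ) (f x) *
          (fderiv ℝ (fderiv ℝ f) x (EuclideanSpace.single j 1) (EuclideanSpace.single k 1)) := by
    intro j k
    have hld : ∀ x, HasLineDerivAt ℝ (fun y => (starRingEnd ℂ) (f y) * pdC k f y)
        ((starRingEnd ℂ) (pdC j f x) * pdC k f x + (starRingEnd ℂ) (f x) *
          (fderiv ℝ (fderiv ℝ f) x (EuclideanSpace.single j 1) (EuclideanSpace.single k 1)))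
        x (EuclideanSpace.single j 1) := by
      intro x
      have hc1 : HasFDerivAt (fun y => (starRingEnd ℂ) (f y))
          ((Complex.conjCLE.toContinuousLinearMap).comp (fderiv ℝ f x)) x :=
        Complex.conjCLE.toContinuousLinearMap.hasFDerivAt.comp x (hfd x).hasFDerivAt
      have hc2 : HasFDerivAt (pdC k f)
          ((ContinuousLinearMap.apply ℝ ℂ (EuclideanSpace.single k 1)).comp
            (fderiv ℝ (fderiv ℝ f) x)) x := by
        have h := (ContinuousLinearMap.apply ℝ ℂ (EuclideanSpace.single k 1)).hasFDerivAt.comp x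
          ((hf1.differentiable (by simp) x).hasFDerivAt)
        exact h.congr_of_eventuallyEq (Filter.Eventually.of_forall fun y => by
          simp [pdC, Function.comp])
      have h3 := (hc1.mul hc2).hasLineDerivAt (EuclideanSpace.single j 1)
      have h4 : ((starRingEnd ℂ) (f x) •
            ((ContinuousLinearMap.apply ℝ ℂ (EuclideanSpace.single k 1)).comp
              (fderiv ℝ (fderiv ℝ f) x)) +
          pdC k f x • ((Complex.conjCLE.toContinuousLinearMap).comp (fderiv ℝ f x)))
            (EuclideanSpace.single j 1)
          = (starRingEnd ℂ) (pdC j f x) * pdC k f x + (starRingEnd ℂ) (f x) *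
            (fderiv ℝ (fderiv ℝ f) x (EuclideanSpace.single j 1) (EuclideanSpace.single k 1)) := by
        simp [pdC, smul_eq_mul]
        ring
      rw [h4] at h3
      exact h3
    have hDjk : Continuous fun x =>
        fderiv ℝ (fderiv ℝ f) x (EuclideanSpace.single j 1) (EuclideanSpace.single k 1) :=
      (ContinuousLinearMap.apply ℝ ℂ (EuclideanSpace.single k 1)).continuous.comp
        ((ContinuousLinearMap.apply ℝ (EuclideanSpace ℝ (Fin n) →L[ℝ] ℂ)
          (EuclideanSpace.single j 1)).continuous.comp hD2c)
    have hi1 : Integrable (fun x => (starRingEnd ℂ) (pdC j f x) * pdC k f x) :=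
      integrable_of_zero_off hfc ((Complex.conjCLE.continuous.comp (hpdCc j)).mul (hpdCc k))
        (fun x hx => by simp [hzpd j x hx])
    have hi2 : Integrable (fun x => (starRingEnd ℂ) (f x) *
        (fderiv ℝ (fderiv ℝ f) x (EuclideanSpace.single j 1) (EuclideanSpace.single k 1))) :=
      integrable_of_zero_off hfc ((Complex.conjCLE.continuous.comp hf.continuous).mul hDjk)
        (fun x hx => by simp [hzf x hx])
    have hig : Integrable (fun x => (starRingEnd ℂ) (f x) * pdC k f x) :=
      integrable_of_zero_off hfc ((Complex.conjCLE.continuous.comp hf.continuous).mul (hpdCc k))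
        (fun x hx => by simp [hzf x hx])
    have h0 : ∫ x, ((starRingEnd ℂ) (pdC j f x) * pdC k f x + (starRingEnd ℂ) (f x) *
        (fderiv ℝ (fderiv ℝ f) x (EuclideanSpace.single j 1) (EuclideanSpace.single k 1))) = 0 :=
      integral_lineDeriv_eq_zero hld hig (hi1.add hi2)
    rw [integral_add hi1 hi2] at h0
    linear_combination h0
  have hsym : ∀ (j k : Fin n) x,
      fderiv ℝ (fderiv ℝ f) x (EuclideanSpace.single j 1) (EuclideanSpace.single k 1)
      = fderiv ℝ (fderiv ℝ f) x (EuclideanSpace.single k 1) (EuclideanSpace.single j 1) :=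
    fun j k x => second_derivative_symmetric (fun y => (hfd y).hasFDerivAt)
      ((hf1.differentiable (by simp) x).hasFDerivAt) _ _
  have hTsymm : ∀ (j k : Fin n), ∫ x, (starRingEnd ℂ) (pdC j f x) * pdC k f x
      = ∫ x, (starRingEnd ℂ) (pdC k f x) * pdC j f x := by
    intro j k
    rw [hIBP2 j k, hIBP2 k j]
    congr 1
    apply integral_congr_ae
    filter_upwards with x
    rw [hsym j k x]
  have hiT : Integrable (fun x => (starRingEnd ℂ) (pdC j f x) * pdC k f x) :=
    integrable_of_zero_off hfc ((Complex.conjCLE.continuous.comp (hpdCc j)).mul (hpdCc k))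
      (fun x hx => by simp [hzpd j x hx])
  have hTim : (∫ x, (starRingEnd ℂ) (pdC j f x) * pdC k f x).im = 0 := by
    have h1 : (starRingEnd ℂ) (∫ x, (starRingEnd ℂ) (pdC j f x) * pdC k f x)
        = ∫ x, (starRingEnd ℂ) (pdC j f x) * pdC k f x := by
      rw [← integral_conj]
      have : (fun x => (starRingEnd ℂ) ((starRingEnd ℂ) (pdC j f x) * pdC k f x))
          = fun x => (starRingEnd ℂ) (pdC k f x) * pdC j f x := by
        funext x
        simp [mul_comm]
      rw [this]
      exact (hTsymm k j)
    exact Complex.conj_eq_iff_im.mp h1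
  -- pointwise identity
  have hptw : ∀ x, ((starRingEnd ℂ) (magD a j f x) * magD a k f x).im
      = ((starRingEnd ℂ) (pdC j f x) * pdC k f x).im
        + (a j x * pdR k P x) / 2 - (a k x * pdR j P x) / 2 := by
    intro x
    have h2 : (a j x * pdR k P x) / 2 = a j x * ((starRingEnd ℂ) (f x) * pdC k f x).re := by
      rw [hpdRP k x]; ring
    have h3 : (a k x * pdR j P x) / 2 = a k x * ((starRingEnd ℂ) (f x) * pdC j f x).re := by
      rw [hpdRP j x]; ring
    rw [h2, h3]
    simpa [magD] using aux_alg (pdC j f x) (pdC k f x) (f x) (a j x) (a k x)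
  have hu1 : Integrable (fun x => ((starRingEnd ℂ) (pdC j f x) * pdC k f x).im) :=
    (Complex.continuous_im.comp
      ((Complex.conjCLE.continuous.comp (hpdCc j)).mul (hpdCc k))).integrable_of_hasCompactSupport
      (HasCompactSupport.intro hfc (fun x hx => by simp [hzpd j x hx]))
  have hu2 : Integrable (fun x => (a j x * pdR k P x) / 2) := by
    have hc2 : Continuous fun x => a j x * pdR k P x := by
      apply continuous_glue hΩ (isClosed_tsupport f) hfs
      · exact (ha j).continuousOn.mul (hpdRPc k).continuousOn
      · intro x hx; simp [hzpdRP k x hx]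
    exact (integrable_of_zero_off hfc hc2 (fun x hx => by simp [hzpdRP k x hx])).div_const 2
  have hu3 : Integrable (fun x => (a k x * pdR j P x) / 2) := by
    have hc2 : Continuous fun x => a k x * pdR j P x := by
      apply continuous_glue hΩ (isClosed_tsupport f) hfs
      · exact (ha k).continuousOn.mul (hpdRPc j).continuousOn
      · intro x hx; simp [hzpdRP j x hx]
    exact (integrable_of_zero_off hfc hc2 (fun x hx => by simp [hzpdRP j x hx])).div_const 2
  have hIm0 : ∫ x, ((starRingEnd ℂ) (pdC j f x) * pdC k f x).im = 0 := by
    have := integral_im (𝕜 := ℂ) (μ := (volume : Measure (EuclideanSpace ℝ (Fin n)))) hiT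
    simpa [hTim] using this
  have hsplit : ∫ x, ((starRingEnd ℂ) (magD a j f x) * magD a k f x).im
      = (- ∫ x, pdR k (a j) x * P x) / 2 - (- ∫ x, pdR j (a k) x * P x) / 2 := by
    have e1 : ∫ x, ((starRingEnd ℂ) (magD a j f x) * magD a k f x).im
        = ∫ x, (((starRingEnd ℂ) (pdC j f x) * pdC k f x).im
          + (a j x * pdR k P x) / 2 - (a k x * pdR j P x) / 2) := by
      apply integral_congr_ae
      filter_upwards with x
      rw [hptw x]
    have i12 : Integrable (fun x => ((starRingEnd ℂ) (pdC j f x) * pdC k f x).im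
        + (a j x * pdR k P x) / 2) := hu1.add hu2
    rw [e1, integral_sub i12 hu3, integral_add hu1 hu2, hIm0]
    have e2 : ∫ x, (a j x * pdR k P x) / 2 = (∫ x, a j x * pdR k P x) / 2 := integral_div 2 _
    have e3 : ∫ x, (a k x * pdR j P x) / 2 = (∫ x, a k x * pdR j P x) / 2 := integral_div 2 _
    rw [e2, e3]
    have e4 := hA j k
    have e5 := hA k j
    have e6 : (∫ x, a j x * pdR k P x) = - ∫ x, pdR k (a j) x * P x := by linarith
    have e7 : (∫ x, a k x * pdR j P x) = - ∫ x, pdR j (a k) x * P x := by linarith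
    rw [e6, e7]
    ring
  have hiB1 : Integrable (fun x => pdR k (a j) x * P x) := by
    have hfdac : ContinuousOn (fderiv ℝ (a j)) Ω := (ha j).continuousOn_fderiv_of_isOpen hΩ le_rfl
    have hc1 : Continuous fun x => pdR k (a j) x * P x := by
      apply continuous_glue hΩ (isClosed_tsupport f) hfs
      · exact ((ContinuousLinearMap.apply ℝ ℝ (EuclideanSpace.single k 1)).continuous.comp_continuousOn
          hfdac).mul hPc.continuousOn
      · intro x hx; simp [hzP x hx]
    exact integrable_of_zero_off hfc hc1 (fun x hx => by simp [hzP x hx])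
  have hiB2 : Integrable (fun x => pdR j (a k) x * P x) := by
    have hfdac : ContinuousOn (fderiv ℝ (a k)) Ω := (ha k).continuousOn_fderiv_of_isOpen hΩ le_rfl
    have hc1 : Continuous fun x => pdR j (a k) x * P x := by
      apply continuous_glue hΩ (isClosed_tsupport f) hfs
      · exact ((ContinuousLinearMap.apply ℝ ℝ (EuclideanSpace.single j 1)).continuous.comp_continuousOn
          hfdac).mul hPc.continuousOn
      · intro x hx; simp [hzP x hx]
    exact integrable_of_zero_off hfc hc1 (fun x hx => by simp [hzP x hx])
  have key : ∫ x, Bfield a j k x * P x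
      = ∫ x, (-2 : ℝ) * (((starRingEnd ℂ) (magD a j f x)) * magD a k f x).im := by
    rw [integral_const_mul]
    have e1 : ∫ x, Bfield a j k x * P x
        = (∫ x, pdR k (a j) x * P x) - ∫ x, pdR j (a k) x * P x := by
      rw [← integral_sub hiB1 hiB2]
      apply integral_congr_ae
      filter_upwards with x
      simp [Bfield]
      ring
    rw [e1, hsplit]
    ring
  have hDint : Integrable (fun x => ‖magD a j f x‖ ^ 2 + ‖magD a k f x‖ ^ 2) := by
    apply integrable_of_zero_off hfc (((hmagc j).norm.pow 2).add ((hmagc k).norm.pow 2))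
    intro x hx
    simp [hmagz j x hx, hmagz k x hx]
  calc |∫ x, Bfield a j k x * P x|
      = |∫ x, (-2 : ℝ) * (((starRingEnd ℂ) (magD a j f x)) * magD a k f x).im| := by rw [key]
    _ ≤ ∫ x, |(-2 : ℝ) * (((starRingEnd ℂ) (magD a j f x)) * magD a k f x).im| := by
        have := norm_integral_le_integral_norm
          (f := fun x => (-2 : ℝ) * (((starRingEnd ℂ) (magD a j f x)) * magD a k f x).im)
          (μ := (volume : Measure (EuclideanSpace ℝ (Fin n))))
        simp only [Real.norm_eq_abs] at this
        exact this
    _ ≤ ∫ x, (‖magD a j f x‖ ^ 2 + ‖magD a k f x‖ ^ 2) := by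
        apply integral_mono _ hDint
        · intro x
          exact aux_bound (magD a j f x) (magD a k f x)
        · have hcim : Continuous fun x =>
              (-2 : ℝ) * (((starRingEnd ℂ) (magD a j f x)) * magD a k f x).im :=
            continuous_const.mul (Complex.continuous_im.comp
              ((Complex.conjCLE.continuous.comp (hmagc j)).mul (hmagc k)))
          exact (integrable_of_zero_off hfc hcim
            (fun x hx => by simp [hmagz j x hx, hmagz k x hx])).abs

private lemma selection_sum {n : ℕ} (S : Finset (Fin n × Fin n)) (hS : IsSelection S)
    (c : Fin n → ℝ) :
    ∑ p ∈ S, (c p.1 + c p.2) = ((n : ℝ) - 1) * ∑ j, c j := by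
  classical
  have hswap : ∀ p ∈ S, Prod.swap p ∉ S := by
    intro p hp
    have hne : p.1 ≠ p.2 := hS.1 p hp
    have := (hS.2 p.1 p.2 hne).mp (by simpa using hp)
    simpa [Prod.swap] using this
  have hdisj : Disjoint S (S.image Prod.swap) := by
    rw [Finset.disjoint_left]
    intro p hp hp'
    obtain ⟨q, hq, rfl⟩ := Finset.mem_image.1 hp'
    exact hswap q hq hp
  have hunion : S ∪ S.image Prod.swap = Finset.univ.offDiag := by
    ext p
    simp only [Finset.mem_union, Finset.mem_image, Finset.mem_offDiag, Finset.mem_univ,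
      true_and]
    constructor
    · rintro (hp | ⟨q, hq, rfl⟩)
      · exact hS.1 p hp
      · exact (hS.1 q hq).symm
    · intro hne
      by_cases h : p ∈ S
      · exact Or.inl h
      · refine Or.inr ⟨Prod.swap p, ?_, by simp⟩
        have hp' : (p.1, p.2) ∉ S := by simpa using h
        have : (p.2, p.1) ∈ S := by
          by_contra hcon
          exact hp' ((hS.2 p.1 p.2 hne).mpr hcon)
        simpa [Prod.swap] using this
  have h2 : ∑ p ∈ S, c p.2 = ∑ p ∈ S.image Prod.swap, c p.1 := by
    rw [Finset.sum_image (fun x _ y _ h => Prod.swap_injective h)]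
    simp
  have h3 : ∑ p ∈ S, (c p.1 + c p.2) = ∑ p ∈ Finset.univ.offDiag, c p.1 := by
    rw [Finset.sum_add_distrib, h2, ← Finset.sum_union hdisj, hunion]
  have h4 : ∑ p ∈ (Finset.univ ×ˢ Finset.univ : Finset (Fin n × Fin n)), c p.1
      = ∑ p ∈ Finset.univ.diag, c p.1 + ∑ p ∈ Finset.univ.offDiag, c p.1 := by
    rw [← Finset.sum_union (Finset.disjoint_diag_offDiag _), Finset.diag_union_offDiag]
  have h5 : ∑ p ∈ (Finset.univ ×ˢ Finset.univ : Finset (Fin n × Fin n)), c p.1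
      = (n : ℝ) * ∑ j, c j := by
    rw [Finset.sum_product]
    simp [Finset.sum_const, Finset.card_univ]
    rw [Finset.mul_sum]
  have h6 : ∑ p ∈ Finset.univ.diag, c p.1 = ∑ j, c j := by
    rw [Finset.sum_diag]
  rw [h3]
  rw [h5, h6] at h4
  linarith

end MagAuxPriv

/-- Key commutator estimate for the magnetic uncertainty principle:
`|∫_Ω Σ_S B |f|²| ≤ (n−1) ∫_Ω |D_a f|²` for smooth compactly supported `f`. -/
theorem magnetic_field_commutator_estimate
    (n : ℕ) (hn : 2 ≤ n) (Ω : Set (EuclideanSpace ℝ (Fin n))) (hΩ : IsOpen Ω)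
    (a : Fin n → EuclideanSpace ℝ (Fin n) → ℝ) (ha : ∀ j, ContDiffOn ℝ 1 (a j) Ω)
    (S : Finset (Fin n × Fin n)) (hS : IsSelection S)
    (f : EuclideanSpace ℝ (Fin n) → ℂ) (hf : ContDiff ℝ (⊤ : ℕ∞) f)
    (hfc : HasCompactSupport f) (hfs : tsupport f ⊆ Ω) :
    |∫ x in Ω, (∑ p ∈ S, Bfield a p.1 p.2 x) * ‖f x‖ ^ 2|
      ≤ ((n : ℝ) - 1) * ∫ x in Ω, ∑ k, ‖magD a k f x‖ ^ 2 := by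
  have hfd : Differentiable ℝ f := hf.differentiable (by simp)
  have hf1 : ContDiff ℝ (⊤ : ℕ∞) (fderiv ℝ f) := hf.fderiv_right (by simp)
  have hf1c : Continuous (fderiv ℝ f) := hf1.continuous
  have hpdCc : ∀ i : Fin n, Continuous (pdC i f) := fun i =>
    (ContinuousLinearMap.apply ℝ ℂ (EuclideanSpace.single i 1)).continuous.comp hf1c
  have hzf : ∀ x, x ∉ tsupport f → f x = 0 := fun x hx => image_eq_zero_of_notMem_tsupport hx
  have hzpd : ∀ (i : Fin n) x, x ∉ tsupport f → pdC i f x = 0 := fun i x hx => by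
    simp [pdC, fderiv_zero_of_nmem hx]
  have hmagz : ∀ (i : Fin n) x, x ∉ tsupport f → magD a i f x = 0 := fun i x hx => by
    simp [magD, hzpd i x hx, hzf x hx]
  have hmagc : ∀ i : Fin n, Continuous (magD a i f) := by
    intro i
    apply continuous_glue hΩ (isClosed_tsupport f) hfs
    · exact ((hpdCc i).continuousOn).sub
        ((continuousOn_const.mul
          (Complex.continuous_ofReal.comp_continuousOn (ha i).continuousOn)).mul
          hf.continuous.continuousOn)
    · exact fun x hx => hmagz i x hx
  have hPc : Continuous fun x : EuclideanSpace ℝ (Fin n) => ‖f x‖ ^ 2 :=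
    (hf.continuous.norm.pow 2)
  have hL : ∫ x in Ω, (∑ p ∈ S, Bfield a p.1 p.2 x) * ‖f x‖ ^ 2
      = ∫ x, (∑ p ∈ S, Bfield a p.1 p.2 x) * ‖f x‖ ^ 2 := by
    apply setIntegral_eq_integral_of_forall_compl_eq_zero
    intro x hx
    have : f x = 0 := hzf x (fun h => hx (hfs h))
    simp [this]
  have hR : ∫ x in Ω, ∑ k, ‖magD a k f x‖ ^ 2 = ∫ x, ∑ k, ‖magD a k f x‖ ^ 2 := by
    apply setIntegral_eq_integral_of_forall_compl_eq_zero
    intro x hx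
    have : ∀ i : Fin n, magD a i f x = 0 := fun i => hmagz i x (fun h => hx (hfs h))
    simp [this]
  rw [hL, hR]
  have hint : ∀ p : Fin n × Fin n,
      Integrable (fun x => Bfield a p.1 p.2 x * ‖f x‖ ^ 2) := by
    intro p
    apply integrable_of_zero_off hfc
    · apply continuous_glue hΩ (isClosed_tsupport f) hfs
      · have hB : ContinuousOn (Bfield a p.1 p.2) Ω := by
          apply ContinuousOn.sub
          · exact (ContinuousLinearMap.apply ℝ ℝ
              (EuclideanSpace.single p.2 1)).continuous.comp_continuousOn
              ((ha p.1).continuousOn_fderiv_of_isOpen hΩ le_rfl)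
          · exact (ContinuousLinearMap.apply ℝ ℝ
              (EuclideanSpace.single p.1 1)).continuous.comp_continuousOn
              ((ha p.2).continuousOn_fderiv_of_isOpen hΩ le_rfl)
        exact hB.mul hPc.continuousOn
      · intro x hx
        simp [hzf x hx]
    · intro x hx
      simp [hzf x hx]
  have hDint : ∀ p : Fin n × Fin n,
      Integrable (fun x => ‖magD a p.1 f x‖ ^ 2 + ‖magD a p.2 f x‖ ^ 2) := by
    intro p
    apply integrable_of_zero_off hfc
      (((hmagc p.1).norm.pow 2).add ((hmagc p.2).norm.pow 2))
    intro x hx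
    simp [hmagz p.1 x hx, hmagz p.2 x hx]
  have hsum : (fun x => (∑ p ∈ S, Bfield a p.1 p.2 x) * ‖f x‖ ^ 2)
      = fun x => ∑ p ∈ S, Bfield a p.1 p.2 x * ‖f x‖ ^ 2 :=
    funext fun x => Finset.sum_mul _ _ _
  calc |∫ x, (∑ p ∈ S, Bfield a p.1 p.2 x) * ‖f x‖ ^ 2|
      = |∑ p ∈ S, ∫ x, Bfield a p.1 p.2 x * ‖f x‖ ^ 2| := by
        rw [hsum, integral_finset_sum S (fun p _ => hint p)]
    _ ≤ ∑ p ∈ S, |∫ x, Bfield a p.1 p.2 x * ‖f x‖ ^ 2| :=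
        Finset.abs_sum_le_sum_abs _ _
    _ ≤ ∑ p ∈ S, ∫ x, (‖magD a p.1 f x‖ ^ 2 + ‖magD a p.2 f x‖ ^ 2) :=
        Finset.sum_le_sum fun p _ => pair_estimate hΩ ha hf hfc hfs p.1 p.2
    _ = ∫ x, ∑ p ∈ S, (‖magD a p.1 f x‖ ^ 2 + ‖magD a p.2 f x‖ ^ 2) :=
        (integral_finset_sum S (fun p _ => hDint p)).symm
    _ = ∫ x, ((n : ℝ) - 1) * ∑ k, ‖magD a k f x‖ ^ 2 := by
        apply integral_congr_ae
        filter_upwards with x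
        exact selection_sum S hS (fun i => ‖magD a i f x‖ ^ 2)
    _ = ((n : ℝ) - 1) * ∫ x, ∑ k, ‖magD a k f x‖ ^ 2 := integral_const_mul _ _

end
end

section
/- Let n ≥ 2, let Ω ⊆ ℝⁿ be open, let a = (a₁,…,aₙ) be a C¹ real vector field on Ω, let V : Ω → ℝ be continuous, and let S be a selection of pairs such that Σ_S B(x) ≥ n V₋(x) for all x ∈ Ω, where V₋ = max{0, −V}. Then for every smooth compactly supported ψ : Ω → ℂ, ∫_Ω V₋ |ψ|² ≤ ((n−1)/n) ∫_Ω |D_a ψ|², where |D_a ψ|² = Σ_{k=1}^n |D_{k,a} ψ|². -/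
open MeasureTheory Metric

noncomputable section

namespace MagAux

open Complex

variable {n : ℕ}

lemma fd0 {F : Type*} [NormedAddCommGroup F] [NormedSpace ℝ F]
    {f : EuclideanSpace ℝ (Fin n) → F} {x : EuclideanSpace ℝ (Fin n)}
    (hx : x ∉ tsupport f) : fderiv ℝ f x = 0 :=
  Function.notMem_support.mp fun h => hx (support_fderiv_subset ℝ h)

lemma integrable_aux {F : Type*} [NormedAddCommGroup F] {ψ : EuclideanSpace ℝ (Fin n) → ℂ}
    (hψc : HasCompactSupport ψ) {f : EuclideanSpace ℝ (Fin n) → F} (hc : Continuous f)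
    (h0 : ∀ x, ψ x = 0 → fderiv ℝ ψ x = 0 → f x = 0) :
    Integrable f := by
  refine hc.integrable_of_hasCompactSupport (HasCompactSupport.intro hψc fun x hx => ?_)
  exact h0 x (image_eq_zero_of_notMem_tsupport hx) (fd0 hx)

lemma ibp {𝕜 : Type*} [RCLike 𝕜] (F G : EuclideanSpace ℝ (Fin n) → 𝕜)
    (v : EuclideanSpace ℝ (Fin n))
    (hF : ContDiff ℝ 1 F) (hG : ContDiff ℝ 1 G) (hGc : HasCompactSupport G) :
    ∫ x, F x * fderiv ℝ G x v = - ∫ x, fderiv ℝ F x v * G x := by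
  have cF' : Continuous fun x => fderiv ℝ F x v :=
    (hF.continuous_fderiv one_ne_zero).clm_apply continuous_const
  have cG' : Continuous fun x => fderiv ℝ G x v :=
    (hG.continuous_fderiv one_ne_zero).clm_apply continuous_const
  have hG'c : HasCompactSupport fun x => fderiv ℝ G x v := by
    refine HasCompactSupport.intro hGc fun x hx => ?_
    rw [fd0 hx]; rfl
  apply integral_mul_fderiv_eq_neg_fderiv_mul_of_integrable
  · exact (cF'.mul hG.continuous).integrable_of_hasCompactSupport hGc.mul_left
  · exact (hF.continuous.mul cG').integrable_of_hasCompactSupport hG'c.mul_left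
  · exact (hF.continuous.mul hG.continuous).integrable_of_hasCompactSupport hGc.mul_left
  · exact fun x _ => hF.differentiable one_ne_zero x
  · exact fun x _ => hG.differentiable one_ne_zero x

lemma fderiv_conj_apply (ψ : EuclideanSpace ℝ (Fin n) → ℂ)
    (x v : EuclideanSpace ℝ (Fin n)) :
    fderiv ℝ (fun y => (starRingEnd ℂ) (ψ y)) x v = (starRingEnd ℂ) (fderiv ℝ ψ x v) := by
  show fderiv ℝ (fun y => star (ψ y)) x v = _
  rw [fderiv_star]
  rfl

lemma contDiff_conj {m : ℕ∞} {ψ : EuclideanSpace ℝ (Fin n) → ℂ} (hψ : ContDiff ℝ m ψ) :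
    ContDiff ℝ m fun y => (starRingEnd ℂ) (ψ y) := by
  have h := (((starL' ℝ : ℂ ≃L[ℝ] ℂ) : ℂ →L[ℝ] ℂ).contDiff (n := m)).comp hψ
  exact h

lemma norm_sq_eq_re (z : ℂ) : ‖z‖ ^ 2 = ((starRingEnd ℂ) z * z).re := by
  rw [mul_comm, Complex.mul_conj]
  simp [Complex.normSq_eq_norm_sq, ← Complex.ofReal_pow]

lemma u_eq (ψ : EuclideanSpace ℝ (Fin n) → ℂ) :
    (fun x => ‖ψ x‖ ^ 2) = fun x => ((starRingEnd ℂ) (ψ x) * ψ x).re :=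
  funext fun _ => norm_sq_eq_re _

lemma contDiff_u {m : ℕ∞} {ψ : EuclideanSpace ℝ (Fin n) → ℂ} (hψ : ContDiff ℝ m ψ) :
    ContDiff ℝ m fun x => ‖ψ x‖ ^ 2 := by
  rw [u_eq]
  exact (Complex.reCLM.contDiff (n := m)).comp ((contDiff_conj hψ).mul hψ)

lemma fderiv_u_apply {ψ : EuclideanSpace ℝ (Fin n) → ℂ} (hψ : Differentiable ℝ ψ)
    (x v : EuclideanSpace ℝ (Fin n)) :
    fderiv ℝ (fun y => ‖ψ y‖ ^ 2) x v
      = 2 * ((starRingEnd ℂ) (ψ x) * fderiv ℝ ψ x v).re := by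
  rw [u_eq]
  have h1 : HasFDerivAt ψ (fderiv ℝ ψ x) x := (hψ x).hasFDerivAt
  have h2 : HasFDerivAt (fun y => (starRingEnd ℂ) (ψ y))
      ((((starL' ℝ : ℂ ≃L[ℝ] ℂ) : ℂ →L[ℝ] ℂ)).comp (fderiv ℝ ψ x)) x := h1.star
  have h3 := h2.mul h1
  have h4 := (Complex.reCLM.hasFDerivAt.comp x h3)
  rw [show (fun y => ((starRingEnd ℂ) (ψ y) * ψ y).re)
      = (⇑Complex.reCLM ∘ ((fun y => (starRingEnd ℂ) (ψ y)) * ψ)) from rfl]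
  rw [h4.fderiv]
  have key : ∀ z w : ℂ, ((starRingEnd ℂ) z * w + z * (starRingEnd ℂ) w).re
      = 2 * ((starRingEnd ℂ) z * w).re := by
    intro z w
    simp [Complex.mul_re, Complex.add_re, Complex.conj_re, Complex.conj_im]
    ring
  simpa using key (ψ x) (fderiv ℝ ψ x v)

lemma schwarz {ψ : EuclideanSpace ℝ (Fin n) → ℂ} (hψ : ContDiff ℝ 2 ψ)
    (x v w : EuclideanSpace ℝ (Fin n)) :
    fderiv ℝ (fun y => fderiv ℝ ψ y v) x w = fderiv ℝ (fun y => fderiv ℝ ψ y w) x v := by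
  have hsym : IsSymmSndFDerivAt ℝ ψ x := (hψ.contDiffAt).isSymmSndFDerivAt (by simp [minSmoothness_of_isRCLikeNormedField])
  have hd : DifferentiableAt ℝ (fderiv ℝ ψ) x :=
    ((hψ.fderiv_right (m := 1) le_rfl).differentiable one_ne_zero) x
  have key : ∀ z : EuclideanSpace ℝ (Fin n), fderiv ℝ (fun y => fderiv ℝ ψ y z) x
      = (ContinuousLinearMap.apply ℝ ℂ z).comp (fderiv ℝ (fderiv ℝ ψ) x) := by
    intro z
    exact (((ContinuousLinearMap.apply ℝ ℂ z).hasFDerivAt).comp x hd.hasFDerivAt).fderiv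
  rw [key v, key w]
  simp only [ContinuousLinearMap.comp_apply, ContinuousLinearMap.apply_apply]
  exact hsym w v

lemma integral_complex_im {f : EuclideanSpace ℝ (Fin n) → ℂ} (hf : Integrable f) :
    ∫ x, (f x).im = (∫ x, f x).im := by
  simpa using Complex.imCLM.integral_comp_comm hf

lemma pointwise_id (z p q : ℂ) (A B : ℝ) :
    2 * ((starRingEnd ℂ) (q - Complex.I * B * z) * (p - Complex.I * A * z)).im
      = 2 * ((starRingEnd ℂ) q * p).im
        + B * (2 * ((starRingEnd ℂ) z * p).re) - A * (2 * ((starRingEnd ℂ) z * q).re) := by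
  simp [Complex.mul_im, Complex.mul_re, Complex.sub_re, Complex.sub_im, Complex.conj_re,
    Complex.conj_im, Complex.I_re, Complex.I_im, Complex.ofReal_re, Complex.ofReal_im]
  ring

lemma pointwise_bound (a b : ℂ) : 2 * ((starRingEnd ℂ) a * b).im ≤ ‖b‖ ^ 2 + ‖a‖ ^ 2 := by
  have h1 : (((starRingEnd ℂ) a * b).im) ≤ ‖a‖ * ‖b‖ := by
    calc ((starRingEnd ℂ) a * b).im ≤ |((starRingEnd ℂ) a * b).im| := le_abs_self _
    _ ≤ ‖(starRingEnd ℂ) a * b‖ := Complex.abs_im_le_norm _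
    _ = ‖a‖ * ‖b‖ := by
        rw [norm_mul, RCLike.norm_conj]
  nlinarith [sq_nonneg (‖a‖ - ‖b‖)]
lemma cross {ψ : EuclideanSpace ℝ (Fin n) → ℂ} (hψ : ContDiff ℝ 2 ψ)
    (hψc : HasCompactSupport ψ) (v w : EuclideanSpace ℝ (Fin n)) :
    ∫ x, (starRingEnd ℂ) (fderiv ℝ ψ x w) * fderiv ℝ ψ x v
      = ∫ x, (starRingEnd ℂ) (fderiv ℝ ψ x v) * fderiv ℝ ψ x w := by
  have hP : ∀ z, ContDiff ℝ 1 (fun x => fderiv ℝ ψ x z) :=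
    fun z => (hψ.fderiv_right (m := 1) le_rfl).clm_apply contDiff_const
  have hCP : ∀ z, ContDiff ℝ 1 (fun x => (starRingEnd ℂ) (fderiv ℝ ψ x z)) :=
    fun z => contDiff_conj (hP z)
  have h1 := ibp (fun x => (starRingEnd ℂ) (fderiv ℝ ψ x w)) ψ v (hCP w)
    (hψ.of_le one_le_two) hψc
  have h2 := ibp (fun x => (starRingEnd ℂ) (fderiv ℝ ψ x v)) ψ w (hCP v)
    (hψ.of_le one_le_two) hψc
  rw [h1, h2]
  congr 1
  apply integral_congr_ae
  filter_upwards with x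
  rw [fderiv_conj_apply, fderiv_conj_apply, schwarz hψ x w v]

lemma selection_sum {S : Finset (Fin n × Fin n)} (hS : IsSelection S) (c : Fin n → ℝ) :
    ∑ p ∈ S, (c p.1 + c p.2) = ((n : ℝ) - 1) * ∑ m, c m := by
  classical
  have hswapmem : ∀ p : Fin n × Fin n, p ∈ S.image Prod.swap ↔ p.swap ∈ S := by
    intro p
    simp only [Finset.mem_image]
    constructor
    · rintro ⟨q, hq, rfl⟩; simpa using hq
    · intro h; exact ⟨p.swap, h, by simp⟩
  have hunion : S ∪ S.image Prod.swap = Finset.univ.offDiag := by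
    ext p
    simp only [Finset.mem_union, hswapmem, Finset.mem_offDiag, Finset.mem_univ, true_and]
    constructor
    · rintro (h | h)
      · exact hS.1 p h
      · exact fun hpq => hS.1 p.swap h (by simpa using hpq.symm)
    · intro hp
      by_cases h : p ∈ S
      · exact Or.inl h
      · right
        have := (hS.2 p.2 p.1 (Ne.symm hp))
        have h' : (p.1, p.2) ∉ S := by simpa using h
        exact this.mpr (by simpa using h')
  have hdisj : Disjoint S (S.image Prod.swap) := by
    rw [Finset.disjoint_left]
    intro p hp hp'
    rw [hswapmem] at hp'
    have hne : p.1 ≠ p.2 := hS.1 p hp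
    have := (hS.2 p.1 p.2 hne).mp (by simpa using hp)
    exact this hp'
  have h2 : ∑ p ∈ S.image Prod.swap, c p.1 = ∑ p ∈ S, c p.2 := by
    rw [Finset.sum_image (fun q _ r _ hqr => Prod.swap_injective hqr)]
    rfl
  have h3 : ∑ p ∈ Finset.univ.offDiag, c p.1
      = ∑ p ∈ S, (c p.1 + c p.2) := by
    rw [← hunion, Finset.sum_union hdisj, h2, Finset.sum_add_distrib]
  have h4 : ∑ p ∈ (Finset.univ ×ˢ Finset.univ : Finset (Fin n × Fin n)), c p.1
      = (n : ℝ) * ∑ m, c m := by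
    rw [Finset.sum_product]
    simp [Finset.sum_const, Finset.card_univ, Finset.mul_sum]
  have h5 : ∑ p ∈ (Finset.univ : Finset (Fin n)).diag, c p.1 = ∑ m, c m := by
    rw [Finset.sum_diag]
  have h6 : ∑ p ∈ (Finset.univ ×ˢ Finset.univ : Finset (Fin n × Fin n)), c p.1
      = ∑ m, c m + ∑ p ∈ Finset.univ.offDiag, c p.1 := by
    rw [← Finset.diag_union_offDiag, Finset.sum_union (Finset.disjoint_diag_offDiag _), h5]
  rw [← h3]
  have := h4.symm.trans h6
  linarith [this]

theorem keyPair (α : Fin n → EuclideanSpace ℝ (Fin n) → ℝ) (hα : ∀ m, ContDiff ℝ 1 (α m))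
    {ψ : EuclideanSpace ℝ (Fin n) → ℂ} (hψ : ContDiff ℝ 2 ψ) (hψc : HasCompactSupport ψ)
    (j k : Fin n) :
    ∫ x, Bfield α j k x * ‖ψ x‖ ^ 2
      ≤ ∫ x, (‖magD α j ψ x‖ ^ 2 + ‖magD α k ψ x‖ ^ 2) := by
  have hψ1 : ContDiff ℝ 1 ψ := hψ.of_le one_le_two
  have hψd : Differentiable ℝ ψ := hψ1.differentiable one_ne_zero
  have hP : ∀ z, ContDiff ℝ 1 (fun x => fderiv ℝ ψ x z) :=
    fun z => (hψ.fderiv_right (m := 1) le_rfl).clm_apply contDiff_const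
  have hPc : ∀ z, Continuous (fun x => fderiv ℝ ψ x z) := fun z => (hP z).continuous
  have hu1 : ContDiff ℝ 1 (fun x => ‖ψ x‖ ^ 2) := contDiff_u hψ1
  have hucs : HasCompactSupport (fun x => ‖ψ x‖ ^ 2) :=
    hψc.comp_left (g := fun z : ℂ => ‖z‖ ^ 2) (by simp)
  have hu'c : ∀ z, Continuous fun x => fderiv ℝ (fun y => ‖ψ y‖ ^ 2) x z :=
    fun z => (hu1.continuous_fderiv one_ne_zero).clm_apply continuous_const
  have hαc : ∀ m, Continuous (α m) := fun m => (hα m).continuous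
  have hα'c : ∀ m z, Continuous fun x => fderiv ℝ (α m) x z :=
    fun m z => ((hα m).continuous_fderiv one_ne_zero).clm_apply continuous_const
  have hmag0 : ∀ m x, ψ x = 0 → fderiv ℝ ψ x = 0 → magD α m ψ x = 0 := by
    intro m x h1 h2
    simp [magD, pdC, h1, h2]
  have hmagc : ∀ m, Continuous (magD α m ψ) := by
    intro m
    exact ((hPc _).sub ((continuous_const.mul
      (Complex.continuous_ofReal.comp (hαc m))).mul hψ1.continuous) : _)
  -- integrabilities
  have i1 : Integrable fun x => fderiv ℝ (α j) x (EuclideanSpace.single k 1) * ‖ψ x‖ ^ 2 := by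
    refine integrable_aux hψc ((hα'c j _).mul hu1.continuous) fun x h1 h2 => by simp [h1]
  have i2 : Integrable fun x => fderiv ℝ (α k) x (EuclideanSpace.single j 1) * ‖ψ x‖ ^ 2 := by
    refine integrable_aux hψc ((hα'c k _).mul hu1.continuous) fun x h1 h2 => by simp [h1]
  have hu'0 : ∀ x, ψ x = 0 → fderiv ℝ ψ x = 0 →
      ∀ z, fderiv ℝ (fun y => ‖ψ y‖ ^ 2) x z = 0 := by
    intro x h1 h2 z
    rw [fderiv_u_apply hψd, h2]
    simp
  have i3 : Integrable fun x => α j x * fderiv ℝ (fun y => ‖ψ y‖ ^ 2) x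
      (EuclideanSpace.single k 1) := by
    refine integrable_aux hψc ((hαc j).mul (hu'c _)) fun x h1 h2 => by
      rw [hu'0 x h1 h2]; simp
  have i4 : Integrable fun x => α k x * fderiv ℝ (fun y => ‖ψ y‖ ^ 2) x
      (EuclideanSpace.single j 1) := by
    refine integrable_aux hψc ((hαc k).mul (hu'c _)) fun x h1 h2 => by
      rw [hu'0 x h1 h2]; simp
  have i5 : Integrable fun x => (starRingEnd ℂ) (fderiv ℝ ψ x (EuclideanSpace.single k 1))
      * fderiv ℝ ψ x (EuclideanSpace.single j 1) := by
    refine integrable_aux hψc ((Complex.continuous_conj.comp (hPc _)).mul (hPc _))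
      fun x h1 h2 => by rw [h2]; simp
  have i8 : Integrable fun x => ((starRingEnd ℂ) (fderiv ℝ ψ x (EuclideanSpace.single k 1))
      * fderiv ℝ ψ x (EuclideanSpace.single j 1)).im :=
    i5.im
  have i6 : Integrable fun x =>
      2 * ((starRingEnd ℂ) (magD α k ψ x) * magD α j ψ x).im := by
    refine integrable_aux hψc (continuous_const.mul (Complex.continuous_im.comp
      ((Complex.continuous_conj.comp (hmagc k)).mul (hmagc j)))) fun x h1 h2 => by
      rw [hmag0 k x h1 h2, hmag0 j x h1 h2]
      simp
  have i7 : Integrable fun x => ‖magD α j ψ x‖ ^ 2 + ‖magD α k ψ x‖ ^ 2 := by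
    refine integrable_aux hψc (((hmagc j).norm.pow 2).add ((hmagc k).norm.pow 2))
      fun x h1 h2 => by
      rw [hmag0 j x h1 h2, hmag0 k x h1 h2]
      simp
  -- integration by parts
  have E1 : ∫ x, fderiv ℝ (α j) x (EuclideanSpace.single k 1) * ‖ψ x‖ ^ 2
      = - ∫ x, α j x * fderiv ℝ (fun y => ‖ψ y‖ ^ 2) x (EuclideanSpace.single k 1) := by
    have h := ibp (α j) (fun y => ‖ψ y‖ ^ 2) (EuclideanSpace.single k 1) (hα j) hu1 hucs
    linarith
  have E2 : ∫ x, fderiv ℝ (α k) x (EuclideanSpace.single j 1) * ‖ψ x‖ ^ 2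
      = - ∫ x, α k x * fderiv ℝ (fun y => ‖ψ y‖ ^ 2) x (EuclideanSpace.single j 1) := by
    have h := ibp (α k) (fun y => ‖ψ y‖ ^ 2) (EuclideanSpace.single j 1) (hα k) hu1 hucs
    linarith
  -- the cross term is real
  have E3 : ∫ x, ((starRingEnd ℂ) (fderiv ℝ ψ x (EuclideanSpace.single k 1))
      * fderiv ℝ ψ x (EuclideanSpace.single j 1)).im = 0 := by
    have hZ := cross hψ hψc (EuclideanSpace.single j 1) (EuclideanSpace.single k 1)
    have hconj : (starRingEnd ℂ) (∫ x, (starRingEnd ℂ)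
          (fderiv ℝ ψ x (EuclideanSpace.single k 1))
          * fderiv ℝ ψ x (EuclideanSpace.single j 1))
        = ∫ x, (starRingEnd ℂ) (fderiv ℝ ψ x (EuclideanSpace.single k 1))
          * fderiv ℝ ψ x (EuclideanSpace.single j 1) := by
      rw [← integral_conj]
      simp only [map_mul, Complex.conj_conj]
      rw [hZ]
      apply integral_congr_ae
      filter_upwards with x
      ring
    have him := Complex.conj_eq_iff_im.mp hconj
    rw [integral_complex_im i5, him]
  -- pointwise identity under the integral
  have E4 : ∫ x, 2 * ((starRingEnd ℂ) (magD α k ψ x) * magD α j ψ x).im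
      = ∫ x, (2 * ((starRingEnd ℂ) (fderiv ℝ ψ x (EuclideanSpace.single k 1))
            * fderiv ℝ ψ x (EuclideanSpace.single j 1)).im
          + α k x * fderiv ℝ (fun y => ‖ψ y‖ ^ 2) x (EuclideanSpace.single j 1)
          - α j x * fderiv ℝ (fun y => ‖ψ y‖ ^ 2) x (EuclideanSpace.single k 1)) := by
    apply integral_congr_ae
    filter_upwards with x
    rw [fderiv_u_apply hψd x (EuclideanSpace.single j 1),
      fderiv_u_apply hψd x (EuclideanSpace.single k 1)]
    have := pointwise_id (ψ x) (fderiv ℝ ψ x (EuclideanSpace.single j 1))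
      (fderiv ℝ ψ x (EuclideanSpace.single k 1)) (α j x) (α k x)
    simpa [magD, pdC] using this
  have i6' : Integrable fun x => 2 * ((starRingEnd ℂ)
      (fderiv ℝ ψ x (EuclideanSpace.single k 1))
      * fderiv ℝ ψ x (EuclideanSpace.single j 1)).im := i8.const_mul 2
  have E5 : ∫ x, 2 * ((starRingEnd ℂ) (magD α k ψ x) * magD α j ψ x).im
      = 2 * (∫ x, ((starRingEnd ℂ) (fderiv ℝ ψ x (EuclideanSpace.single k 1))
            * fderiv ℝ ψ x (EuclideanSpace.single j 1)).im)
        + (∫ x, α k x * fderiv ℝ (fun y => ‖ψ y‖ ^ 2) x (EuclideanSpace.single j 1))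
        - (∫ x, α j x * fderiv ℝ (fun y => ‖ψ y‖ ^ 2) x (EuclideanSpace.single k 1)) := by
    have iAB : Integrable fun x => 2 * ((starRingEnd ℂ)
        (fderiv ℝ ψ x (EuclideanSpace.single k 1))
        * fderiv ℝ ψ x (EuclideanSpace.single j 1)).im
        + α k x * fderiv ℝ (fun y => ‖ψ y‖ ^ 2) x (EuclideanSpace.single j 1) := i6'.add i4
    rw [E4, integral_sub iAB i3, integral_add i6' i4, MeasureTheory.integral_const_mul]
  have E6 : ∫ x, 2 * ((starRingEnd ℂ) (magD α k ψ x) * magD α j ψ x).im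
      ≤ ∫ x, (‖magD α j ψ x‖ ^ 2 + ‖magD α k ψ x‖ ^ 2) := by
    refine integral_mono i6 i7 fun x => ?_
    exact pointwise_bound (magD α k ψ x) (magD α j ψ x)
  have E0 : ∫ x, Bfield α j k x * ‖ψ x‖ ^ 2
      = (∫ x, fderiv ℝ (α j) x (EuclideanSpace.single k 1) * ‖ψ x‖ ^ 2)
        - (∫ x, fderiv ℝ (α k) x (EuclideanSpace.single j 1) * ‖ψ x‖ ^ 2) := by
    have h : (fun x => Bfield α j k x * ‖ψ x‖ ^ 2)
        = fun x => (fderiv ℝ (α j) x (EuclideanSpace.single k 1) * ‖ψ x‖ ^ 2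
          - fderiv ℝ (α k) x (EuclideanSpace.single j 1) * ‖ψ x‖ ^ 2) :=
      funext fun x => by simp [Bfield, pdR, sub_mul]
    rw [h, integral_sub i1 i2]
  linarith [E0, E1, E2, E3, E5, E6]

end MagAux

open Manifold MagAux

/-- If `Σ_S B ≥ n V₋` on `Ω`, then the negative part of the potential is controlled
by the magnetic energy: `∫_Ω V₋ |ψ|² ≤ ((n−1)/n) ∫_Ω |D_a ψ|²` for smooth compactly
supported `ψ`. -/
theorem negative_part_controlled_by_magnetic_energy
    (n : ℕ) (hn : 2 ≤ n) (Ω : Set (EuclideanSpace ℝ (Fin n))) (hΩ : IsOpen Ω)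
    (a : Fin n → EuclideanSpace ℝ (Fin n) → ℝ) (ha : ∀ j, ContDiffOn ℝ 1 (a j) Ω)
    (V : EuclideanSpace ℝ (Fin n) → ℝ) (hV : ContinuousOn V Ω)
    (S : Finset (Fin n × Fin n)) (hS : IsSelection S)
    (hSB : ∀ x ∈ Ω, (n : ℝ) * max 0 (-V x) ≤ ∑ p ∈ S, Bfield a p.1 p.2 x) :
    ∀ ψ : EuclideanSpace ℝ (Fin n) → ℂ, ContDiff ℝ (⊤ : ℕ∞) ψ → HasCompactSupport ψ →
      tsupport ψ ⊆ Ω →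
      ∫ x in Ω, max 0 (-V x) * ‖ψ x‖ ^ 2
        ≤ (((n : ℝ) - 1) / n) * ∫ x in Ω, ∑ k, ‖magD a k ψ x‖ ^ 2 := by
  intro ψ hψtop hψc hsupp
  classical
  have hψ2 : ContDiff ℝ 2 ψ := hψtop.of_le (WithTop.coe_le_coe.mpr (le_top : (2 : ℕ∞) ≤ ⊤))
  have hψ1 : ContDiff ℝ 1 ψ := hψtop.of_le (by simp)
  -- cutoff function
  obtain ⟨ε, hε, hεΩ⟩ := hψc.exists_cthickening_subset_open hΩ hsupp
  have hdisj : Disjoint ((thickening ε (tsupport ψ))ᶜ) (cthickening (ε/2) (tsupport ψ)) := by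
    rw [Set.disjoint_left]
    intro x hx hx2
    exact hx (cthickening_subset_thickening' hε (by linarith) _ hx2)
  obtain ⟨χ, hχ0, hχ1, hχ01⟩ :=
    exists_contMDiffMap_zero_one_of_isClosed 𝓘(ℝ, EuclideanSpace ℝ (Fin n))
      (isOpen_thickening.isClosed_compl) isClosed_cthickening hdisj
  have hχsm : ContDiff ℝ 2 (χ : EuclideanSpace ℝ (Fin n) → ℝ) := by
    have h := contMDiff_iff_contDiff.mp χ.contMDiff
    have h2 : ((2 : ℕ∞) : WithTop ℕ∞) ≤ ((⊤ : ℕ∞) : WithTop ℕ∞) := by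
      exact_mod_cast (le_top : (2 : ℕ∞) ≤ ⊤)
    exact h.of_le h2
  set U : Set (EuclideanSpace ℝ (Fin n)) := thickening (ε/2) (tsupport ψ) with hUdef
  have hUopen : IsOpen U := isOpen_thickening
  have hKU : tsupport ψ ⊆ U := self_subset_thickening (by linarith) _
  have hχ1U : ∀ x ∈ U, χ x = 1 := fun x hx => hχ1 (thickening_subset_cthickening _ _ hx)
  -- the modified vector potential
  set A : Fin n → EuclideanSpace ℝ (Fin n) → ℝ := fun m x => χ x * a m x with hAdef
  have hAsm : ∀ m, ContDiff ℝ 1 (A m) := by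
    intro m
    rw [← contDiffOn_univ]
    apply contDiffOn_of_locally_contDiffOn
    intro x _
    by_cases hx : x ∈ Ω
    · exact ⟨Ω, hΩ, hx, (((hχsm.of_le one_le_two).contDiffOn).mono Set.inter_subset_right).mul
        ((ha m).mono Set.inter_subset_right)⟩
    · refine ⟨(cthickening ε (tsupport ψ))ᶜ, isClosed_cthickening.isOpen_compl,
        fun h => hx (hεΩ h), ?_⟩
      apply (contDiffOn_const (c := 0)).congr
      intro y hy
      have hy0 : χ y = 0 := hχ0 fun hth => hy.2 (thickening_subset_cthickening _ _ hth)
      simp [hAdef, hy0]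
  have hAeqU : ∀ m, ∀ x ∈ U, A m x = a m x := fun m x hx => by
    simp [hAdef, hχ1U x hx]
  have hderU : ∀ m x, x ∈ U → fderiv ℝ (A m) x = fderiv ℝ (a m) x := by
    intro m x hx
    apply Filter.EventuallyEq.fderiv_eq
    filter_upwards [hUopen.mem_nhds hx] with y hy
    exact hAeqU m y hy
  have hmageq : ∀ m x, magD A m ψ x = magD a m ψ x := by
    intro m x
    by_cases hx : x ∈ U
    · simp [magD, hAeqU m x hx]
    · have h1 : ψ x = 0 := image_eq_zero_of_notMem_tsupport fun h => hx (hKU h)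
      have h2 : fderiv ℝ ψ x = 0 := MagAux.fd0 fun h => hx (hKU h)
      simp [magD, pdC, h1, h2]
  have hBeq : ∀ (p : Fin n × Fin n) x, x ∈ U → Bfield A p.1 p.2 x = Bfield a p.1 p.2 x := by
    intro p x hx
    simp [Bfield, pdR, hderU _ x hx]
  -- continuity and integrability helpers
  have hu1 : ContDiff ℝ 1 (fun x => ‖ψ x‖ ^ 2) := MagAux.contDiff_u hψ1
  have hBAc : ∀ p : Fin n × Fin n, Continuous fun x => Bfield A p.1 p.2 x := by
    intro p
    exact ((((hAsm p.1).continuous_fderiv one_ne_zero).clm_apply continuous_const).sub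
      (((hAsm p.2).continuous_fderiv one_ne_zero).clm_apply continuous_const) : _)
  have iBp : ∀ p : Fin n × Fin n, Integrable fun x => Bfield A p.1 p.2 x * ‖ψ x‖ ^ 2 :=
    fun p => MagAux.integrable_aux hψc ((hBAc p).mul hu1.continuous)
      (fun x h1 _ => by simp [h1])
  have iBsum : Integrable fun x => (∑ p ∈ S, Bfield A p.1 p.2 x) * ‖ψ x‖ ^ 2 := by
    rw [show (fun x => (∑ p ∈ S, Bfield A p.1 p.2 x) * ‖ψ x‖ ^ 2)
        = fun x => ∑ p ∈ S, Bfield A p.1 p.2 x * ‖ψ x‖ ^ 2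
      from funext fun x => Finset.sum_mul _ _ _]
    exact integrable_finset_sum _ fun p _ => iBp p
  have hPc : ∀ z, Continuous fun x => fderiv ℝ ψ x z :=
    fun z => ((hψ2.fderiv_right (m := 1) le_rfl).clm_apply contDiff_const).continuous
  have hmagAc : ∀ m, Continuous (magD A m ψ) := fun m =>
    ((hPc _).sub ((continuous_const.mul
      (Complex.continuous_ofReal.comp (hAsm m).continuous)).mul hψ1.continuous) : _)
  have imag2 : ∀ m, Integrable fun x => ‖magD A m ψ x‖ ^ 2 := fun m =>
    MagAux.integrable_aux hψc ((hmagAc m).norm.pow 2)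
      (fun x h1 h2 => by simp [magD, pdC, h1, h2])
  have hmeasΩ : MeasurableSet Ω := hΩ.measurableSet
  -- integrability of the potential term on Ω
  have intL : IntegrableOn (fun x => max 0 (-V x) * ‖ψ x‖ ^ 2) Ω := by
    have hcont : ContinuousOn (fun x => max 0 (-V x) * ‖ψ x‖ ^ 2) (tsupport ψ) :=
      ((continuous_const.max continuous_id.neg).comp_continuousOn (hV.mono hsupp)).mul
        hu1.continuous.continuousOn
    have h1 : IntegrableOn (fun x => max 0 (-V x) * ‖ψ x‖ ^ 2) (tsupport ψ) :=
      hcont.integrableOn_compact hψc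
    have h2 : IntegrableOn (fun x => max 0 (-V x) * ‖ψ x‖ ^ 2) (Ω \ tsupport ψ) := by
      apply (integrableOn_zero (ε' := ℝ)).congr_fun ?_
        (hmeasΩ.diff (isClosed_tsupport ψ).measurableSet)
      intro x hx
      simp [image_eq_zero_of_notMem_tsupport hx.2]
    exact (h1.union h2).mono_set fun x hx => by
      by_cases h : x ∈ tsupport ψ
      · exact Set.mem_union_left _ h
      · exact Set.mem_union_right _ ⟨hx, h⟩
  -- Claim 1
  have claim1 : (n : ℝ) * (∫ x in Ω, max 0 (-V x) * ‖ψ x‖ ^ 2)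
      ≤ ∫ x, (∑ p ∈ S, Bfield A p.1 p.2 x) * ‖ψ x‖ ^ 2 := by
    rw [← MeasureTheory.integral_const_mul]
    have step : ∫ x in Ω, (n : ℝ) * (max 0 (-V x) * ‖ψ x‖ ^ 2)
        ≤ ∫ x in Ω, (∑ p ∈ S, Bfield A p.1 p.2 x) * ‖ψ x‖ ^ 2 := by
      apply setIntegral_mono_on (intL.const_mul _) iBsum.integrableOn hmeasΩ
      intro x hx
      by_cases hxK : x ∈ tsupport ψ
      · have hxU : x ∈ U := hKU hxK
        have hsum : (∑ p ∈ S, Bfield A p.1 p.2 x) = ∑ p ∈ S, Bfield a p.1 p.2 x :=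
          Finset.sum_congr rfl fun p _ => hBeq p x hxU
        rw [← mul_assoc, hsum]
        exact mul_le_mul_of_nonneg_right (hSB x hx) (by positivity)
      · simp [image_eq_zero_of_notMem_tsupport hxK]
    refine step.trans (le_of_eq ?_)
    exact setIntegral_eq_integral_of_forall_compl_eq_zero fun x hx => by
      simp [image_eq_zero_of_notMem_tsupport (fun h => hx (hsupp h))]
  -- Claim 2
  have claim2 : ∫ x, (∑ p ∈ S, Bfield A p.1 p.2 x) * ‖ψ x‖ ^ 2
      ≤ ((n : ℝ) - 1) * ∫ x, ∑ m, ‖magD A m ψ x‖ ^ 2 := by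
    have hsplit : ∫ x, (∑ p ∈ S, Bfield A p.1 p.2 x) * ‖ψ x‖ ^ 2
        = ∑ p ∈ S, ∫ x, Bfield A p.1 p.2 x * ‖ψ x‖ ^ 2 := by
      rw [show (fun x => (∑ p ∈ S, Bfield A p.1 p.2 x) * ‖ψ x‖ ^ 2)
          = fun x => ∑ p ∈ S, Bfield A p.1 p.2 x * ‖ψ x‖ ^ 2
        from funext fun x => Finset.sum_mul _ _ _]
      exact integral_finset_sum _ fun p _ => iBp p
    have hpair : ∀ p ∈ S, ∫ x, Bfield A p.1 p.2 x * ‖ψ x‖ ^ 2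
        ≤ (∫ x, ‖magD A p.1 ψ x‖ ^ 2) + ∫ x, ‖magD A p.2 ψ x‖ ^ 2 := by
      intro p _
      refine (MagAux.keyPair A hAsm hψ2 hψc p.1 p.2).trans (le_of_eq ?_)
      exact integral_add (imag2 p.1) (imag2 p.2)
    have hsum := Finset.sum_le_sum hpair
    have hcount := MagAux.selection_sum hS fun m => ∫ x, ‖magD A m ψ x‖ ^ 2
    have htot : ∑ m, ∫ x, ‖magD A m ψ x‖ ^ 2 = ∫ x, ∑ m, ‖magD A m ψ x‖ ^ 2 :=
      (integral_finset_sum _ fun m _ => imag2 m).symm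
    calc ∫ x, (∑ p ∈ S, Bfield A p.1 p.2 x) * ‖ψ x‖ ^ 2
        = ∑ p ∈ S, ∫ x, Bfield A p.1 p.2 x * ‖ψ x‖ ^ 2 := hsplit
      _ ≤ ∑ p ∈ S, ((∫ x, ‖magD A p.1 ψ x‖ ^ 2) + ∫ x, ‖magD A p.2 ψ x‖ ^ 2) := hsum
      _ = ((n : ℝ) - 1) * ∑ m, ∫ x, ‖magD A m ψ x‖ ^ 2 := hcount
      _ = ((n : ℝ) - 1) * ∫ x, ∑ m, ‖magD A m ψ x‖ ^ 2 := by rw [htot]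
  -- Claim 3
  have claim3 : ∫ x, ∑ m, ‖magD A m ψ x‖ ^ 2 = ∫ x in Ω, ∑ m, ‖magD a m ψ x‖ ^ 2 := by
    have h1 : (fun x => ∑ m, ‖magD A m ψ x‖ ^ 2) = fun x => ∑ m, ‖magD a m ψ x‖ ^ 2 :=
      funext fun x => Finset.sum_congr rfl fun m _ => by rw [hmageq m x]
    rw [h1]
    refine (setIntegral_eq_integral_of_forall_compl_eq_zero fun x hx => ?_).symm
    have hxK : x ∉ tsupport ψ := fun h => hx (hsupp h)
    simp [magD, pdC, image_eq_zero_of_notMem_tsupport hxK, MagAux.fd0 hxK]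
  -- conclusion
  have hn0 : (0 : ℝ) < n := by
    have : 0 < n := by omega
    exact_mod_cast this
  rw [div_mul_eq_mul_div, le_div_iff₀ hn0]
  calc (∫ x in Ω, max 0 (-V x) * ‖ψ x‖ ^ 2) * n
      = (n : ℝ) * ∫ x in Ω, max 0 (-V x) * ‖ψ x‖ ^ 2 := mul_comm _ _
    _ ≤ ∫ x, (∑ p ∈ S, Bfield A p.1 p.2 x) * ‖ψ x‖ ^ 2 := claim1
    _ ≤ ((n : ℝ) - 1) * ∫ x, ∑ m, ‖magD A m ψ x‖ ^ 2 := claim2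
    _ = ((n : ℝ) - 1) * ∫ x in Ω, ∑ m, ‖magD a m ψ x‖ ^ 2 := by rw [claim3]
end
end

section
/- Pointwise diamagnetic inequality: let f : ℝⁿ → ℂ be differentiable at a point x with f(x) ≠ 0, and let a ∈ ℝⁿ. Then the function |f| is differentiable at x, its gradient is ∇|f|(x) = Re( \overline{f(x)} ∇f(x) ) / |f(x)|, and |∇|f|(x)| ≤ ( Σ_{j=1}^n |∂_j f(x) − i a_j f(x)|² )^{1/2}; that is, |∇|f|| ≤ |D_a f| at x. -/
open MeasureTheory Metric

noncomputable section

open ComplexConjugate in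
lemma norm_fderiv_formula {E : Type*} [NormedAddCommGroup E] [NormedSpace ℝ E]
    {f : E → ℂ} {x : E} (hf : DifferentiableAt ℝ f x) (h0 : f x ≠ 0) :
    DifferentiableAt ℝ (fun y => ‖f y‖) x ∧
      ∀ v, fderiv ℝ (fun y => ‖f y‖) x v
          = (conj (f x) * fderiv ℝ f x v).re / ‖f x‖ := by
  have hinner : HasFDerivAt (fun y => (inner ℝ (f y) (f y) : ℝ))
      ((fderivInnerCLM ℝ (f x, f x)).comp ((fderiv ℝ f x).prod (fderiv ℝ f x))) x :=
    hf.hasFDerivAt.inner ℝ hf.hasFDerivAt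
  have hne : (inner ℝ (f x) (f x) : ℝ) ≠ 0 := by
    rw [real_inner_self_eq_norm_sq]
    exact pow_ne_zero 2 (norm_ne_zero_iff.mpr h0)
  have hsqrt := hinner.sqrt hne
  have heq : (fun y => Real.sqrt (inner ℝ (f y) (f y) : ℝ)) = fun y => ‖f y‖ := by
    funext y
    rw [real_inner_self_eq_norm_sq, Real.sqrt_sq (norm_nonneg _)]
  rw [heq] at hsqrt
  refine ⟨hsqrt.differentiableAt, fun v => ?_⟩
  rw [hsqrt.fderiv]
  have h1 : Real.sqrt (inner ℝ (f x) (f x) : ℝ) = ‖f x‖ := by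
    rw [real_inner_self_eq_norm_sq, Real.sqrt_sq (norm_nonneg _)]
  have h2 : (inner ℝ (f x) (fderiv ℝ f x v) : ℝ) = (conj (f x) * fderiv ℝ f x v).re :=
    by rw [Complex.inner, mul_comm]
  simp only [ContinuousLinearMap.smul_apply, ContinuousLinearMap.comp_apply,
    ContinuousLinearMap.prod_apply, fderivInnerCLM_apply, h1, smul_eq_mul]
  have h3 : (inner ℝ ((fderiv ℝ f x) v) (f x) : ℝ) = (conj (f x) * fderiv ℝ f x v).re := by
    rw [real_inner_comm]; exact h2
  rw [h3, h2]
  have hx : ‖f x‖ ≠ 0 := norm_ne_zero_iff.mpr h0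
  field_simp
  ring

/-- Pointwise diamagnetic inequality: if `f : ℝⁿ → ℂ` is differentiable at `x` and
`f x ≠ 0`, then `|f|` is differentiable at `x`, its gradient is
`Re(conj(f x) ∇f(x))/|f x|`, and `|∇|f|(x)| ≤ |D_a f(x)|` for any constant vector
`a ∈ ℝⁿ`. -/
theorem pointwise_diamagnetic_inequality
    (n : ℕ) (f : EuclideanSpace ℝ (Fin n) → ℂ) (x : EuclideanSpace ℝ (Fin n))
    (hf : DifferentiableAt ℝ f x) (hfx : f x ≠ 0) (a : Fin n → ℝ) :
    DifferentiableAt ℝ (fun y => ‖f y‖) x ∧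
    (∀ j : Fin n,
      fderiv ℝ (fun y => ‖f y‖) x (EuclideanSpace.single j 1)
        = ((starRingEnd ℂ) (f x) * fderiv ℝ f x (EuclideanSpace.single j 1)).re / ‖f x‖) ∧
    Real.sqrt (∑ j, (fderiv ℝ (fun y => ‖f y‖) x (EuclideanSpace.single j 1)) ^ 2)
      ≤ Real.sqrt
          (∑ j, ‖fderiv ℝ f x (EuclideanSpace.single j 1) - Complex.I * (a j : ℂ) * f x‖ ^ 2) := by
  obtain ⟨hd, hform⟩ := norm_fderiv_formula hf hfx
  refine ⟨hd, fun j => hform _, ?_⟩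
  apply Real.sqrt_le_sqrt
  apply Finset.sum_le_sum
  intro j _
  rw [hform]
  set z := f x
  set d := fderiv ℝ f x (EuclideanSpace.single j 1)
  set w := d - Complex.I * (a j : ℂ) * z with hw
  have hz : ‖z‖ ≠ 0 := norm_ne_zero_iff.mpr hfx
  have hre : ((starRingEnd ℂ) z * d).re = ((starRingEnd ℂ) z * w).re := by
    have : (starRingEnd ℂ) z * d = (starRingEnd ℂ) z * w
        + Complex.I * (a j : ℂ) * ((starRingEnd ℂ) z * z) := by
      rw [hw]; ring
    rw [this, Complex.add_re]
    have hzz : (starRingEnd ℂ) z * z = ((Complex.normSq z : ℝ) : ℂ) := by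
      rw [Complex.normSq_eq_conj_mul_self]
    rw [hzz]
    simp [Complex.mul_re]
  have hb : |((starRingEnd ℂ) z * w).re| ≤ ‖z‖ * ‖w‖ := by
    calc |((starRingEnd ℂ) z * w).re| ≤ ‖(starRingEnd ℂ) z * w‖ := Complex.abs_re_le_norm _
    _ = ‖z‖ * ‖w‖ := by rw [norm_mul, RCLike.norm_conj]
  have hzpos : 0 < ‖z‖ := lt_of_le_of_ne (norm_nonneg _) (Ne.symm hz)
  rw [hre, div_pow, div_le_iff₀ (by positivity : (0:ℝ) < ‖z‖ ^ 2)]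
  calc ((starRingEnd ℂ) z * w).re ^ 2 = |((starRingEnd ℂ) z * w).re| ^ 2 := (sq_abs _).symm
  _ ≤ (‖z‖ * ‖w‖) ^ 2 := by
      apply pow_le_pow_left₀ (abs_nonneg _) hb
  _ = ‖w‖ ^ 2 * ‖z‖ ^ 2 := by ring
end
end

section
/- Let λ ∈ (0,1) and let A be a real n×n matrix satisfying the ellipticity condition λ|ξ|² ≤ ⟨Aξ, ξ⟩ and |Aξ| ≤ λ⁻¹|ξ| for all ξ ∈ ℝⁿ. Then for all p, q ∈ ℝⁿ and all t ∈ ℝ, 2 t ⟨A p, q⟩ − t² ⟨A p, p⟩ ≤ λ⁻⁴ ⟨A q, q⟩. (Taking t = f/u, p = ∇u, q = ∇f, this is the pointwise estimate A∇u·∇(f²/u) ≤ λ⁻⁴ A∇f·∇f used to prove the uncertainty principle for non-symmetric elliptic matrices.) -/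
noncomputable section

/-- For an elliptic (not necessarily symmetric) matrix `A` with ellipticity constant
`λ ∈ (0,1)`, one has `2t⟨Ap, q⟩ − t²⟨Ap, p⟩ ≤ λ⁻⁴ ⟨Aq, q⟩` for all vectors `p, q`
and all `t ∈ ℝ`. -/
theorem elliptic_pointwise_estimate
    (n : ℕ) (lam : ℝ) (hlam : 0 < lam ∧ lam < 1)
    (A : EuclideanSpace ℝ (Fin n) →L[ℝ] EuclideanSpace ℝ (Fin n))
    (hell : ∀ ξ : EuclideanSpace ℝ (Fin n), lam * ‖ξ‖ ^ 2 ≤ (inner ℝ (A ξ) ξ : ℝ))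
    (hbdd : ∀ ξ : EuclideanSpace ℝ (Fin n), ‖A ξ‖ ≤ lam⁻¹ * ‖ξ‖) :
    ∀ (p q : EuclideanSpace ℝ (Fin n)) (t : ℝ),
      2 * t * (inner ℝ (A p) q : ℝ) - t ^ 2 * (inner ℝ (A p) p : ℝ)
        ≤ (lam ^ 4)⁻¹ * (inner ℝ (A q) q : ℝ) := by
  obtain ⟨hl0, hl1⟩ := hlam
  intro p q t
  set a := ‖p‖ with hadef
  set b := ‖q‖ with hbdef
  have ha : (0:ℝ) ≤ a := norm_nonneg _
  have hb : (0:ℝ) ≤ b := norm_nonneg _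
  have hln : lam ≠ 0 := hl0.ne'
  have hinvpos : (0:ℝ) < lam⁻¹ := by positivity
  have hi : |(inner ℝ (A p) q : ℝ)| ≤ lam⁻¹ * a * b := by
    calc |(inner ℝ (A p) q : ℝ)| ≤ ‖A p‖ * ‖q‖ := abs_real_inner_le_norm _ _
    _ ≤ lam⁻¹ * a * b := by
        have := hbdd p
        have := norm_nonneg (A p)
        nlinarith
  have ht : t * (inner ℝ (A p) q : ℝ) ≤ |t| * (lam⁻¹ * a * b) := by
    calc t * (inner ℝ (A p) q : ℝ) ≤ |t * (inner ℝ (A p) q : ℝ)| := le_abs_self _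
    _ = |t| * |(inner ℝ (A p) q : ℝ)| := abs_mul _ _
    _ ≤ |t| * (lam⁻¹ * a * b) := mul_le_mul_of_nonneg_left hi (abs_nonneg t)
  have hp : t ^ 2 * (lam * a ^ 2) ≤ t ^ 2 * (inner ℝ (A p) p : ℝ) :=
    mul_le_mul_of_nonneg_left (hell p) (sq_nonneg t)
  have hq : (lam ^ 4)⁻¹ * (lam * b ^ 2) ≤ (lam ^ 4)⁻¹ * (inner ℝ (A q) q : ℝ) :=
    mul_le_mul_of_nonneg_left (hell q) (by positivity)
  have hqeq : (lam ^ 4)⁻¹ * (lam * b ^ 2) = (lam⁻¹) ^ 3 * b ^ 2 := by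
    field_simp
  have hC : 2 * (|t| * (lam⁻¹ * a * b)) - t ^ 2 * (lam * a ^ 2) ≤ (lam⁻¹) ^ 3 * b ^ 2 := by
    rw [← sub_nonneg]
    have h3 : (0:ℝ) < lam ^ 3 := by positivity
    have expand : lam ^ 3 * ((lam⁻¹) ^ 3 * b ^ 2 -
        (2 * (|t| * (lam⁻¹ * a * b)) - t ^ 2 * (lam * a ^ 2)))
        = (b - |t| * lam ^ 2 * a) ^ 2 + (t ^ 2 - |t| ^ 2) * lam ^ 4 * a ^ 2 := by
      field_simp
      linear_combination (0:ℝ) * sq_abs t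
    have habs : |t| ^ 2 = t ^ 2 := sq_abs t
    have hnn : 0 ≤ lam ^ 3 * ((lam⁻¹) ^ 3 * b ^ 2 -
        (2 * (|t| * (lam⁻¹ * a * b)) - t ^ 2 * (lam * a ^ 2))) := by
      rw [expand, habs]
      nlinarith [sq_nonneg (b - |t| * lam ^ 2 * a)]
    exact nonneg_of_mul_nonneg_right hnn h3
  linarith [hqeq ▸ hq]
end
end

section
/- Conjugation identity (classical version of Lemma on operator conjugation by 1/u): let Ω ⊆ ℝⁿ be open, let A = (A_{ij}) be a C¹ matrix-valued function on Ω, let V : Ω → [0,∞) be continuous, and let u ∈ C²(Ω) satisfy u > 0 on Ω and −div(A∇u) + V u = 1 pointwise on Ω. Then for every smooth compactly supported real-valued f on Ω, ∫_Ω [ ⟨A∇f, ∇f⟩ + V f² ] = ∫_Ω [ u² ⟨A∇(f/u), ∇(f/u)⟩ + f²/u ] + ∫_Ω (f/u) [ ⟨A∇f, ∇u⟩ − ⟨A∇u, ∇f⟩ ]. In particular, if A(x) is symmetric for every x, the last integral vanishes. -/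
open MeasureTheory Metric

noncomputable section

/-- The bilinear expression `⟨A∇g, ∇h⟩(x) = Σ_i (Σ_j A_{ij}(x) ∂_j g(x)) ∂_i h(x)`. -/
def bform {n : ℕ} (A : EuclideanSpace ℝ (Fin n) → Fin n → Fin n → ℝ)
    (g h : EuclideanSpace ℝ (Fin n) → ℝ) (x : EuclideanSpace ℝ (Fin n)) : ℝ :=
  ∑ i, (∑ j, A x i j * pdR j g x) * pdR i h x

variable {n : ℕ}

lemma pdR_congr_zero {j : Fin n} {g : EuclideanSpace ℝ (Fin n) → ℝ}
    {x : EuclideanSpace ℝ (Fin n)} (h : ∀ᶠ y in nhds x, g y = 0) : pdR j g x = 0 := by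
  have h' : g =ᶠ[nhds x] (fun _ => (0 : ℝ)) := h
  unfold pdR
  rw [h'.fderiv_eq, fderiv_fun_const]
  simp

lemma pdR_mul {j : Fin n} {c d : EuclideanSpace ℝ (Fin n) → ℝ} {x : EuclideanSpace ℝ (Fin n)}
    (hc : DifferentiableAt ℝ c x) (hd : DifferentiableAt ℝ d x) :
    pdR j (fun y => c y * d y) x = c x * pdR j d x + d x * pdR j c x := by
  unfold pdR
  rw [fderiv_fun_mul hc hd]
  simp

lemma pdR_div {j : Fin n} {c d : EuclideanSpace ℝ (Fin n) → ℝ} {x : EuclideanSpace ℝ (Fin n)}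
    (hc : DifferentiableAt ℝ c x) (hd : DifferentiableAt ℝ d x) (hx : d x ≠ 0) :
    pdR j (fun y => c y / d y) x = (pdR j c x * d x - c x * pdR j d x) / d x ^ 2 := by
  have hinv : HasFDerivAt (fun y => (d y)⁻¹)
      ((-(ContinuousLinearMap.mulLeftRight ℝ ℝ (d x)⁻¹ (d x)⁻¹)).comp (fderiv ℝ d x)) x :=
    (hasFDerivAt_inv' (𝕜 := ℝ) hx).comp x hd.hasFDerivAt
  have hmul := hc.hasFDerivAt.fun_mul hinv
  have hdivf : HasFDerivAt (fun y => c y / d y)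
      (c x • ((-(ContinuousLinearMap.mulLeftRight ℝ ℝ (d x)⁻¹ (d x)⁻¹)).comp (fderiv ℝ d x))
        + (d x)⁻¹ • fderiv ℝ c x) x := by
    simpa [div_eq_mul_inv] using hmul
  unfold pdR
  rw [hdivf.fderiv]
  simp only [ContinuousLinearMap.add_apply, ContinuousLinearMap.smul_apply,
    ContinuousLinearMap.comp_apply, ContinuousLinearMap.neg_apply,
    ContinuousLinearMap.mulLeftRight_apply, smul_eq_mul]
  field_simp
  ring

lemma integral_pdR_eq_zero {j : Fin n} {g : EuclideanSpace ℝ (Fin n) → ℝ}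
    (hd : Differentiable ℝ g) (hi : Integrable g) (hi' : Integrable (fun x => pdR j g x)) :
    ∫ x, pdR j g x = 0 := by
  have h := integral_mul_fderiv_eq_neg_fderiv_mul_of_integrable
    (μ := (volume : Measure (EuclideanSpace ℝ (Fin n))))
    (f := g) (g := fun _ => (1 : ℝ)) (v := EuclideanSpace.single j 1)
    (by simpa [pdR] using hi') (by simp [fderiv_fun_const]) (by simpa using hi)
    (fun x _ => hd x) (fun x _ => differentiableAt_const (1:ℝ))
  simp only [fderiv_fun_const, Pi.zero_apply, ContinuousLinearMap.zero_apply, mul_zero, mul_one,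
    integral_zero] at h
  have : ∫ x, pdR j g x = ∫ x, fderiv ℝ g x (EuclideanSpace.single j 1) := rfl
  rw [this]
  linarith

lemma contOn_pdR {Ω : Set (EuclideanSpace ℝ (Fin n))} (hΩ : IsOpen Ω) {j : Fin n}
    {g : EuclideanSpace ℝ (Fin n) → ℝ} (hg : ContDiffOn ℝ 1 g Ω) :
    ContinuousOn (fun y => pdR j g y) Ω := by
  have h1 : ContinuousOn (fun y => fderivWithin ℝ g Ω y) Ω :=
    hg.continuousOn_fderivWithin hΩ.uniqueDiffOn le_rfl
  have h2 : ContinuousOn (fun y => fderivWithin ℝ g Ω y (EuclideanSpace.single j 1)) Ω :=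
    h1.clm_apply continuousOn_const
  exact h2.congr fun y hy => by beta_reduce; rw [pdR, fderivWithin_of_isOpen hΩ hy]

lemma contDiffOn_pdR {Ω : Set (EuclideanSpace ℝ (Fin n))} (hΩ : IsOpen Ω) {j : Fin n}
    {g : EuclideanSpace ℝ (Fin n) → ℝ} (hg : ContDiffOn ℝ 2 g Ω) :
    ContDiffOn ℝ 1 (fun y => pdR j g y) Ω := by
  have h1 : ContDiffOn ℝ 1 (fun y => fderivWithin ℝ g Ω y) Ω :=
    hg.fderivWithin hΩ.uniqueDiffOn (by norm_num)
  have h2 : ContDiffOn ℝ 1 (fun y => fderivWithin ℝ g Ω y (EuclideanSpace.single j 1)) Ω :=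
    h1.clm_apply contDiffOn_const
  exact h2.congr fun y hy => by rw [pdR, fderivWithin_of_isOpen hΩ hy]

lemma cont_glue {Ω K : Set (EuclideanSpace ℝ (Fin n))} (hΩ : IsOpen Ω)
    (hKc : IsClosed K) (hKΩ : K ⊆ Ω) {g : EuclideanSpace ℝ (Fin n) → ℝ}
    (hgΩ : ContinuousOn g Ω) (h0 : ∀ x ∉ K, g x = 0) : Continuous g := by
  rw [continuous_iff_continuousAt]
  intro x
  by_cases hx : x ∈ Ω
  · exact hgΩ.continuousAt (hΩ.mem_nhds hx)
  · have hxK : x ∉ K := fun h => hx (hKΩ h)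
    have hev : g =ᶠ[nhds x] (fun _ => (0 : ℝ)) := by
      filter_upwards [hKc.isOpen_compl.mem_nhds hxK] with y hy using h0 y hy
    exact ContinuousAt.congr (continuousAt_const (y := (0:ℝ))) hev.symm

lemma int_glue {Ω K : Set (EuclideanSpace ℝ (Fin n))} (hΩ : IsOpen Ω)
    (hK : IsCompact K) (hKΩ : K ⊆ Ω) {g : EuclideanSpace ℝ (Fin n) → ℝ}
    (hgΩ : ContinuousOn g Ω) (h0 : ∀ x ∉ K, g x = 0) : Integrable g := by
  have hc : Continuous g := cont_glue hΩ hK.isClosed hKΩ hgΩ h0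
  have hcs : HasCompactSupport g := HasCompactSupport.intro hK h0
  exact hc.integrable_of_hasCompactSupport hcs

/-- Conjugation identity for the landscape function (classical version): if
`u > 0` solves `−div(A∇u) + Vu = 1` on an open set `Ω`, then for every smooth
compactly supported `f`,
`∫[⟨A∇f,∇f⟩ + Vf²] = ∫[u²⟨A∇(f/u),∇(f/u)⟩ + f²/u] + ∫ (f/u)[⟨A∇f,∇u⟩ − ⟨A∇u,∇f⟩]`,
and the last integral vanishes when `A` is symmetric. -/
theorem landscape_conjugation_identity
    (n : ℕ) (Ω : Set (EuclideanSpace ℝ (Fin n))) (hΩ : IsOpen Ω)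
    (A : EuclideanSpace ℝ (Fin n) → Fin n → Fin n → ℝ)
    (hA : ∀ i j, ContDiffOn ℝ 1 (fun x => A x i j) Ω)
    (V : EuclideanSpace ℝ (Fin n) → ℝ) (hVc : ContinuousOn V Ω)
    (hV0 : ∀ x ∈ Ω, 0 ≤ V x)
    (u : EuclideanSpace ℝ (Fin n) → ℝ) (hu : ContDiffOn ℝ 2 u Ω)
    (hupos : ∀ x ∈ Ω, 0 < u x)
    (hueq : ∀ x ∈ Ω,
      -(∑ i, pdR i (fun y => ∑ j, A y i j * pdR j u y) x) + V x * u x = 1)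
    (f : EuclideanSpace ℝ (Fin n) → ℝ) (hf : ContDiff ℝ (⊤ : ℕ∞) f)
    (hfc : HasCompactSupport f) (hfs : tsupport f ⊆ Ω) :
    ((∫ x in Ω, (bform A f f x + V x * f x ^ 2))
      = (∫ x in Ω,
          (u x ^ 2 * bform A (fun y => f y / u y) (fun y => f y / u y) x + f x ^ 2 / u x))
        + ∫ x in Ω, (f x / u x) * (bform A f u x - bform A u f x)) ∧
    ((∀ x : EuclideanSpace ℝ (Fin n), ∀ i j, A x i j = A x j i) →
      ∫ x in Ω, (f x / u x) * (bform A f u x - bform A u f x) = 0) := by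
  have hK : IsCompact (tsupport f) := hfc
  set K := tsupport f with hKdef
  have hKΩ : K ⊆ Ω := hfs
  have hfK : ∀ x ∉ K, f x = 0 := fun x hx => image_eq_zero_of_notMem_tsupport hx
  have hfe0 : ∀ x ∉ K, ∀ᶠ y in nhds x, f y = 0 := by
    intro x hx
    filter_upwards [hK.isClosed.isOpen_compl.mem_nhds hx] with y hy using hfK y hy
  have hfd : Differentiable ℝ f := (hf.of_le (by simp)).differentiable one_ne_zero
  have hfC : ∀ j, Continuous (fun y => pdR j f y) := fun j =>
    (hf.continuous_fderiv (by simp)).clm_apply continuous_const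
  -- u facts
  have huD : ∀ x ∈ Ω, DifferentiableAt ℝ u x := fun x hx =>
    (hu.differentiableOn (by norm_num)).differentiableAt (hΩ.mem_nhds hx)
  have hune : ∀ x ∈ Ω, u x ≠ 0 := fun x hx => ne_of_gt (hupos x hx)
  have hpduC : ∀ j, ContDiffOn ℝ 1 (fun y => pdR j u y) Ω := fun j => contDiffOn_pdR hΩ hu
  have hu1 : ContDiffOn ℝ 1 u Ω := hu.of_le (by norm_num)
  -- w := f / u
  have hwC : ContDiffOn ℝ 1 (fun y => f y / u y) Ω :=
    ((hf.of_le (by simp)).contDiffOn).div hu1 hune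
  have hwD : ∀ x ∈ Ω, DifferentiableAt ℝ (fun y => f y / u y) x := by
    intro x hx
    have h := (hfd x).fun_mul ((huD x hx).fun_inv (hune x hx))
    simpa only [div_eq_mul_inv] using h
  have hpdw : ∀ x ∈ Ω, ∀ j, pdR j (fun y => f y / u y) x
      = (pdR j f x * u x - f x * pdR j u x) / u x ^ 2 := fun x hx j =>
    pdR_div (hfd x) (huD x hx) (hune x hx)
  have hpdwC : ∀ j, ContinuousOn (fun y => pdR j (fun y' => f y' / u y') y) Ω :=
    fun j => contOn_pdR hΩ hwC
  have hw0 : ∀ x ∉ K, ∀ᶠ y in nhds x, f y / u y = 0 := by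
    intro x hx; filter_upwards [hfe0 x hx] with y hy; simp [hy]
  have hpdw0 : ∀ x ∉ K, ∀ j, pdR j (fun y => f y / u y) x = 0 := fun x hx j =>
    pdR_congr_zero (hw0 x hx)
  -- φ := f * (f/u)
  have hφC : ContDiffOn ℝ 1 (fun y => f y * (f y / u y)) Ω :=
    ((hf.of_le (by simp)).contDiffOn).mul hwC
  have hφD : ∀ x ∈ Ω, DifferentiableAt ℝ (fun y => f y * (f y / u y)) x := fun x hx =>
    (hfd x).mul (hwD x hx)
  have hpdφ : ∀ x ∈ Ω, ∀ i, pdR i (fun y => f y * (f y / u y)) x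
      = f x * pdR i (fun y => f y / u y) x + (f x / u x) * pdR i f x := fun x hx i =>
    pdR_mul (hfd x) (hwD x hx)
  -- F i
  have hFC : ∀ i, ContDiffOn ℝ 1 (fun y => ∑ j, A y i j * pdR j u y) Ω := fun i =>
    ContDiffOn.sum fun j _ => (hA i j).mul (hpduC j)
  have hFD : ∀ i, ∀ x ∈ Ω, DifferentiableAt ℝ (fun y => ∑ j, A y i j * pdR j u y) x :=
    fun i x hx => ((hFC i).differentiableOn one_ne_zero).differentiableAt (hΩ.mem_nhds hx)
  -- G i
  have hGC : ∀ i, ContDiffOn ℝ 1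
      (fun y => (∑ j, A y i j * pdR j u y) * (f y * (f y / u y))) Ω :=
    fun i => (hFC i).mul hφC
  have hG0 : ∀ i, ∀ x ∉ K, ∀ᶠ y in nhds x,
      (∑ j, A y i j * pdR j u y) * (f y * (f y / u y)) = 0 := by
    intro i x hx; filter_upwards [hfe0 x hx] with y hy; simp [hy]
  have hGdiff : ∀ i, Differentiable ℝ
      (fun y => (∑ j, A y i j * pdR j u y) * (f y * (f y / u y))) := by
    intro i x
    by_cases hx : x ∈ Ω
    · exact ((hGC i).differentiableOn one_ne_zero).differentiableAt (hΩ.mem_nhds hx)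
    · have hxK : x ∉ K := fun h => hx (hKΩ h)
      exact (differentiableAt_const (0 : ℝ)).congr_of_eventuallyEq (hG0 i x hxK)
  have hpdG0 : ∀ i, ∀ x ∉ K,
      pdR i (fun y => (∑ j, A y i j * pdR j u y) * (f y * (f y / u y))) x = 0 :=
    fun i x hx => pdR_congr_zero (hG0 i x hx)
  have hGfun0 : ∀ i, ∀ x ∉ K, (∑ j, A x i j * pdR j u x) * (f x * (f x / u x)) = 0 := by
    intro i x hx; simp [hfK x hx]
  have hGint : ∀ i, Integrable (fun y => (∑ j, A y i j * pdR j u y) * (f y * (f y / u y))) :=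
    fun i => int_glue hΩ hK hKΩ ((hGC i).continuousOn) (hGfun0 i)
  have hpdGint : ∀ i, Integrable
      (fun y => pdR i (fun y' => (∑ j, A y' i j * pdR j u y') * (f y' * (f y' / u y'))) y) :=
    fun i => int_glue hΩ hK hKΩ (contOn_pdR hΩ (hGC i)) (hpdG0 i)
  have hIdiv0 : ∀ i,
      ∫ y, pdR i (fun y' => (∑ j, A y' i j * pdR j u y') * (f y' * (f y' / u y'))) y = 0 :=
    fun i => integral_pdR_eq_zero (hGdiff i) (hGint i) (hpdGint i)
  -- key pointwise identity on Ω
  have key : ∀ x ∈ Ω,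
      bform A f f x + V x * f x ^ 2
        = (u x ^ 2 * bform A (fun y => f y / u y) (fun y => f y / u y) x + f x ^ 2 / u x)
          + (f x / u x) * (bform A f u x - bform A u f x)
          + ∑ i, pdR i (fun y => (∑ j, A y i j * pdR j u y) * (f y * (f y / u y))) x := by
    intro x hx
    have hune' := hune x hx
    have hdiv : ∑ i, pdR i (fun y => ∑ j, A y i j * pdR j u y) x = V x * u x - 1 := by
      have := hueq x hx; linarith
    have hGpd : ∀ i, pdR i (fun y => (∑ j, A y i j * pdR j u y) * (f y * (f y / u y))) x
        = (∑ j, A x i j * pdR j u x) * pdR i (fun y => f y * (f y / u y)) x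
          + (f x * (f x / u x)) * pdR i (fun y => ∑ j, A y i j * pdR j u y) x := fun i =>
      pdR_mul (hFD i x hx) (hφD x hx)
    have hdivsum : ∑ i, pdR i (fun y => (∑ j, A y i j * pdR j u y) * (f y * (f y / u y))) x
        = (∑ i, (∑ j, A x i j * pdR j u x) * pdR i (fun y => f y * (f y / u y)) x)
          + (f x * (f x / u x)) * (V x * u x - 1) := by
      rw [Finset.sum_congr rfl fun i _ => hGpd i, Finset.sum_add_distrib, ← Finset.mul_sum, hdiv]
    have inner : ∀ i, (∑ j, A x i j * pdR j (fun y => f y / u y) x)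
        = (∑ j, A x i j * pdR j u x) * (-(f x) / u x ^ 2)
          + (∑ j, A x i j * pdR j f x) * (1 / u x) := by
      intro i
      rw [Finset.sum_mul, Finset.sum_mul, ← Finset.sum_add_distrib]
      refine Finset.sum_congr rfl fun j _ => ?_
      rw [hpdw x hx j]
      field_simp
      ring
    have hper : ∀ i ∈ (Finset.univ : Finset (Fin n)),
        u x ^ 2 * ((∑ j, A x i j * pdR j (fun y => f y / u y) x)
            * pdR i (fun y => f y / u y) x)
          + (f x / u x) * ((∑ j, A x i j * pdR j f x) * pdR i u x
              - (∑ j, A x i j * pdR j u x) * pdR i f x)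
          + (∑ j, A x i j * pdR j u x) * pdR i (fun y => f y * (f y / u y)) x
        = (∑ j, A x i j * pdR j f x) * pdR i f x := by
      intro i _
      rw [inner i, hpdφ x hx i]
      rw [hpdw x hx i]
      field_simp
      ring
    have hsum := Finset.sum_congr rfl hper
    rw [Finset.sum_add_distrib, Finset.sum_add_distrib, ← Finset.mul_sum, ← Finset.mul_sum,
      Finset.sum_sub_distrib] at hsum
    have hscal : V x * f x ^ 2 = f x ^ 2 / u x + (f x * (f x / u x)) * (V x * u x - 1) := by
      field_simp
      ring
    rw [hdivsum]
    simp only [bform]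
    linarith [hsum, hscal]
  constructor
  · -- integrability of the two RHS integrands
    have hI2cont : ContinuousOn (fun x =>
        u x ^ 2 * bform A (fun y => f y / u y) (fun y => f y / u y) x + f x ^ 2 / u x) Ω := by
      apply ContinuousOn.add
      · refine ContinuousOn.mul (hu1.continuousOn.pow 2) ?_
        unfold bform
        refine continuousOn_finset_sum _ fun i _ => ContinuousOn.mul ?_ (hpdwC i)
        exact continuousOn_finset_sum _ fun j _ => ((hA i j).continuousOn).mul (hpdwC j)
      · exact ((hf.continuous.pow 2).continuousOn).div hu1.continuousOn hune
    have hI2z : ∀ x ∉ K,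
        u x ^ 2 * bform A (fun y => f y / u y) (fun y => f y / u y) x + f x ^ 2 / u x = 0 := by
      intro x hx
      simp [bform, hpdw0 x hx, hfK x hx]
    have hI2int : IntegrableOn (fun x =>
        u x ^ 2 * bform A (fun y => f y / u y) (fun y => f y / u y) x + f x ^ 2 / u x) Ω :=
      (int_glue hΩ hK hKΩ hI2cont hI2z).integrableOn
    have hI3cont : ContinuousOn
        (fun x => (f x / u x) * (bform A f u x - bform A u f x)) Ω := by
      refine ContinuousOn.mul ((hf.continuous.continuousOn).div hu1.continuousOn hune) ?_
      apply ContinuousOn.sub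
      · unfold bform
        refine continuousOn_finset_sum _ fun i _ =>
          ContinuousOn.mul ?_ ((hpduC i).continuousOn)
        exact continuousOn_finset_sum _ fun j _ => ((hA i j).continuousOn).mul
          ((hfC j).continuousOn)
      · unfold bform
        refine continuousOn_finset_sum _ fun i _ =>
          ContinuousOn.mul ?_ ((hfC i).continuousOn)
        exact continuousOn_finset_sum _ fun j _ => ((hA i j).continuousOn).mul
          ((hpduC j).continuousOn)
    have hI3z : ∀ x ∉ K, (f x / u x) * (bform A f u x - bform A u f x) = 0 := by
      intro x hx; simp [hfK x hx]
    have hI3int : IntegrableOn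
        (fun x => (f x / u x) * (bform A f u x - bform A u f x)) Ω :=
      (int_glue hΩ hK hKΩ hI3cont hI3z).integrableOn
    have hIdivint : IntegrableOn (fun x =>
        ∑ i, pdR i (fun y => (∑ j, A y i j * pdR j u y) * (f y * (f y / u y))) x) Ω :=
      (integrable_finset_sum _ fun i _ => hpdGint i).integrableOn
    have hdivz : ∫ x in Ω,
        (∑ i, pdR i (fun y => (∑ j, A y i j * pdR j u y) * (f y * (f y / u y))) x) = 0 := by
      rw [setIntegral_eq_integral_of_forall_compl_eq_zero (fun x hx => ?_)]
      · rw [integral_finset_sum _ fun i _ => hpdGint i]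
        exact Finset.sum_eq_zero fun i _ => hIdiv0 i
      · have hxK : x ∉ K := fun h => hx (hKΩ h)
        exact Finset.sum_eq_zero fun i _ => hpdG0 i x hxK
    rw [show (∫ x in Ω, (bform A f f x + V x * f x ^ 2))
        = ∫ x in Ω,
          ((u x ^ 2 * bform A (fun y => f y / u y) (fun y => f y / u y) x + f x ^ 2 / u x)
            + (f x / u x) * (bform A f u x - bform A u f x)
            + ∑ i, pdR i (fun y => (∑ j, A y i j * pdR j u y) * (f y * (f y / u y))) x)
      from setIntegral_congr_fun hΩ.measurableSet (fun x hx => key x hx)]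
    have hadd : IntegrableOn (fun x =>
        (u x ^ 2 * bform A (fun y => f y / u y) (fun y => f y / u y) x + f x ^ 2 / u x)
          + (f x / u x) * (bform A f u x - bform A u f x)) Ω := hI2int.add hI3int
    rw [integral_add hadd hIdivint, integral_add hI2int hI3int, hdivz, add_zero]
  · intro hsym
    have hbf : ∀ x, bform A f u x = bform A u f x := by
      intro x
      simp only [bform]
      calc ∑ i, (∑ j, A x i j * pdR j f x) * pdR i u x
          = ∑ i, ∑ j, A x i j * pdR j f x * pdR i u x := by
            exact Finset.sum_congr rfl fun i _ => by rw [Finset.sum_mul]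
        _ = ∑ j, ∑ i, A x i j * pdR j f x * pdR i u x := Finset.sum_comm
        _ = ∑ i, (∑ j, A x i j * pdR j u x) * pdR i f x := by
            simp only [Finset.sum_mul]
            exact Finset.sum_congr rfl fun j _ => Finset.sum_congr rfl fun i _ => by
              rw [hsym x i j]; ring
    simp [hbf]
end
end
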